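/- arXiv:2502.07126 — 8 statements merged into one kernel-verified Lean document; each statement's English description precedes it below -/
import Mathlib

section
/- Let ε > 0 and let ≽ be a preference on the simplex Δ ⊆ ℝ^{d+1} that is a continuous weak order and satisfies: (Extremality) there are degenerate lotteries p̄ and p̲ with p̄ ≽ p ≽ p̲ for every p ∈ Δ; (Monotonicity) if λ, λ' ∈ [0,1] with λ > λ' then λp̄+(1−λ)p̲ ≻ λ'p̄+(1−λ')p̲; (ε-Reduction of compound lotteries) whenever p₀ ∼ α₀p̄+(1−α₀)p̲, p₁ ∼ α₁p̄+(1−α₁)p̲ and λp₀+(1−λ)p₁ ∼ αp̄+(1−α)p̲ for λ ∈ [0,1], one has |α − (λα₀+(1−λ)α₁)| < ε. Then there exist functions u, ℓ : Δ → [0,1] such that: (1) u represents ≽ (p ≽ q iff u(p) ≥ u(q)) and u(Δ) = ℓ(Δ) = [0,1]; (2) ℓ is affine, i.e. ℓ(λp+(1−λ)q) = λℓ(p)+(1−λ)ℓ(q) for all p,q ∈ Δ and λ ∈ [0,1]; (3) |u(p) − ℓ(p)| < (|supp(p)| − 1)·ε for every nondegenerate p ∈ Δ, u(δᵢ) = ℓ(δᵢ)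 for every degenerate lottery δᵢ, and sup_{p∈Δ}|u(p)−ℓ(p)| < d·ε; (4) ℓ is the unique affine function on Δ that agrees with u on all degenerate lotteries. -/
/-!
On the segment `γ α = α • p̄ + (1 - α) • p̲` the preference is strictly increasing in `α`, and by
continuity and the connectedness of `[0, 1]` every lottery `p` is indifferent to some `γ α`; the
unique such `α` is `u p`, and `u` represents `≽`. Let `ℓ` be the affine function that agrees with
`u` at the vertices. Writing a lottery with `k ≥ 2` outcomes as `t • δⱼ + (1 - t) • q`, where `q`
has `k - 1` outcomes, ε-reduction gives `|u p - ℓ p| < ε + |u q - ℓ q|`, so the error grows by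
less than `ε` with each outcome added to the support.
-/

open Set
open scoped Finset

section Path

variable {X : Type*} {R : X → X → Prop} {Δ : Set X} {γ : ℝ → X}

theorem rel_path_iff (hcomp : ∀ p ∈ Δ, ∀ q ∈ Δ, R p q ∨ R q p)
    (hγ : MapsTo γ (Icc 0 1) Δ)
    (hstrict : ∀ l ∈ Icc (0 : ℝ) 1, ∀ l' ∈ Icc (0 : ℝ) 1, l' < l → ¬ R (γ l') (γ l))
    {α β : ℝ} (hα : α ∈ Icc (0 : ℝ) 1) (hβ : β ∈ Icc (0 : ℝ) 1) :
    R (γ α) (γ β) ↔ β ≤ α := by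
  refine ⟨fun h => not_lt.mp fun hlt => hstrict β hβ α hα hlt h, fun hle => ?_⟩
  rcases hle.eq_or_lt with rfl | hlt
  · exact (hcomp _ (hγ hα) _ (hγ hα)).elim id id
  · exact (hcomp _ (hγ hα) _ (hγ hβ)).resolve_right (hstrict α hα β hβ hlt)

theorem exists_mem_Icc_indifferent_path [TopologicalSpace X]
    (hcomp : ∀ p ∈ Δ, ∀ q ∈ Δ, R p q ∨ R q p)
    (hcont : ∀ p ∈ Δ, IsClosed {q | q ∈ Δ ∧ R q p} ∧ IsClosed {q | q ∈ Δ ∧ R p q})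
    (hγc : ContinuousOn γ (Icc 0 1)) (hγ : MapsTo γ (Icc 0 1) Δ)
    {p : X} (hp : p ∈ Δ) (h0 : R p (γ 0)) (h1 : R (γ 1) p) :
    ∃ α ∈ Icc (0 : ℝ) 1, R p (γ α) ∧ R (γ α) p := by
  have hcover : Icc (0 : ℝ) 1 ⊆ (Icc 0 1 ∩ γ ⁻¹' {q | q ∈ Δ ∧ R p q}) ∪
      (Icc 0 1 ∩ γ ⁻¹' {q | q ∈ Δ ∧ R q p}) := fun α hα =>
    (hcomp p hp _ (hγ hα)).imp (fun h => ⟨hα, hγ hα, h⟩) fun h => ⟨hα, hγ hα, h⟩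
  have h01 : (0 : ℝ) ∈ Icc 0 1 ∧ (1 : ℝ) ∈ Icc 0 1 :=
    ⟨left_mem_Icc.2 zero_le_one, right_mem_Icc.2 zero_le_one⟩
  obtain ⟨α, hα, ⟨-, -, hpα⟩, -, -, hαp⟩ := isPreconnected_closed_iff.mp isPreconnected_Icc _ _
    (hγc.preimage_isClosed_of_isClosed isClosed_Icc (hcont p hp).2)
    (hγc.preimage_isClosed_of_isClosed isClosed_Icc (hcont p hp).1) hcover
    ⟨0, h01.1, h01.1, hγ h01.1, h0⟩ ⟨1, h01.2, h01.2, hγ h01.2, h1⟩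
  exact ⟨α, hα, hpα, hαp⟩

theorem exists_utility_of_path [TopologicalSpace X]
    (hcomp : ∀ p ∈ Δ, ∀ q ∈ Δ, R p q ∨ R q p)
    (htrans : ∀ p ∈ Δ, ∀ q ∈ Δ, ∀ r ∈ Δ, R p q → R q r → R p r)
    (hcont : ∀ p ∈ Δ, IsClosed {q | q ∈ Δ ∧ R q p} ∧ IsClosed {q | q ∈ Δ ∧ R p q})
    (hγc : ContinuousOn γ (Icc 0 1)) (hγ : MapsTo γ (Icc 0 1) Δ)
    (hstrict : ∀ l ∈ Icc (0 : ℝ) 1, ∀ l' ∈ Icc (0 : ℝ) 1, l' < l → ¬ R (γ l') (γ l))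
    (hext : ∀ p ∈ Δ, R (γ 1) p ∧ R p (γ 0)) :
    ∃ u : X → ℝ, (∀ p ∈ Δ, u p ∈ Icc 0 1 ∧ R p (γ (u p)) ∧ R (γ (u p)) p) ∧
      (∀ p ∈ Δ, ∀ q ∈ Δ, R p q ↔ u q ≤ u p) ∧ ∀ α ∈ Icc 0 1, u (γ α) = α := by
  have hex : ∀ p, ∃ α : ℝ, p ∈ Δ → α ∈ Icc 0 1 ∧ R p (γ α) ∧ R (γ α) p := fun p => by
    by_cases hp : p ∈ Δ
    · obtain ⟨α, hα⟩ := exists_mem_Icc_indifferent_path hcomp hcont hγc hγ hp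
        (hext p hp).2 (hext p hp).1
      exact ⟨α, fun _ => hα⟩
    · exact ⟨0, fun h => absurd h hp⟩
  choose u hu using hex
  have hrep : ∀ p ∈ Δ, ∀ q ∈ Δ, R p q ↔ u q ≤ u p := fun p hp q hq => by
    obtain ⟨hup, hpu, hup'⟩ := hu p hp
    obtain ⟨huq, hqu, huq'⟩ := hu q hq
    rw [← rel_path_iff hcomp hγ hstrict hup huq]
    exact ⟨fun h => htrans _ (hγ hup) _ hp _ (hγ huq) hup' (htrans _ hp _ hq _ (hγ huq) h hqu),
      fun h => htrans _ hp _ (hγ hup) _ hq hpu (htrans _ (hγ hup) _ (hγ huq) _ hq h huq')⟩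
  refine ⟨u, hu, hrep, fun α hα => ?_⟩
  obtain ⟨hmem, h, h'⟩ := hu _ (hγ hα)
  exact le_antisymm ((rel_path_iff hcomp hγ hstrict hα hmem).1 h)
    ((rel_path_iff hcomp hγ hstrict hmem hα).1 h')

end Path

section Simplex

variable {ι : Type*} [Fintype ι]

noncomputable def posSupport (p : ι → ℝ) : Finset ι := {i | 0 < p i}

@[simp]
theorem mem_posSupport {p : ι → ℝ} {i : ι} : i ∈ posSupport p ↔ 0 < p i := by
  simp [posSupport]

theorem card_posSupport_pos {p : ι → ℝ} (hp : p ∈ stdSimplex ℝ ι) :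
    0 < #(posSupport p) := by
  obtain ⟨i, -, hi⟩ :=
    Finset.exists_lt_of_sum_lt (s := Finset.univ) (f := 0) (g := p) (by simp [hp.2])
  exact Finset.card_pos.2 ⟨i, by simpa using hi⟩

theorem dotProduct_mem_Icc_of_mem_stdSimplex {p w : ι → ℝ}
    (hp : p ∈ stdSimplex ℝ ι) (hw : ∀ i, w i ∈ Icc (0 : ℝ) 1) : p ⬝ᵥ w ∈ Icc (0 : ℝ) 1 :=
  ⟨Finset.sum_nonneg fun i _ => mul_nonneg (hp.1 i) (hw i).1,
    hp.2 ▸ Finset.sum_le_sum fun i _ => mul_le_of_le_one_right (hp.1 i) (hw i).2⟩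

variable [DecidableEq ι]

theorem image_dotProduct_stdSimplex {w : ι → ℝ} (hw : ∀ i, w i ∈ Icc (0 : ℝ) 1) {i₀ i₁ : ι}
    (h₀ : w i₀ = 1) (h₁ : w i₁ = 0) : (· ⬝ᵥ w) '' stdSimplex ℝ ι = Icc 0 1 := by
  refine Subset.antisymm (image_subset_iff.2 fun p hp => dotProduct_mem_Icc_of_mem_stdSimplex hp hw)
    fun α hα => ⟨α • Pi.single i₀ 1 + (1 - α) • Pi.single i₁ 1, convex_stdSimplex ℝ ι
      (single_mem_stdSimplex ℝ i₀) (single_mem_stdSimplex ℝ i₁) hα.1 (sub_nonneg.2 hα.2)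
      (add_sub_cancel _ _), ?_⟩
  simp [add_dotProduct, smul_dotProduct, h₀, h₁]

theorem card_posSupport_single (k : ι) : #(posSupport (Pi.single k 1 : ι → ℝ)) = 1 :=
  Finset.card_eq_one.2 ⟨k, by ext i; rcases eq_or_ne i k with rfl | hik <;> simp [*]⟩

theorem eq_single_of_card_posSupport_eq_one {p : ι → ℝ} (hp : p ∈ stdSimplex ℝ ι)
    (h : #(posSupport p) = 1) : ∃ k, p = Pi.single k 1 := by
  obtain ⟨k, hk⟩ := Finset.card_eq_one.mp h
  have hzero : ∀ i ≠ k, p i = 0 := fun i hik =>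
    le_antisymm (not_lt.1 fun hi => hik (by simpa [hk] using mem_posSupport.2 hi)) (hp.1 i)
  have hk1 : p k = 1 := by rw [← hp.2, Finset.sum_eq_single k (fun i _ => hzero i) (by simp)]
  exact ⟨k, funext fun i => by rcases eq_or_ne i k with rfl | hik <;> simp [*]⟩

theorem card_posSupport_smul_single_add_smul {q : ι → ℝ} {j : ι} (hqj : q j = 0) {t : ℝ}
    (ht : t ∈ Ioo 0 1) :
    #(posSupport (t • Pi.single j 1 + (1 - t) • q : ι → ℝ)) = #(posSupport q) + 1 := by
  have : posSupport (t • Pi.single j 1 + (1 - t) • q : ι → ℝ) = insert j (posSupport q) := by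
    ext i
    rcases eq_or_ne i j with rfl | hij
    · simp [ht.1, hqj]
    · simp [hij, mul_pos_iff_of_pos_left (sub_pos.2 ht.2)]
  rw [this, Finset.card_insert_of_notMem (by simp [hqj])]

theorem exists_eq_smul_single_add_smul {p : ι → ℝ} (hp : p ∈ stdSimplex ℝ ι)
    (h : 2 ≤ #(posSupport p)) :
    ∃ j, ∃ q ∈ stdSimplex ℝ ι, q j = 0 ∧ p j ∈ Ioo 0 1 ∧
      p = p j • Pi.single j 1 + (1 - p j) • q := by
  obtain ⟨j, hj, k, hk, hkj⟩ := Finset.one_lt_card.mp h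
  rw [mem_posSupport] at hj hk
  have hj1 : p j < 1 := hp.2 ▸ Finset.single_lt_sum (Ne.symm hkj) (Finset.mem_univ _)
    (Finset.mem_univ _) hk fun i _ _ => hp.1 i
  have hne : 1 - p j ≠ 0 := (sub_pos.2 hj1).ne'
  refine ⟨j, (1 - p j)⁻¹ • (p - p j • Pi.single j 1), ⟨fun i => ?_, ?_⟩, by simp, ⟨hj, hj1⟩, ?_⟩
  · rcases eq_or_ne i j with rfl | hij
    · simp
    · simpa [hij] using mul_nonneg (inv_nonneg.2 (sub_pos.2 hj1).le) (hp.1 i)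
  · simp [← Finset.mul_sum, Finset.sum_sub_distrib, hp.2, hne]
  · rw [smul_inv_smul₀ hne, add_sub_cancel]

theorem stdSimplex_induction_on {P : (ι → ℝ) → Prop} (single : ∀ k, P (Pi.single k 1))
    (step : ∀ j, ∀ q ∈ stdSimplex ℝ ι, q j = 0 → ∀ t ∈ Ioo (0 : ℝ) 1, P q →
      P (t • Pi.single j 1 + (1 - t) • q)) {p : ι → ℝ} (hp : p ∈ stdSimplex ℝ ι) : P p := by
  suffices ∀ n, ∀ p ∈ stdSimplex ℝ ι, #(posSupport p) = n + 1 → P p from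
    this _ p hp (Nat.succ_pred_eq_of_pos (card_posSupport_pos hp)).symm
  intro n
  induction n with
  | zero =>
    intro p hp h
    obtain ⟨k, rfl⟩ := eq_single_of_card_posSupport_eq_one hp h
    exact single k
  | succ n ih =>
    intro p hp h
    obtain ⟨j, q, hq, hqj, ht, hpq⟩ := exists_eq_smul_single_add_smul hp (by omega)
    have hcard := card_posSupport_smul_single_add_smul hqj ht
    rw [← hpq] at hcard
    rw [hpq]
    exact step j q hq hqj _ ht (ih q hq (by omega))

theorem eqOn_stdSimplex_of_affine {f g : (ι → ℝ) → ℝ}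
    (hf : ∀ p ∈ stdSimplex ℝ ι, ∀ q ∈ stdSimplex ℝ ι, ∀ t ∈ Icc (0 : ℝ) 1,
      f (t • p + (1 - t) • q) = t * f p + (1 - t) * f q)
    (hg : ∀ p ∈ stdSimplex ℝ ι, ∀ q ∈ stdSimplex ℝ ι, ∀ t ∈ Icc (0 : ℝ) 1,
      g (t • p + (1 - t) • q) = t * g p + (1 - t) * g q)
    (hfg : ∀ k, f (Pi.single k 1) = g (Pi.single k 1)) {p : ι → ℝ} (hp : p ∈ stdSimplex ℝ ι) :
    f p = g p := by
  refine stdSimplex_induction_on (P := fun p => f p = g p) hfg (fun j q hq _ t ht hfgq => ?_) hp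
  rw [hf _ (single_mem_stdSimplex ℝ j) q hq t (Ioo_subset_Icc_self ht),
    hg _ (single_mem_stdSimplex ℝ j) q hq t (Ioo_subset_Icc_self ht), hfg j, hfgq]

theorem abs_sub_lt_mul_card_posSupport_sub_one {f g : (ι → ℝ) → ℝ} {ε : ℝ}
    (hfg : ∀ k, f (Pi.single k 1) = g (Pi.single k 1))
    (hstep : ∀ j, ∀ q ∈ stdSimplex ℝ ι, ∀ t ∈ Ioo (0 : ℝ) 1,
      |f (t • Pi.single j 1 + (1 - t) • q) - g (t • Pi.single j 1 + (1 - t) • q)| <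
        ε + |f q - g q|)
    {p : ι → ℝ} (hp : p ∈ stdSimplex ℝ ι) (h2 : 2 ≤ #(posSupport p)) :
    |f p - g p| < (#(posSupport p) - 1 : ℝ) * ε := by
  refine stdSimplex_induction_on
    (P := fun p => 2 ≤ #(posSupport p) → |f p - g p| < (#(posSupport p) - 1 : ℝ) * ε)
    (fun k hk => by simp [card_posSupport_single] at hk) (fun j q hq hqj t ht ih _ => ?_) hp h2
  have hpq := hstep j q hq t ht
  rw [card_posSupport_smul_single_add_smul hqj ht, Nat.cast_add_one, add_sub_cancel_right]
  rcases (Nat.one_le_iff_ne_zero.2 (card_posSupport_pos hq).ne').eq_or_lt with h1 | h2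
  · obtain ⟨k, rfl⟩ := eq_single_of_card_posSupport_eq_one hq h1.symm
    simpa [hfg k, ← h1] using hpq
  · linarith [ih h2]

theorem abs_sub_lt_mul_card_sub_one [Nontrivial ι] {f g : (ι → ℝ) → ℝ} {ε : ℝ} (hε : 0 < ε)
    (hfg : ∀ k, f (Pi.single k 1) = g (Pi.single k 1))
    (hstep : ∀ j, ∀ q ∈ stdSimplex ℝ ι, ∀ t ∈ Ioo (0 : ℝ) 1,
      |f (t • Pi.single j 1 + (1 - t) • q) - g (t • Pi.single j 1 + (1 - t) • q)| <
        ε + |f q - g q|)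
    {p : ι → ℝ} (hp : p ∈ stdSimplex ℝ ι) :
    |f p - g p| < (Fintype.card ι - 1 : ℝ) * ε := by
  have hι : (1 : ℝ) < Fintype.card ι := by exact_mod_cast Fintype.one_lt_card
  rcases (Nat.one_le_iff_ne_zero.2 (card_posSupport_pos hp).ne').eq_or_lt with h1 | h2
  · obtain ⟨k, rfl⟩ := eq_single_of_card_posSupport_eq_one hp h1.symm
    rw [hfg k, sub_self, abs_zero]
    exact mul_pos (sub_pos.2 hι) hε
  · calc |f p - g p| < (#(posSupport p) - 1 : ℝ) * ε :=
          abs_sub_lt_mul_card_posSupport_sub_one hfg hstep hp h2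
      _ ≤ (Fintype.card ι - 1 : ℝ) * ε := by
          gcongr
          exact Finset.card_le_univ _

end Simplex

theorem abs_sub_convex_comb_lt {a b c c' ε t : ℝ} (ht : t ∈ Icc (0 : ℝ) 1)
    (h : |a - (t * b + (1 - t) * c)| < ε) :
    |a - (t * b + (1 - t) * c')| < ε + |c - c'| := by
  have h1t : |1 - t| ≤ 1 := abs_le.2 ⟨by linarith [ht.2], by linarith [ht.1]⟩
  calc |a - (t * b + (1 - t) * c')| = |(a - (t * b + (1 - t) * c)) + (1 - t) * (c - c')| := by
        ring_nf
    _ ≤ |a - (t * b + (1 - t) * c)| + |1 - t| * |c - c'| := by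
        rw [← abs_mul]; exact abs_add_le _ _
    _ < ε + |c - c'| := by nlinarith [abs_nonneg (c - c')]

/-- Theorem `thm:EU`, direct part: if a continuous weak order on the
simplex satisfies Extremality, Monotonicity and ε-Reduction of compound lotteries,
then there are `u, ℓ : Δ → [0,1]`, `u` representing `≽`, `ℓ` affine, with
`|u p - ℓ p| < (|supp p| - 1)·ε` for nondegenerate `p`, agreement on degenerate
lotteries, `|u - ℓ| < d·ε` uniformly, and `ℓ` unique. -/
theorem stmt_0 (d : ℕ) (hd : 1 ≤ d) (ε : ℝ) (hε : 0 < ε)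
    (R : (Fin (d + 1) → ℝ) → (Fin (d + 1) → ℝ) → Prop)
    (Δ : Set (Fin (d + 1) → ℝ)) (hΔ : Δ = stdSimplex ℝ (Fin (d + 1)))
    (hcomp : ∀ p ∈ Δ, ∀ q ∈ Δ, R p q ∨ R q p)
    (htrans : ∀ p ∈ Δ, ∀ q ∈ Δ, ∀ r ∈ Δ, R p q → R q r → R p r)
    (hcont : ∀ p ∈ Δ, IsClosed {q | q ∈ Δ ∧ R q p} ∧ IsClosed {q | q ∈ Δ ∧ R p q})
    (i₀ i₁ : Fin (d + 1)) (pbar punder : Fin (d + 1) → ℝ)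
    (hpbar : pbar = Pi.single i₀ 1) (hpunder : punder = Pi.single i₁ 1)
    (hext : ∀ p ∈ Δ, R pbar p ∧ R p punder)
    (hmono : ∀ l l' : ℝ, l ∈ Set.Icc (0 : ℝ) 1 → l' ∈ Set.Icc (0 : ℝ) 1 → l' < l →
      R (l • pbar + (1 - l) • punder) (l' • pbar + (1 - l') • punder) ∧
      ¬ R (l' • pbar + (1 - l') • punder) (l • pbar + (1 - l) • punder))
    (hred : ∀ p₀ ∈ Δ, ∀ p₁ ∈ Δ, ∀ l α₀ α₁ α : ℝ,
      l ∈ Set.Icc (0 : ℝ) 1 → α₀ ∈ Set.Icc (0 : ℝ) 1 → α₁ ∈ Set.Icc (0 : ℝ) 1 →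
      α ∈ Set.Icc (0 : ℝ) 1 →
      (R p₀ (α₀ • pbar + (1 - α₀) • punder) ∧ R (α₀ • pbar + (1 - α₀) • punder) p₀) →
      (R p₁ (α₁ • pbar + (1 - α₁) • punder) ∧ R (α₁ • pbar + (1 - α₁) • punder) p₁) →
      (R (l • p₀ + (1 - l) • p₁) (α • pbar + (1 - α) • punder) ∧
        R (α • pbar + (1 - α) • punder) (l • p₀ + (1 - l) • p₁)) →
      |α - (l * α₀ + (1 - l) * α₁)| < ε) :
    ∃ u ℓ : (Fin (d + 1) → ℝ) → ℝ,
      -- (1) u represents ≽ and u(Δ) = ℓ(Δ) = [0,1]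
      (∀ p ∈ Δ, ∀ q ∈ Δ, (R p q ↔ u q ≤ u p)) ∧
      u '' Δ = Set.Icc 0 1 ∧ ℓ '' Δ = Set.Icc 0 1 ∧
      -- (2) ℓ is affine
      (∀ p ∈ Δ, ∀ q ∈ Δ, ∀ t ∈ Set.Icc (0 : ℝ) 1,
        ℓ (t • p + (1 - t) • q) = t * ℓ p + (1 - t) * ℓ q) ∧
      -- (3) closeness
      (∀ p ∈ Δ, 2 ≤ Nat.card {i : Fin (d + 1) // 0 < p i} →
        |u p - ℓ p| < ((Nat.card {i : Fin (d + 1) // 0 < p i} : ℝ) - 1) * ε) ∧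
      (∀ i : Fin (d + 1), u (Pi.single i 1) = ℓ (Pi.single i 1)) ∧
      (∀ p ∈ Δ, |u p - ℓ p| < (d : ℝ) * ε) ∧
      -- (4) uniqueness of ℓ
      (∀ ℓ' : (Fin (d + 1) → ℝ) → ℝ,
        (∀ p ∈ Δ, ∀ q ∈ Δ, ∀ t ∈ Set.Icc (0 : ℝ) 1,
          ℓ' (t • p + (1 - t) • q) = t * ℓ' p + (1 - t) * ℓ' q) →
        (∀ i : Fin (d + 1), ℓ' (Pi.single i 1) = u (Pi.single i 1)) →
        ∀ p ∈ Δ, ℓ' p = ℓ p) := by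
  subst hΔ hpbar hpunder
  set γ : ℝ → (Fin (d + 1) → ℝ) := fun α => α • Pi.single i₀ 1 + (1 - α) • Pi.single i₁ 1
  have hγ : MapsTo γ (Icc 0 1) (stdSimplex ℝ (Fin (d + 1))) := fun α hα =>
    convex_stdSimplex ℝ _ (single_mem_stdSimplex ℝ i₀) (single_mem_stdSimplex ℝ i₁) hα.1
      (sub_nonneg.2 hα.2) (add_sub_cancel _ _)
  obtain ⟨u, hu, hrep, huγ⟩ := exists_utility_of_path hcomp htrans hcont
    (by fun_prop) hγ (fun l hl l' hl' hlt => (hmono l l' hl hl' hlt).2) (by simpa [γ] using hext)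
  set ℓ : (Fin (d + 1) → ℝ) → ℝ := fun p => p ⬝ᵥ fun i => u (Pi.single i 1)
  have hℓ : ∀ p q : Fin (d + 1) → ℝ, ∀ t : ℝ, ℓ (t • p + (1 - t) • q) = t * ℓ p + (1 - t) * ℓ q :=
    fun p q t => by simp [ℓ, add_dotProduct, smul_dotProduct]
  have hℓu : ∀ i, ℓ (Pi.single i 1) = u (Pi.single i 1) := fun i => single_one_dotProduct _ _
  have hu₀ : u (Pi.single i₀ 1) = 1 := by simpa [γ] using huγ 1 (right_mem_Icc.2 zero_le_one)
  have hu₁ : u (Pi.single i₁ 1) = 0 := by simpa [γ] using huγ 0 (left_mem_Icc.2 zero_le_one)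
  have hstep : ∀ j, ∀ q ∈ stdSimplex ℝ (Fin (d + 1)), ∀ t ∈ Ioo (0 : ℝ) 1,
      |u (t • Pi.single j 1 + (1 - t) • q) - ℓ (t • Pi.single j 1 + (1 - t) • q)| <
        ε + |u q - ℓ q| := fun j q hq t ht => by
    have hpq := convex_stdSimplex ℝ _ (single_mem_stdSimplex ℝ j) hq ht.1.le (sub_nonneg.2 ht.2.le)
      (add_sub_cancel _ _)
    rw [hℓ, hℓu]
    exact abs_sub_convex_comb_lt (Ioo_subset_Icc_self ht) (hred _ (single_mem_stdSimplex ℝ j) q hq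
      t _ _ _ (Ioo_subset_Icc_self ht) (hu _ (single_mem_stdSimplex ℝ j)).1 (hu q hq).1
      (hu _ hpq).1 (hu _ (single_mem_stdSimplex ℝ j)).2 (hu q hq).2 (hu _ hpq).2)
  have : Nontrivial (Fin (d + 1)) := Fin.nontrivial_iff_two_le.2 (by omega)
  refine ⟨u, ℓ, hrep, ?_, ?_, fun p _ q _ t _ => hℓ p q t, fun p hp h2 => ?_,
    fun i => (hℓu i).symm, fun p hp => ?_, fun ℓ' hℓ' hℓ'u p hp => ?_⟩
  · exact Subset.antisymm (image_subset_iff.2 fun p hp => (hu p hp).1)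
      fun α hα => ⟨γ α, hγ hα, huγ α hα⟩
  · exact image_dotProduct_stdSimplex (fun i => (hu _ (single_mem_stdSimplex ℝ i)).1) hu₀ hu₁
  · rw [Nat.card_eq_fintype_card, Fintype.card_subtype] at h2 ⊢
    exact abs_sub_lt_mul_card_posSupport_sub_one (fun k => (hℓu k).symm) hstep hp h2
  · simpa using abs_sub_lt_mul_card_sub_one hε (fun k => (hℓu k).symm) hstep hp
  · exact eqOn_stdSimplex_of_affine hℓ' (fun p _ q _ t _ => hℓ p q t)
      (fun k => (hℓ'u k).trans (hℓu k).symm) hp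
end

section
/- Let ε > 0 and let ≽ be a preference on the simplex Δ ⊆ ℝ^{d+1} that is a continuous weak order satisfying Extremality (there are degenerate lotteries p̄ and p̲ with p̄ ≽ p ≽ p̲ for every p ∈ Δ) and Monotonicity (λ > λ' in [0,1] implies λp̄+(1−λ)p̲ ≻ λ'p̄+(1−λ')p̲). Suppose u, ℓ : Δ → [0,1] are such that u represents ≽, u(Δ) = ℓ(Δ) = [0,1], ℓ is affine, u agrees with ℓ on all degenerate lotteries, and sup_{p∈Δ}|u(p)−ℓ(p)| < ε. Then ≽ satisfies 4ε-Reduction of compound lotteries: whenever p₀ ∼ α₀p̄+(1−α₀)p̲, p₁ ∼ α₁p̄+(1−α₁)p̲ and λp₀+(1−λ)p₁ ∼ αp̄+(1−α)p̲ for λ ∈ [0,1], one has |α − (λα₀+(1−λ)α₁)| < 4ε. -/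
/-!
Extremality and `u '' Δ = [0,1]` force `u p̄ = 1` and `u p̲ = 0`; since `ℓ` agrees with `u` on
degenerate lotteries and is affine, `ℓ (t p̄ + (1 - t) p̲) = t`. A lottery indifferent to that
mixture has the same `u`-value, so its `ℓ`-value is within `2ε` of `t`. Applying this to `p₀`,
`p₁` and `λ p₀ + (1 - λ) p₁`, and using affinity of `ℓ` once more, gives `2ε + 2ε`.
-/

open Set

lemma IsMaxOn.apply_eq_one_of_image_eq_Icc {α : Type*} {S : Set α} {u : α → ℝ} {x : α}
    (hmax : IsMaxOn u S x) (hx : x ∈ S) (hu : u '' S = Icc 0 1) : u x = 1 :=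
  IsGreatest.unique ⟨mem_image_of_mem u hx, forall_mem_image.2 hmax⟩
    (hu ▸ isGreatest_Icc zero_le_one)

lemma IsMinOn.apply_eq_zero_of_image_eq_Icc {α : Type*} {S : Set α} {u : α → ℝ} {x : α}
    (hmin : IsMinOn u S x) (hx : x ∈ S) (hu : u '' S = Icc 0 1) : u x = 0 :=
  IsLeast.unique ⟨mem_image_of_mem u hx, forall_mem_image.2 hmin⟩
    (hu ▸ isLeast_Icc zero_le_one)

lemma abs_convexCombo_sub_convexCombo_lt {x y a b δ l : ℝ} (hl : l ∈ Icc (0 : ℝ) 1)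
    (hx : |x - a| < δ) (hy : |y - b| < δ) :
    |l * x + (1 - l) * y - (l * a + (1 - l) * b)| < δ := by
  have hx' : x - a ∈ Metric.ball (0 : ℝ) δ := by simpa [Real.dist_eq] using hx
  have hy' : y - b ∈ Metric.ball (0 : ℝ) δ := by simpa [Real.dist_eq] using hy
  have := convex_ball (0 : ℝ) δ hx' hy' hl.1 (sub_nonneg.2 hl.2) (add_sub_cancel l 1)
  rw [Metric.mem_ball, Real.dist_eq, smul_eq_mul, smul_eq_mul, sub_zero] at this
  convert this using 2
  ring

lemma abs_sub_lt_of_indifferent {α : Type*} {S : Set α} {R : α → α → Prop} {u ℓ : α → ℝ}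
    {ε : ℝ} (hrep : ∀ p ∈ S, ∀ q ∈ S, (R p q ↔ u q ≤ u p))
    (hclose : ∀ p ∈ S, |u p - ℓ p| < ε) {p m : α} (hp : p ∈ S) (hm : m ∈ S)
    (hpm : R p m ∧ R m p) : |ℓ p - ℓ m| < 2 * ε := by
  have hu : u p = u m := le_antisymm ((hrep m hm p hp).1 hpm.2) ((hrep p hp m hm).1 hpm.1)
  calc |ℓ p - ℓ m| = |(u m - ℓ m) - (u p - ℓ p)| := by rw [hu]; congr 1; ring
    _ ≤ |u m - ℓ m| + |u p - ℓ p| := abs_sub _ _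
    _ < ε + ε := add_lt_add (hclose m hm) (hclose p hp)
    _ = 2 * ε := by ring

theorem stmt_1_general (d : ℕ) (ε : ℝ)
    (R : (Fin (d + 1) → ℝ) → (Fin (d + 1) → ℝ) → Prop)
    (Δ : Set (Fin (d + 1) → ℝ)) (hΔ : Δ = stdSimplex ℝ (Fin (d + 1)))
    (i₀ i₁ : Fin (d + 1)) (pbar punder : Fin (d + 1) → ℝ)
    (hpbar : pbar = Pi.single i₀ 1) (hpunder : punder = Pi.single i₁ 1)
    (hext : ∀ p ∈ Δ, R pbar p ∧ R p punder)
    (u ℓ : (Fin (d + 1) → ℝ) → ℝ)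
    (hrep : ∀ p ∈ Δ, ∀ q ∈ Δ, (R p q ↔ u q ≤ u p))
    (huim : u '' Δ = Set.Icc 0 1)
    (haff : ∀ p ∈ Δ, ∀ q ∈ Δ, ∀ t ∈ Set.Icc (0 : ℝ) 1,
      ℓ (t • p + (1 - t) • q) = t * ℓ p + (1 - t) * ℓ q)
    (hagree : ∀ i : Fin (d + 1), u (Pi.single i 1) = ℓ (Pi.single i 1))
    (hclose : ∀ p ∈ Δ, |u p - ℓ p| < ε) :
    ∀ p₀ ∈ Δ, ∀ p₁ ∈ Δ, ∀ l α₀ α₁ α : ℝ,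
      l ∈ Set.Icc (0 : ℝ) 1 → α₀ ∈ Set.Icc (0 : ℝ) 1 → α₁ ∈ Set.Icc (0 : ℝ) 1 →
      α ∈ Set.Icc (0 : ℝ) 1 →
      (R p₀ (α₀ • pbar + (1 - α₀) • punder) ∧ R (α₀ • pbar + (1 - α₀) • punder) p₀) →
      (R p₁ (α₁ • pbar + (1 - α₁) • punder) ∧ R (α₁ • pbar + (1 - α₁) • punder) p₁) →
      (R (l • p₀ + (1 - l) • p₁) (α • pbar + (1 - α) • punder) ∧
        R (α • pbar + (1 - α) • punder) (l • p₀ + (1 - l) • p₁)) →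
      |α - (l * α₀ + (1 - l) * α₁)| < 4 * ε := by
  intro p₀ hp₀ p₁ hp₁ l α₀ α₁ α hl hα₀ hα₁ hα h₀ h₁ h
  have hconv : Convex ℝ Δ := hΔ ▸ convex_stdSimplex ℝ (Fin (d + 1))
  have hmix : ∀ p ∈ Δ, ∀ q ∈ Δ, ∀ t ∈ Icc (0 : ℝ) 1, t • p + (1 - t) • q ∈ Δ :=
    fun p hp q hq t ht ↦ hconv hp hq ht.1 (sub_nonneg.2 ht.2) (add_sub_cancel t 1)
  have hpbar_mem : pbar ∈ Δ := hΔ ▸ hpbar ▸ single_mem_stdSimplex ℝ i₀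
  have hpunder_mem : punder ∈ Δ := hΔ ▸ hpunder ▸ single_mem_stdSimplex ℝ i₁
  have hu_pbar : u pbar = 1 :=
    (isMaxOn_iff.2 fun p hp ↦ (hrep _ hpbar_mem p hp).1 (hext p hp).1)
      |>.apply_eq_one_of_image_eq_Icc hpbar_mem huim
  have hu_punder : u punder = 0 :=
    (isMinOn_iff.2 fun p hp ↦ (hrep p hp _ hpunder_mem).1 (hext p hp).2)
      |>.apply_eq_zero_of_image_eq_Icc hpunder_mem huim
  have hℓ_pbar : ℓ pbar = 1 := by rw [← hu_pbar, hpbar, hagree]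
  have hℓ_punder : ℓ punder = 0 := by rw [← hu_punder, hpunder, hagree]
  have hℓ_near : ∀ p ∈ Δ, ∀ t ∈ Icc (0 : ℝ) 1,
      R p (t • pbar + (1 - t) • punder) ∧ R (t • pbar + (1 - t) • punder) p →
      |ℓ p - t| < 2 * ε := by
    intro p hp t ht hpt
    have := abs_sub_lt_of_indifferent hrep hclose hp (hmix _ hpbar_mem _ hpunder_mem t ht) hpt
    rwa [haff _ hpbar_mem _ hpunder_mem t ht, hℓ_pbar, hℓ_punder, mul_one, mul_zero,
      add_zero] at this
  have hq := hmix p₀ hp₀ p₁ hp₁ l hl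
  calc |α - (l * α₀ + (1 - l) * α₁)|
      ≤ |α - ℓ (l • p₀ + (1 - l) • p₁)|
          + |ℓ (l • p₀ + (1 - l) • p₁) - (l * α₀ + (1 - l) * α₁)| := abs_sub_le _ _ _
    _ < 2 * ε + 2 * ε := by
        refine add_lt_add ?_ ?_
        · rw [abs_sub_comm]; exact hℓ_near _ hq α hα h
        · rw [haff p₀ hp₀ p₁ hp₁ l hl]
          exact abs_convexCombo_sub_convexCombo_lt hl (hℓ_near p₀ hp₀ α₀ hα₀ h₀)
            (hℓ_near p₁ hp₁ α₁ hα₁ h₁)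
    _ = 4 * ε := by ring

/-- Theorem `thm:EU`, converse part: if a continuous weak order on the
simplex satisfies Extremality and Monotonicity, and admits `u, ℓ : Δ → [0,1]` with `u`
representing `≽`, `ℓ` affine, `u` and `ℓ` agreeing on degenerate lotteries, onto `[0,1]`,
and `sup |u - ℓ| < ε`, then `≽` satisfies 4ε-Reduction of compound lotteries. -/
theorem stmt_1 (d : ℕ) (hd : 1 ≤ d) (ε : ℝ) (hε : 0 < ε)
    (R : (Fin (d + 1) → ℝ) → (Fin (d + 1) → ℝ) → Prop)
    (Δ : Set (Fin (d + 1) → ℝ)) (hΔ : Δ = stdSimplex ℝ (Fin (d + 1)))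
    (hcomp : ∀ p ∈ Δ, ∀ q ∈ Δ, R p q ∨ R q p)
    (htrans : ∀ p ∈ Δ, ∀ q ∈ Δ, ∀ r ∈ Δ, R p q → R q r → R p r)
    (hcont : ∀ p ∈ Δ, IsClosed {q | q ∈ Δ ∧ R q p} ∧ IsClosed {q | q ∈ Δ ∧ R p q})
    (i₀ i₁ : Fin (d + 1)) (pbar punder : Fin (d + 1) → ℝ)
    (hpbar : pbar = Pi.single i₀ 1) (hpunder : punder = Pi.single i₁ 1)
    (hext : ∀ p ∈ Δ, R pbar p ∧ R p punder)
    (hmono : ∀ l l' : ℝ, l ∈ Set.Icc (0 : ℝ) 1 → l' ∈ Set.Icc (0 : ℝ) 1 → l' < l →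
      R (l • pbar + (1 - l) • punder) (l' • pbar + (1 - l') • punder) ∧
      ¬ R (l' • pbar + (1 - l') • punder) (l • pbar + (1 - l) • punder))
    (u ℓ : (Fin (d + 1) → ℝ) → ℝ)
    (hrep : ∀ p ∈ Δ, ∀ q ∈ Δ, (R p q ↔ u q ≤ u p))
    (huim : u '' Δ = Set.Icc 0 1) (hlim : ℓ '' Δ = Set.Icc 0 1)
    (haff : ∀ p ∈ Δ, ∀ q ∈ Δ, ∀ t ∈ Set.Icc (0 : ℝ) 1,
      ℓ (t • p + (1 - t) • q) = t * ℓ p + (1 - t) * ℓ q)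
    (hagree : ∀ i : Fin (d + 1), u (Pi.single i 1) = ℓ (Pi.single i 1))
    (hclose : ∀ p ∈ Δ, |u p - ℓ p| < ε) :
    ∀ p₀ ∈ Δ, ∀ p₁ ∈ Δ, ∀ l α₀ α₁ α : ℝ,
      l ∈ Set.Icc (0 : ℝ) 1 → α₀ ∈ Set.Icc (0 : ℝ) 1 → α₁ ∈ Set.Icc (0 : ℝ) 1 →
      α ∈ Set.Icc (0 : ℝ) 1 →
      (R p₀ (α₀ • pbar + (1 - α₀) • punder) ∧ R (α₀ • pbar + (1 - α₀) • punder) p₀) →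
      (R p₁ (α₁ • pbar + (1 - α₁) • punder) ∧ R (α₁ • pbar + (1 - α₁) • punder) p₁) →
      (R (l • p₀ + (1 - l) • p₁) (α • pbar + (1 - α) • punder) ∧
        R (α • pbar + (1 - α) • punder) (l • p₀ + (1 - l) • p₁)) →
      |α - (l * α₀ + (1 - l) * α₁)| < 4 * ε :=
  stmt_1_general d ε R Δ hΔ i₀ i₁ pbar punder hpbar hpunder hext u ℓ hrep huim haff hagree hclose
end

section
/- Let C be a convex subset of a real vector space, ε > 0, and u : C → ℝ a function such that |u(λp+(1−λ)q) − λu(p) − (1−λ)u(q)| < ε for all p, q ∈ C and all λ ∈ [0,1]. Then for every integer k ≥ 2, all points x₁,…,x_k ∈ C and all weights λ₁,…,λ_k ≥ 0 with Σ_{j=1}^k λ_j = 1, one has |u(Σ_{j=1}^k λ_j x_j) − Σ_{j=1}^k λ_j u(x_j)| < (k−1)·ε. -/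
/-!
Peel off the last point: a `k+1`-point convex combination is the two-point mixture
`t • y + (1 - t) • x_last`, where `y` is a `k`-point convex combination of the other points.
The error of `u` on it is at most the two-point error (`< ε`) plus `t` times the error of `u`
at `y`, so the errors add up to less than `(k - 1) * ε` by induction on `k`.
-/

open Finset

theorem abs_sub_add_mul_lt {a b c S t ε M : ℝ} (ht₀ : 0 ≤ t) (ht₁ : t ≤ 1)
    (hab : |a - t * b - (1 - t) * c| < ε) (hbS : |b - S| < M) :
    |a - (t * S + (1 - t) * c)| < ε + M := by
  have htM : t * |b - S| ≤ M := by nlinarith [abs_nonneg (b - S)]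
  calc |a - (t * S + (1 - t) * c)| = |(a - t * b - (1 - t) * c) + t * (b - S)| := by ring_nf
    _ ≤ |a - t * b - (1 - t) * c| + |t * (b - S)| := abs_add_le _ _
    _ = |a - t * b - (1 - t) * c| + t * |b - S| := by rw [abs_mul, abs_of_nonneg ht₀]
    _ < ε + M := by linarith

theorem Fin.exists_weights_castSucc_eq_mul {n : ℕ} {w : Fin (n + 2) → ℝ} (hw : ∀ j, 0 ≤ w j)
    (hsum : ∑ j, w j = 1) :
    ∃ t ∈ Set.Icc (0 : ℝ) 1, ∃ v : Fin (n + 1) → ℝ, (∀ j, 0 ≤ v j) ∧ ∑ j, v j = 1 ∧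
      (∀ j, w j.castSucc = t * v j) ∧ w (Fin.last _) = 1 - t := by
  set t := ∑ j : Fin (n + 1), w j.castSucc
  have ht_add : t + w (Fin.last _) = 1 := by rw [← hsum, Fin.sum_univ_castSucc]
  have ht₀ : 0 ≤ t := sum_nonneg fun j _ ↦ hw _
  have ht₁ : t ≤ 1 := by linarith [hw (Fin.last _)]
  refine ⟨t, ⟨ht₀, ht₁⟩, ?_⟩
  rcases ht₀.eq_or_lt with ht | ht
  · -- all of the mass sits on the last point, so any weights `v` will do
    have hw_zero : ∀ j : Fin (n + 1), w j.castSucc = 0 :=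
      fun j ↦ (sum_eq_zero_iff_of_nonneg fun j _ ↦ hw _).mp ht.symm j (mem_univ j)
    refine ⟨Pi.single 0 1, fun j ↦ ?_, by simp, fun j ↦ by simp [← ht, hw_zero], by linarith⟩
    by_cases hj : j = 0 <;> simp [hj]
  · refine ⟨fun j ↦ w j.castSucc / t, fun j ↦ div_nonneg (hw _) ht₀, ?_,
      fun j ↦ (mul_div_cancel₀ _ ht.ne').symm, by linarith⟩
    rw [← sum_div, div_self ht.ne']

section ApproxAffine

variable {V : Type*} [AddCommGroup V] [Module ℝ V] {C : Set V} {ε : ℝ} {u : V → ℝ}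

theorem abs_sub_sum_lt_of_approx_affine (hC : Convex ℝ C)
    (h : ∀ p ∈ C, ∀ q ∈ C, ∀ t ∈ Set.Icc (0 : ℝ) 1,
      |u (t • p + (1 - t) • q) - t * u p - (1 - t) * u q| < ε) :
    ∀ (n : ℕ) (x : Fin (n + 2) → V), (∀ j, x j ∈ C) →
      ∀ w : Fin (n + 2) → ℝ, (∀ j, 0 ≤ w j) → ∑ j, w j = 1 →
      |u (∑ j, w j • x j) - ∑ j, w j * u (x j)| < (n + 1) * ε := by
  intro n
  induction n with
  | zero =>
    intro x hx w hw hsum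
    have hw₁ : w 1 = 1 - w 0 := by rw [Fin.sum_univ_two] at hsum; linarith
    simpa [Fin.sum_univ_two, hw₁, sub_sub] using
      h _ (hx 0) _ (hx 1) (w 0) ⟨hw 0, by linarith [hw 1]⟩
  | succ n ih =>
    intro x hx w hw hsum
    obtain ⟨t, ⟨ht₀, ht₁⟩, v, hv, hv_sum, hw_init, hw_last⟩ :=
      Fin.exists_weights_castSucc_eq_mul hw hsum
    set y := ∑ j, v j • x j.castSucc
    have hy : y ∈ C := hC.sum_mem (fun j _ ↦ hv j) hv_sum fun j _ ↦ hx _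
    have hpoint : ∑ j, w j • x j = t • y + (1 - t) • x (Fin.last _) := by
      rw [Fin.sum_univ_castSucc, smul_sum]
      simp only [hw_init, hw_last, mul_smul]
    have hvalue : ∑ j, w j * u (x j)
        = t * ∑ j, v j * u (x j.castSucc) + (1 - t) * u (x (Fin.last _)) := by
      rw [Fin.sum_univ_castSucc, mul_sum]
      simp only [hw_init, hw_last, mul_assoc]
    rw [hpoint, hvalue]
    refine (abs_sub_add_mul_lt ht₀ ht₁ (h y hy _ (hx _) t ⟨ht₀, ht₁⟩)
      (ih _ (fun j ↦ hx _) v hv hv_sum)).trans_eq ?_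
    push_cast
    ring

end ApproxAffine

theorem stmt_2_general {V : Type*} [AddCommGroup V] [Module ℝ V] (C : Set V) (hC : Convex ℝ C)
    (ε : ℝ) (u : V → ℝ)
    (h : ∀ p ∈ C, ∀ q ∈ C, ∀ t ∈ Set.Icc (0 : ℝ) 1,
      |u (t • p + (1 - t) • q) - t * u p - (1 - t) * u q| < ε) :
    ∀ k : ℕ, 2 ≤ k → ∀ x : Fin k → V, (∀ j, x j ∈ C) →
      ∀ w : Fin k → ℝ, (∀ j, 0 ≤ w j) → ∑ j, w j = 1 →
      |u (∑ j, w j • x j) - ∑ j, w j * u (x j)| < ((k : ℝ) - 1) * ε := by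
  intro k hk
  obtain ⟨n, rfl⟩ : ∃ n, k = n + 2 := ⟨k - 2, by omega⟩
  convert abs_sub_sum_lt_of_approx_affine hC h n using 6
  push_cast
  ring

/-- Lemma `lem:approxCauchy`: a function on a convex set that is
ε-approximately affine on two-point mixtures is `(k-1)·ε`-approximately affine
on `k`-point convex combinations. -/
theorem stmt_2 {V : Type*} [AddCommGroup V] [Module ℝ V] (C : Set V) (hC : Convex ℝ C)
    (ε : ℝ) (hε : 0 < ε) (u : V → ℝ)
    (h : ∀ p ∈ C, ∀ q ∈ C, ∀ t ∈ Set.Icc (0 : ℝ) 1,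
      |u (t • p + (1 - t) • q) - t * u p - (1 - t) * u q| < ε) :
    ∀ k : ℕ, 2 ≤ k → ∀ x : Fin k → V, (∀ j, x j ∈ C) →
      ∀ w : Fin k → ℝ, (∀ j, 0 ≤ w j) → ∑ j, w j = 1 →
      |u (∑ j, w j • x j) - ∑ j, w j * u (x j)| < ((k : ℝ) - 1) * ε :=
  stmt_2_general C hC ε u h
end

section
/- Let ε > 0 and let ≽ be a continuous weak order on the simplex Δ ⊆ ℝ^{d+1} that is nontrivial (there exist p, q ∈ Δ with p ≻ q) and satisfies ε-Independence: if p ∼ q, α ∈ [0,1] and r ∈ Δ, then there is α' ∈ [0,1] with |α−α'| < ε such that αp+(1−α)r ∼ α'q+(1−α')r. Then there exist functions u, ℓ : Δ → ℝ such that: (1) u represents ≽, u(Δ) = ℓ(Δ) = [0,1], and u(δᵢ) = ℓ(δᵢ) for every degenerate lottery δᵢ, i = 1,…,d+1; (2) ℓ is affine, i.e. ℓ(λp+(1−λ)q) = λℓ(p)+(1−λ)ℓ(q) for all p,q ∈ Δ and λ ∈ [0,1]; (3) sup_{p∈Δ}|u(p)−ℓ(p)| < (d+1)²·ε. -/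
/-!
Betweenness and the convexity of indifference classes follow from ε-independence; together with
continuity they make the best vertex `δ b` and the worst vertex `δ w` best and worst on the whole
simplex, and make every lottery `p` indifferent to some point of the segment from `δ w` to `δ b`.
The largest such position, `segUtility`, represents the preference.

If `ε < 1`, mixing a nondegenerate indifference class of the segment with a point just outside it
yields, by ε-independence, an indifferent point further outside; so these classes are points and
the position of `seg (δ b) (δ w) t` is `t` itself. Applying ε-independence twice shows that the
position is affine up to `2ε` along every mixture, and peeling off one vertex at a time bounds its
distance to the affine function `ℓ` with the same vertex values by `2εd < (d+1)²ε`.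

If `ε ≥ 1` the bound is trivial since `u` and `ℓ` take values in `[0,1]`, and only a
representation onto `[0,1]` is needed. Along the segment the position is monotone with closed
fibres (the indifference classes); its values at rational points form a countable dense order,
isomorphic to `ℚ ∩ (0,1)` by Cantor's theorem, and this isomorphism extends by suprema to a
strictly monotone map of all values onto `[0,1]`.
-/

open Set

namespace EpsIndependence

section Segment

variable {E : Type*} [AddCommGroup E] [Module ℝ E]

def seg (x y : E) (t : ℝ) : E := t • x + (1 - t) • y

@[simp] lemma seg_zero (x y : E) : seg x y 0 = y := by simp [seg]

@[simp] lemma seg_one (x y : E) : seg x y 1 = x := by simp [seg]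

@[simp] lemma seg_self (x : E) (t : ℝ) : seg x x t = x := by simp [seg, ← add_smul]

lemma seg_symm (x y : E) (t : ℝ) : seg x y t = seg y x (1 - t) := by simp [seg, add_comm]

lemma seg_seg (x y : E) (a s t : ℝ) :
    seg (seg x y s) (seg x y t) a = seg x y (a * s + (1 - a) * t) := by
  simp only [seg]; module

lemma seg_mem {K : Set E} (hK : Convex ℝ K) {x y : E} (hx : x ∈ K) (hy : y ∈ K) {t : ℝ}
    (ht : t ∈ Icc (0 : ℝ) 1) : seg x y t ∈ K :=
  hK hx hy ht.1 (by linarith [ht.2]) (by ring)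

lemma continuous_seg [TopologicalSpace E] [ContinuousAdd E] [ContinuousSMul ℝ E] (x y : E) :
    Continuous (seg x y) := by
  unfold seg; fun_prop

end Segment

lemma exists_mem_Icc_mul_add_mul_eq {s t c : ℝ} (hc : c ∈ Icc s t) :
    ∃ a ∈ Icc (0 : ℝ) 1, a * s + (1 - a) * t = c := by
  rw [← segment_eq_Icc (hc.1.trans hc.2)] at hc
  obtain ⟨a, b, ha, hb, hab, rfl⟩ := hc
  obtain rfl : b = 1 - a := by linarith
  exact ⟨a, ⟨ha, by linarith⟩, by simp⟩

lemma exists_strictMonoOn_image_eq_ratIoo {α : Type*} [LinearOrder α] {D : Set α}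
    [Countable D] [DenselyOrdered D] [NoMinOrder D] [NoMaxOrder D] [Nonempty D] :
    ∃ ψ : α → ℝ, StrictMonoOn ψ D ∧ ψ '' D = range ((↑) : ℚ → ℝ) ∩ Ioo 0 1 := by
  classical
  have : Nonempty (Ioo (0 : ℚ) 1) := ⟨⟨1 / 2, by norm_num, by norm_num⟩⟩
  obtain ⟨φ⟩ := Order.iso_of_countable_dense D (Ioo (0 : ℚ) 1)
  refine ⟨fun v => if h : v ∈ D then ((φ ⟨v, h⟩ : ℚ) : ℝ) else 0, fun u hu v hv huv => ?_, ?_⟩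
  · simpa [hu, hv] using φ.strictMono (show (⟨u, hu⟩ : D) < ⟨v, hv⟩ from huv)
  · ext r
    constructor
    · rintro ⟨v, hv, rfl⟩
      have := (φ ⟨v, hv⟩).2
      simp only [hv, dite_true]
      exact ⟨mem_range_self _, by exact_mod_cast this.1, by exact_mod_cast this.2⟩
    · rintro ⟨⟨q, rfl⟩, hq⟩
      have hq' : q ∈ Ioo (0 : ℚ) 1 := ⟨by exact_mod_cast hq.1, by exact_mod_cast hq.2⟩
      exact ⟨_, (φ.symm ⟨q, hq'⟩).2, by simp⟩

noncomputable def supExtend (ψ : ℝ → ℝ) (D : Set ℝ) (v : ℝ) : ℝ :=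
  sSup (insert 0 (ψ '' (D ∩ Iic v)))

section SupExtend

variable {ψ : ℝ → ℝ} {D : Set ℝ}

lemma bddAbove_supExtend (h1 : ∀ d ∈ D, ψ d ≤ 1) (v : ℝ) :
    BddAbove (insert 0 (ψ '' (D ∩ Iic v))) :=
  ⟨1, by rintro r (rfl | ⟨d, hd, rfl⟩); exacts [zero_le_one, h1 d hd.1]⟩

lemma le_supExtend (h1 : ∀ d ∈ D, ψ d ≤ 1) {d v : ℝ} (hd : d ∈ D) (hdv : d ≤ v) :
    ψ d ≤ supExtend ψ D v :=
  le_csSup (bddAbove_supExtend h1 v) (mem_insert_of_mem _ ⟨d, ⟨hd, hdv⟩, rfl⟩)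

lemma zero_le_supExtend (h1 : ∀ d ∈ D, ψ d ≤ 1) (v : ℝ) : 0 ≤ supExtend ψ D v :=
  le_csSup (bddAbove_supExtend h1 v) (mem_insert _ _)

lemma supExtend_le {v r : ℝ} (hr : 0 ≤ r) (h : ∀ d ∈ D, d ≤ v → ψ d ≤ r) :
    supExtend ψ D v ≤ r :=
  csSup_le (insert_nonempty _ _) (by rintro _ (rfl | ⟨d, hd, rfl⟩); exacts [hr, h d hd.1 hd.2])

end SupExtend

lemma exists_rat_lt_lt_of_isClosed_fiber {f : ℝ → ℝ} {a b : ℝ} (hf : MonotoneOn f (Icc a b))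
    (hfib : ∀ t ∈ Icc a b, IsClosed {s | s ∈ Icc a b ∧ f s = f t}) {x y : ℝ}
    (hx : x ∈ Icc a b) (hy : y ∈ Icc a b) (hxy : f x < f y) :
    ∃ q : ℚ, (q : ℝ) ∈ Icc a b ∧ f x < f q ∧ f q < f y := by
  have hbdd : BddAbove {s | s ∈ Icc a b ∧ f s = f x} := ⟨b, fun s hs => hs.1.2⟩
  have hbdd' : BddBelow {s | s ∈ Icc a b ∧ f s = f y} := ⟨a, fun s hs => hs.1.1⟩
  -- the fibre of `x`, being closed, ends strictly before the fibre of `y` starts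
  obtain ⟨hBI, hB⟩ := (hfib x hx).csSup_mem ⟨x, hx, rfl⟩ hbdd
  obtain ⟨hAI, hA⟩ := (hfib y hy).csInf_mem ⟨y, hy, rfl⟩ hbdd'
  have hBA : sSup {s | s ∈ Icc a b ∧ f s = f x} < sInf {s | s ∈ Icc a b ∧ f s = f y} :=
    lt_of_not_ge fun h => (hf hAI hBI h).not_gt (by rw [hA, hB]; exact hxy)
  obtain ⟨q, hq₁, hq₂⟩ := exists_rat_btwn hBA
  have hq : (q : ℝ) ∈ Icc a b := ⟨hBI.1.trans hq₁.le, hq₂.le.trans hAI.2⟩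
  refine ⟨q, hq, lt_of_le_of_ne ?_ fun h => ?_, lt_of_le_of_ne ?_ fun h => ?_⟩
  · rw [← hB]; exact hf hBI hq hq₁.le
  · exact (le_csSup hbdd ⟨hq, h.symm⟩).not_gt hq₁
  · rw [← hA]; exact hf hq hAI hq₂.le
  · exact (csInf_le hbdd' ⟨hq, h⟩).not_gt hq₂

lemma exists_countable_separating {f : ℝ → ℝ} {a b : ℝ} (hab : a ≤ b)
    (hf : MonotoneOn f (Icc a b))
    (hfib : ∀ t ∈ Icc a b, IsClosed {s | s ∈ Icc a b ∧ f s = f t}) :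
    ∃ D : Set ℝ, D.Countable ∧ D ⊆ f '' Icc a b ∩ Ioo (f a) (f b) ∧
      ∀ x ∈ Icc a b, ∀ y ∈ Icc a b, f x < f y → ∃ d ∈ D, f x < d ∧ d < f y := by
  refine ⟨(fun q : ℚ => f q) '' {q | (q : ℝ) ∈ Icc a b} ∩ Ioo (f a) (f b),
    ((countable_range _).mono (image_subset_range _ _)).mono inter_subset_left,
    fun _ ⟨⟨q, hq, hd⟩, hd'⟩ => ⟨⟨q, hq, hd⟩, hd'⟩, fun x hx y hy hxy => ?_⟩
  obtain ⟨q, hq, h₁, h₂⟩ := exists_rat_lt_lt_of_isClosed_fiber hf hfib hx hy hxy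
  exact ⟨f q, ⟨⟨q, hq, rfl⟩, (hf (left_mem_Icc.2 hab) hx hx.1).trans_lt h₁,
    h₂.trans_le (hf hy (right_mem_Icc.2 hab) hy.2)⟩, h₁, h₂⟩

lemma exists_supExtend_eq {f ψ : ℝ → ℝ} {a b : ℝ} {D : Set ℝ} (hab : a ≤ b)
    (hf : MonotoneOn f (Icc a b)) (hDf : D ⊆ f '' Icc a b) (hψ : StrictMonoOn ψ D)
    (hψD : ψ '' D = range ((↑) : ℚ → ℝ) ∩ Ioo 0 1) {y : ℝ} (hy : y ∈ Icc (0 : ℝ) 1) :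
    ∃ x ∈ Icc a b, supExtend ψ D (f x) = y := by
  have h1 : ∀ d ∈ D, ψ d ≤ 1 := fun d hd => (hψD.subset (mem_image_of_mem ψ hd)).2.2.le
  have hψrat : ∀ r : ℚ, (r : ℝ) ∈ Ioo 0 1 → ∃ d ∈ D, ψ d = r :=
    fun r hr => hψD.symm.subset ⟨mem_range_self r, hr⟩
  set X := {x | x ∈ Icc a b ∧ ∃ d ∈ D, ψ d < y ∧ f x ≤ d}
  have hXbdd : BddAbove (insert a X) := ⟨b, by rintro x (rfl | hx); exacts [hab, hx.1.2]⟩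
  set x := sSup (insert a X)
  have hx : x ∈ Icc a b := ⟨le_csSup hXbdd (mem_insert _ _),
    csSup_le (insert_nonempty _ _) (by rintro x (rfl | hx); exacts [hab, hx.1.2])⟩
  refine ⟨x, hx, le_antisymm (supExtend_le hy.1 fun d hd hdx => not_lt.1 fun hyd => ?_)
    (not_lt.1 fun hxy => ?_)⟩
  · -- a point of `D` with value in `(y, ψ d)` bounds `X`, hence `x`, from above
    obtain ⟨r, hyr, hrd⟩ := exists_rat_btwn hyd
    obtain ⟨e, he, hψe⟩ := hψrat r ⟨hy.1.trans_lt hyr, hrd.trans_le (h1 d hd)⟩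
    obtain ⟨z, hz, rfl⟩ := hDf he
    have hxz : x ≤ z := csSup_le (insert_nonempty _ _) (by
      rintro w (rfl | ⟨hw, c, hc, hcy, hwc⟩)
      · exact hz.1
      · refine le_of_not_gt fun hzw => ?_
        have := (hψ.lt_iff_lt hc he).1 (hψe ▸ hcy.trans hyr)
        linarith [hf hz hw hzw.le])
    have := (hψ.lt_iff_lt he hd).1 (hψe ▸ hrd)
    linarith [hf hx hz hxz]
  · obtain ⟨r, hxr, hry⟩ := exists_rat_btwn hxy
    obtain ⟨d, hd, hψd⟩ := hψrat r ⟨(zero_le_supExtend h1 _).trans_lt hxr, hry.trans_le hy.2⟩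
    obtain ⟨z, hz, rfl⟩ := hDf hd
    have hzx : z ≤ x := le_csSup hXbdd (mem_insert_of_mem _ ⟨hz, f z, hd, hψd ▸ hry, le_rfl⟩)
    linarith [le_supExtend h1 hd (hf hz hx hzx)]

theorem exists_strictMonoOn_image_eq_Icc {f : ℝ → ℝ} {a b : ℝ} (hab : a ≤ b)
    (hf : MonotoneOn f (Icc a b))
    (hfib : ∀ t ∈ Icc a b, IsClosed {s | s ∈ Icc a b ∧ f s = f t}) (hfab : f a < f b) :
    ∃ g : ℝ → ℝ, StrictMonoOn g (f '' Icc a b) ∧ g '' (f '' Icc a b) = Icc 0 1 := by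
  obtain ⟨D, hDc, hD, hsep⟩ := exists_countable_separating hab hf hfib
  have haI : a ∈ Icc a b := left_mem_Icc.2 hab
  have hbI : b ∈ Icc a b := right_mem_Icc.2 hab
  have hsep' : ∀ u ∈ f '' Icc a b, ∀ v ∈ f '' Icc a b, u < v → ∃ d ∈ D, u < d ∧ d < v := by
    rintro _ ⟨x, hx, rfl⟩ _ ⟨y, hy, rfl⟩
    exact hsep x hx y hy
  have : Countable D := hDc.to_subtype
  have : DenselyOrdered D := ⟨fun d e hde =>
    let ⟨c, hc, h⟩ := hsep' d (hD d.2).1 e (hD e.2).1 hde; ⟨⟨c, hc⟩, h⟩⟩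
  have : NoMinOrder D := ⟨fun d =>
    let ⟨c, hc, _, h⟩ := hsep' _ (mem_image_of_mem f haI) d (hD d.2).1 (hD d.2).2.1; ⟨⟨c, hc⟩, h⟩⟩
  have : NoMaxOrder D := ⟨fun d =>
    let ⟨c, hc, h, _⟩ := hsep' d (hD d.2).1 _ (mem_image_of_mem f hbI) (hD d.2).2.2; ⟨⟨c, hc⟩, h⟩⟩
  have : Nonempty D := let ⟨c, hc, _⟩ := hsep a haI b hbI hfab; ⟨⟨c, hc⟩⟩
  obtain ⟨ψ, hψ, hψD⟩ := exists_strictMonoOn_image_eq_ratIoo (D := D)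
  have h01 : ∀ d ∈ D, ψ d ∈ Ioo (0 : ℝ) 1 := fun d hd => (hψD.subset (mem_image_of_mem ψ hd)).2
  have h1 : ∀ d ∈ D, ψ d ≤ 1 := fun d hd => (h01 d hd).2.le
  refine ⟨supExtend ψ D, fun u hu v hv huv => ?_, Subset.antisymm ?_ fun y hy => ?_⟩
  · obtain ⟨d₂, hd₂, hud₂, hd₂v⟩ := hsep' u hu v hv huv
    obtain ⟨d₁, hd₁, hud₁, hd₁d₂⟩ := hsep' u hu d₂ (hD hd₂).1 hud₂
    calc supExtend ψ D u ≤ ψ d₁ := supExtend_le (h01 d₁ hd₁).1.le fun d hd hdu =>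
          (hψ hd hd₁ (hdu.trans_lt hud₁)).le
      _ < ψ d₂ := hψ hd₁ hd₂ hd₁d₂
      _ ≤ supExtend ψ D v := le_supExtend h1 hd₂ hd₂v.le
  · rintro _ ⟨v, -, rfl⟩
    exact ⟨zero_le_supExtend h1 v, supExtend_le zero_le_one fun d hd _ => h1 d hd⟩
  · obtain ⟨x, hx, hxy⟩ := exists_supExtend_eq hab hf (fun d hd => (hD hd).1) hψ hψD hy
    exact ⟨f x, mem_image_of_mem f hx, hxy⟩

section Preference

variable {E : Type*} [AddCommGroup E] [Module ℝ E] [TopologicalSpace E]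

structure IsEpsIndependentPref (K : Set E) (ε : ℝ) (R : E → E → Prop) : Prop where
  total : ∀ p ∈ K, ∀ q ∈ K, R p q ∨ R q p
  trans : ∀ p ∈ K, ∀ q ∈ K, ∀ r ∈ K, R p q → R q r → R p r
  isClosed : ∀ p ∈ K, IsClosed {q | q ∈ K ∧ R q p} ∧ IsClosed {q | q ∈ K ∧ R p q}
  indep : ∀ p ∈ K, ∀ q ∈ K, (R p q ∧ R q p) →
    ∀ α ∈ Icc (0 : ℝ) 1, ∀ r ∈ K, ∃ α' ∈ Icc (0 : ℝ) 1, |α - α'| < ε ∧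
      (R (seg p r α) (seg q r α') ∧ R (seg q r α') (seg p r α))

noncomputable def segUtility (R : E → E → Prop) (x y p : E) : ℝ :=
  sSup {t | t ∈ Icc (0 : ℝ) 1 ∧ R p (seg x y t)}

namespace IsEpsIndependentPref

variable {K : Set E} {ε : ℝ} {R : E → E → Prop} (hR : IsEpsIndependentPref K ε R)
include hR

lemma refl {p : E} (hp : p ∈ K) : R p p := (hR.total p hp p hp).elim id id

protected lemma flip : IsEpsIndependentPref K ε (flip R) where
  total p hp q hq := hR.total q hq p hp
  trans p hp q hq r hr hpq hqr := hR.trans r hr q hq p hp hqr hpq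
  isClosed p hp := (hR.isClosed p hp).symm
  indep p hp q hq hpq α hα r hr := by
    obtain ⟨α', hα', hlt, h⟩ := hR.indep p hp q hq hpq.symm α hα r hr
    exact ⟨α', hα', hlt, h.symm⟩

lemma indiff_trans {p q r : E} (hp : p ∈ K) (hq : q ∈ K) (hr : r ∈ K)
    (hpq : R p q ∧ R q p) (hqr : R q r ∧ R r q) : R p r ∧ R r p :=
  ⟨hR.trans p hp q hq r hr hpq.1 hqr.1, hR.trans r hr q hq p hp hqr.2 hpq.2⟩

lemma indiff_seg_of_indiff {p q : E} (hp : p ∈ K) (hq : q ∈ K) (hpq : R p q ∧ R q p) {t : ℝ}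
    (ht : t ∈ Icc (0 : ℝ) 1) : R (seg p q t) q ∧ R q (seg p q t) := by
  obtain ⟨α', -, -, h⟩ := hR.indep p hp q hq hpq t ht q hq
  simpa only [seg_self] using h

lemma indiff_seg_of_mem_Icc (hK : Convex ℝ K) {x y : E} (hx : x ∈ K) (hy : y ∈ K) {s t c : ℝ}
    (hs : s ∈ Icc (0 : ℝ) 1) (ht : t ∈ Icc (0 : ℝ) 1) (hc : c ∈ Icc s t)
    (h : R (seg x y s) (seg x y t) ∧ R (seg x y t) (seg x y s)) :
    R (seg x y c) (seg x y t) ∧ R (seg x y t) (seg x y c) := by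
  obtain ⟨a, ha, rfl⟩ := exists_mem_Icc_mul_add_mul_eq hc
  rw [← seg_seg]
  exact hR.indiff_seg_of_indiff (seg_mem hK hx hy hs) (seg_mem hK hx hy ht) h ha

lemma exists_indiff_of_continuousOn {f : ℝ → E} {s t : ℝ} (hst : s ≤ t)
    (hf : ContinuousOn f (Icc s t)) (hfK : MapsTo f (Icc s t) K) {p : E} (hp : p ∈ K)
    (hs : R p (f s)) (ht : R (f t) p) : ∃ c ∈ Icc s t, R (f c) p ∧ R p (f c) := by
  have hclosed := hR.isClosed p hp
  have hcover : Icc s t ⊆ f ⁻¹' {q | q ∈ K ∧ R q p} ∪ f ⁻¹' {q | q ∈ K ∧ R p q} :=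
    fun c hc => (hR.total _ (hfK hc) p hp).imp (⟨hfK hc, ·⟩) (⟨hfK hc, ·⟩)
  obtain ⟨c, hc, ⟨-, -, hcp⟩, -, -, hpc⟩ := isPreconnected_closed_iff.mp isPreconnected_Icc _ _
    (hf.preimage_isClosed_of_isClosed isClosed_Icc hclosed.1)
    (hf.preimage_isClosed_of_isClosed isClosed_Icc hclosed.2)
    (fun c hc => (hcover hc).imp (⟨hc, ·⟩) (⟨hc, ·⟩))
    ⟨t, right_mem_Icc.2 hst, right_mem_Icc.2 hst, hfK (right_mem_Icc.2 hst), ht⟩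
    ⟨s, left_mem_Icc.2 hst, left_mem_Icc.2 hst, hfK (left_mem_Icc.2 hst), hs⟩
  exact ⟨c, hc, hcp, hpc⟩

lemma exists_lt_indiff_seg (hK : Convex ℝ K) {x y : E} (hx : x ∈ K) (hy : y ∈ K) (hε : 0 ≤ ε)
    (hε1 : ε < 1) {a b : ℝ} (ha : 0 < a) (hab : a < b) (hb : b ≤ 1)
    (h : R (seg x y a) (seg x y b) ∧ R (seg x y b) (seg x y a)) :
    ∃ z ∈ Ico 0 a, R (seg x y z) (seg x y a) ∧ R (seg x y a) (seg x y z) := by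
  -- Mix `a` (with weight `(1 + ε) / 2`) and `b` (with the weight `α'` given by ε-independence)
  -- with `a - η`: as `ε < 1`, the two indifferent mixtures lie on either side of `a`.
  set η := min a ((1 - ε) * (b - a) / 4)
  have hη : 0 < η := lt_min ha (by nlinarith)
  have hηa : η ≤ a := min_le_left _ _
  have hηb : η ≤ (1 - ε) * (b - a) / 4 := min_le_right _ _
  have hsI : a - η ∈ Icc (0 : ℝ) 1 := ⟨by linarith, by linarith⟩
  obtain ⟨α', hα', hlt, h₁, h₂⟩ := hR.indep _ (seg_mem hK hx hy ⟨ha.le, by linarith⟩) _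
    (seg_mem hK hx hy ⟨by linarith, hb⟩) h ((1 + ε) / 2) ⟨by linarith, by linarith⟩ _
    (seg_mem hK hx hy hsI)
  rw [seg_seg, seg_seg] at h₁ h₂
  set z := (1 + ε) / 2 * a + (1 - (1 + ε) / 2) * (a - η) with hz_def
  set w := α' * b + (1 - α') * (a - η) with hw_def
  have hα'ε : (1 - ε) / 2 < α' := by linarith [(abs_lt.1 hlt).2]
  have hz : z ∈ Ico 0 a := by
    have : 0 < (1 - ε) / 2 * η := mul_pos (by linarith) hη
    constructor <;> nlinarith
  have hw : a ≤ w ∧ w ≤ 1 := by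
    have : (1 - ε) / 2 * (b - a + η) ≤ α' * (b - a + η) :=
      mul_le_mul_of_nonneg_right hα'ε.le (by linarith)
    constructor <;> nlinarith [hα'.1, hα'.2]
  have hzI : z ∈ Icc (0 : ℝ) 1 := ⟨hz.1, by linarith [hz.2]⟩
  have hwI : w ∈ Icc (0 : ℝ) 1 := ⟨by linarith, hw.2⟩
  have haw := hR.indiff_seg_of_mem_Icc hK hx hy hzI hwI ⟨hz.2.le, hw.1⟩ ⟨h₁, h₂⟩
  exact ⟨z, hz, hR.indiff_trans (seg_mem hK hx hy hzI) (seg_mem hK hx hy hwI)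
    (seg_mem hK hx hy ⟨ha.le, by linarith⟩) ⟨h₁, h₂⟩ ⟨haw.2, haw.1⟩⟩

section Continuous

variable [ContinuousAdd E] [ContinuousSMul ℝ E]

lemma between_left (hK : Convex ℝ K) {p q : E} (hp : p ∈ K) (hq : q ∈ K) (hpq : R p q) {t : ℝ}
    (ht : t ∈ Icc (0 : ℝ) 1) : R p (seg p q t) := by
  rcases hR.total p hp _ (seg_mem hK hp hq ht) with h | h
  · exact h
  have hsub : Icc 0 t ⊆ Icc (0 : ℝ) 1 := Icc_subset_Icc_right ht.2
  obtain ⟨c, hc, hcp, hpc⟩ := hR.exists_indiff_of_continuousOn ht.1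
    (continuous_seg p q).continuousOn (fun c hc => seg_mem hK hp hq (hsub hc)) hp
    (by simpa using hpq) h
  -- `seg p q t` lies between `seg p q c` and `seg p q 1 = p`, which are indifferent
  have := hR.indiff_seg_of_mem_Icc hK hp hq (hsub hc) (right_mem_Icc.2 zero_le_one)
    ⟨hc.2, ht.2⟩ (by simpa using And.intro hcp hpc)
  simpa using this.2

lemma between_right (hK : Convex ℝ K) {p q : E} (hp : p ∈ K) (hq : q ∈ K) (hpq : R p q) {t : ℝ}
    (ht : t ∈ Icc (0 : ℝ) 1) : R (seg p q t) q := by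
  have := hR.flip.between_left hK hq hp hpq (t := 1 - t) ⟨by linarith [ht.2], by linarith [ht.1]⟩
  rw [← seg_symm] at this
  exact this

lemma seg_mono (hK : Convex ℝ K) {x y : E} (hx : x ∈ K) (hy : y ∈ K) (hxy : R x y) {s t : ℝ}
    (hs : 0 ≤ s) (hst : s ≤ t) (ht : t ≤ 1) : R (seg x y t) (seg x y s) := by
  have htI : t ∈ Icc (0 : ℝ) 1 := ⟨hs.trans hst, ht⟩
  rcases (hs.trans hst).eq_or_lt with rfl | ht0
  · obtain rfl : s = 0 := le_antisymm hst hs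
    exact hR.refl (seg_mem hK hx hy htI)
  have hseg : seg x y s = seg (seg x y t) (seg x y 0) (s / t) := by
    rw [seg_seg]; congr 1; field_simp; ring
  rw [hseg]
  exact hR.between_left hK (seg_mem hK hx hy htI) (seg_mem hK hx hy (left_mem_Icc.2 zero_le_one))
    (by simpa using hR.between_right hK hx hy hxy htI)
    ⟨div_nonneg hs ht0.le, div_le_one_of_le₀ hst ht0.le⟩

lemma convex_lowerContour (hK : Convex ℝ K) {x : E} (hx : x ∈ K) :
    Convex ℝ {p | p ∈ K ∧ R x p} := by
  intro p hp q hq a b ha hb hab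
  obtain rfl : b = 1 - a := by linarith
  have haI : a ∈ Icc (0 : ℝ) 1 := ⟨ha, by linarith⟩
  have hmem := seg_mem hK hp.1 hq.1 haI
  refine ⟨hmem, ?_⟩
  rcases hR.total p hp.1 q hq.1 with h | h
  · exact hR.trans x hx p hp.1 _ hmem hp.2 (hR.between_left hK hp.1 hq.1 h haI)
  · have := hR.between_left hK hq.1 hp.1 h (t := 1 - a) ⟨by linarith, by linarith⟩
    rw [← seg_symm] at this
    exact hR.trans x hx q hq.1 _ hmem hq.2 this

lemma isClosed_setOf_rel_seg (hK : Convex ℝ K) {x y p : E} (hx : x ∈ K) (hy : y ∈ K)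
    (hp : p ∈ K) :
    IsClosed {t | t ∈ Icc (0 : ℝ) 1 ∧ R (seg x y t) p} ∧
      IsClosed {t | t ∈ Icc (0 : ℝ) 1 ∧ R p (seg x y t)} := by
  have hcont := (continuous_seg x y).continuousOn (s := Icc 0 1)
  constructor
  · convert hcont.preimage_isClosed_of_isClosed isClosed_Icc (hR.isClosed p hp).1 using 1
    ext t
    exact ⟨fun h => ⟨h.1, seg_mem hK hx hy h.1, h.2⟩, fun h => ⟨h.1, h.2.2⟩⟩
  · convert hcont.preimage_isClosed_of_isClosed isClosed_Icc (hR.isClosed p hp).2 using 1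
    ext t
    exact ⟨fun h => ⟨h.1, seg_mem hK hx hy h.1, h.2⟩, fun h => ⟨h.1, h.2.2⟩⟩

lemma eq_of_indiff_seg (hK : Convex ℝ K) {x y : E} (hx : x ∈ K) (hy : y ∈ K) (hε : 0 ≤ ε)
    (hε1 : ε < 1) (hyx : ¬ R y x) {s t : ℝ} (hs : s ∈ Icc (0 : ℝ) 1) (ht : t ∈ Icc (0 : ℝ) 1)
    (h : R (seg x y s) (seg x y t) ∧ R (seg x y t) (seg x y s)) : s = t := by
  have hmem : ∀ c ∈ Icc (0 : ℝ) 1, seg x y c ∈ K := fun c hc => seg_mem hK hx hy hc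
  set C := {c | c ∈ Icc (0 : ℝ) 1 ∧ R (seg x y c) (seg x y t) ∧ R (seg x y t) (seg x y c)}
  have hC : IsClosed C := by
    have := hR.isClosed_setOf_rel_seg hK hx hy (hmem t ht)
    convert this.1.inter this.2 using 1
    ext c
    exact ⟨fun h => ⟨⟨h.1, h.2.1⟩, h.1, h.2.2⟩, fun h => ⟨h.1.1, h.1.2, h.2.2⟩⟩
  have hbdd : BddBelow C ∧ BddAbove C := ⟨⟨0, fun c hc => hc.1.1⟩, ⟨1, fun c hc => hc.1.2⟩⟩
  have htC : t ∈ C := ⟨ht, hR.refl (hmem t ht), hR.refl (hmem t ht)⟩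
  have hsC : s ∈ C := ⟨hs, h⟩
  obtain ⟨hAI, hA⟩ := hC.csInf_mem ⟨t, htC⟩ hbdd.1
  obtain ⟨hBI, hB⟩ := hC.csSup_mem ⟨t, htC⟩ hbdd.2
  have hAB : R (seg x y (sInf C)) (seg x y (sSup C)) ∧ R (seg x y (sSup C)) (seg x y (sInf C)) :=
    hR.indiff_trans (hmem _ hAI) (hmem t ht) (hmem _ hBI) hA ⟨hB.2, hB.1⟩
  by_contra hst
  have hlt : sInf C < sSup C := by
    rcases lt_or_gt_of_ne hst with h' | h'
    · exact (csInf_le hbdd.1 hsC).trans_lt (h'.trans_le (le_csSup hbdd.2 htC))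
    · exact (csInf_le hbdd.1 htC).trans_lt (h'.trans_le (le_csSup hbdd.2 hsC))
  -- `C` is the indifference class of `t` on the segment; `exists_lt_indiff_seg`, applied to both
  -- orientations of the segment, shows that it extends from `0` to `1`, so that `y ∼ x`.
  have hA0 : sInf C = 0 := by
    refine le_antisymm (not_lt.1 fun hA0 => ?_) hAI.1
    obtain ⟨z, hz, hzA⟩ := hR.exists_lt_indiff_seg hK hx hy hε hε1 hA0 hlt hBI.2 hAB
    have hzI : z ∈ Icc (0 : ℝ) 1 := ⟨hz.1, hz.2.le.trans hAI.2⟩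
    have hzC : z ∈ C := ⟨hzI, hR.indiff_trans (hmem z hzI) (hmem _ hAI) (hmem t ht) hzA hA⟩
    exact (csInf_le hbdd.1 hzC).not_gt hz.2
  have hB1 : sSup C = 1 := by
    refine le_antisymm hBI.2 (not_lt.1 fun hB1 => ?_)
    rw [seg_symm x y (sInf C), seg_symm x y (sSup C)] at hAB
    obtain ⟨z, hz, hzB⟩ := hR.exists_lt_indiff_seg hK hy hx hε hε1 (by linarith)
      (by linarith) (by linarith [hAI.1]) ⟨hAB.2, hAB.1⟩
    rw [seg_symm y x z, ← seg_symm x y (sSup C)] at hzB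
    have hzI : 1 - z ∈ Icc (0 : ℝ) 1 := ⟨by linarith [hz.2, hBI.1], by linarith [hz.1]⟩
    have hzC : 1 - z ∈ C := ⟨hzI, hR.indiff_trans (hmem _ hzI) (hmem _ hBI) (hmem t ht) hzB hB⟩
    exact (le_csSup hbdd.2 hzC).not_gt (by linarith [hz.2])
  rw [hA0, hB1, seg_zero, seg_one] at hAB
  exact hyx hAB.1

section Utility

variable (hK : Convex ℝ K) {x y : E} (hx : x ∈ K) (hy : y ∈ K)
  (hbest : ∀ p ∈ K, R x p) (hworst : ∀ p ∈ K, R p y)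
include hK hx hy hbest hworst

lemma segUtility_spec {p : E} (hp : p ∈ K) :
    segUtility R x y p ∈ Icc (0 : ℝ) 1 ∧ R p (seg x y (segUtility R x y p)) ∧
      R (seg x y (segUtility R x y p)) p := by
  have hbdd : BddAbove {t | t ∈ Icc (0 : ℝ) 1 ∧ R p (seg x y t)} := ⟨1, fun t ht => ht.1.2⟩
  obtain ⟨hI, hpu⟩ := (hR.isClosed_setOf_rel_seg hK hx hy hp).2.csSup_mem
    ⟨0, left_mem_Icc.2 zero_le_one, by simpa using hworst p hp⟩ hbdd
  obtain ⟨c, hc, hcp, hpc⟩ := hR.exists_indiff_of_continuousOn zero_le_one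
    (continuous_seg x y).continuousOn (fun c hc => seg_mem hK hx hy hc) hp
    (by simpa using hworst p hp) (by simpa using hbest p hp)
  refine ⟨hI, hpu, hR.trans _ (seg_mem hK hx hy hI) _ (seg_mem hK hx hy hc) p hp ?_ hcp⟩
  exact hR.seg_mono hK hx hy (hbest y hy) hc.1 (le_csSup hbdd ⟨hc, hpc⟩) hI.2

lemma rel_iff_segUtility_le {p q : E} (hp : p ∈ K) (hq : q ∈ K) :
    R p q ↔ segUtility R x y q ≤ segUtility R x y p := by
  obtain ⟨hpI, hpu, -⟩ := hR.segUtility_spec hK hx hy hbest hworst hp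
  obtain ⟨hqI, -, huq⟩ := hR.segUtility_spec hK hx hy hbest hworst hq
  refine ⟨fun hpq => ?_, fun hle => ?_⟩
  · refine csSup_le_csSup ⟨1, fun t ht => ht.1.2⟩
      ⟨0, left_mem_Icc.2 zero_le_one, by simpa using hworst q hq⟩ fun t ht => ?_
    exact ⟨ht.1, hR.trans p hp q hq _ (seg_mem hK hx hy ht.1) hpq ht.2⟩
  · have hmono := hR.seg_mono hK hx hy (hbest y hy) hqI.1 hle hpI.2
    exact hR.trans p hp _ (seg_mem hK hx hy hpI) q hq hpu
      (hR.trans _ (seg_mem hK hx hy hpI) _ (seg_mem hK hx hy hqI) q hq hmono huq)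

lemma segUtility_eq_iff {p q : E} (hp : p ∈ K) (hq : q ∈ K) :
    segUtility R x y p = segUtility R x y q ↔ R p q ∧ R q p := by
  rw [le_antisymm_iff, hR.rel_iff_segUtility_le hK hx hy hbest hworst hp hq,
    hR.rel_iff_segUtility_le hK hx hy hbest hworst hq hp, and_comm]

lemma segUtility_seg (hε : 0 ≤ ε) (hε1 : ε < 1) (hyx : ¬ R y x) {t : ℝ}
    (ht : t ∈ Icc (0 : ℝ) 1) : segUtility R x y (seg x y t) = t := by
  obtain ⟨hI, h₁, h₂⟩ := hR.segUtility_spec hK hx hy hbest hworst (seg_mem hK hx hy ht)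
  exact hR.eq_of_indiff_seg hK hx hy hε hε1 hyx hI ht ⟨h₂, h₁⟩

lemma image_segUtility (hε : 0 ≤ ε) (hε1 : ε < 1) (hyx : ¬ R y x) :
    segUtility R x y '' K = Icc 0 1 :=
  Subset.antisymm (image_subset_iff.2 fun _ hp => (hR.segUtility_spec hK hx hy hbest hworst hp).1)
    fun t ht => ⟨seg x y t, seg_mem hK hx hy ht,
      hR.segUtility_seg hK hx hy hbest hworst hε hε1 hyx ht⟩

lemma abs_segUtility_seg_sub_le (hε : 0 ≤ ε) (hε1 : ε < 1) (hyx : ¬ R y x) {p q : E}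
    (hp : p ∈ K) (hq : q ∈ K) {t : ℝ} (ht : t ∈ Icc (0 : ℝ) 1) :
    |segUtility R x y (seg p q t) -
      (t * segUtility R x y p + (1 - t) * segUtility R x y q)| ≤ 2 * ε := by
  obtain ⟨hP, hpP, hPp⟩ := hR.segUtility_spec hK hx hy hbest hworst hp
  obtain ⟨hQ, hqQ, hQq⟩ := hR.segUtility_spec hK hx hy hbest hworst hq
  set P := segUtility R x y p
  set Q := segUtility R x y q
  have hmP := seg_mem hK hx hy hP
  have hmQ := seg_mem hK hx hy hQ
  -- Replace `p` by its position on the segment, then `q`; each step moves the weight by `< ε`.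
  obtain ⟨t₁, ht₁, hlt₁, h₁⟩ := hR.indep p hp _ hmP ⟨hpP, hPp⟩ t ht q hq
  obtain ⟨s, hs, hlt₂, h₂⟩ := hR.indep q hq _ hmQ ⟨hqQ, hQq⟩ (1 - t₁)
    ⟨by linarith [ht₁.2], by linarith [ht₁.1]⟩ _ hmP
  rw [seg_symm (seg x y P) q t₁] at h₁
  rw [seg_seg] at h₂
  have hX : s * Q + (1 - s) * P ∈ Icc (0 : ℝ) 1 := by
    simpa using convex_Icc (0 : ℝ) 1 hQ hP hs.1 (by linarith [hs.2]) (by ring)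
  have hmix := seg_mem hK hp hq ht
  have hval : segUtility R x y (seg p q t) = s * Q + (1 - s) * P := by
    rw [← hR.segUtility_seg hK hx hy hbest hworst hε hε1 hyx hX,
      hR.segUtility_eq_iff hK hx hy hbest hworst hmix (seg_mem hK hx hy hX)]
    exact hR.indiff_trans hmix (seg_mem hK hq hmP ⟨by linarith [ht₁.2], by linarith [ht₁.1]⟩)
      (seg_mem hK hx hy hX) h₁ h₂
  rw [hval]
  calc |s * Q + (1 - s) * P - (t * P + (1 - t) * Q)| = |s - (1 - t)| * |Q - P| := by
        rw [← abs_mul]; ring_nf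
    _ ≤ 2 * ε * 1 := by
        gcongr
        · rw [abs_le]; constructor <;> linarith [abs_lt.1 hlt₁, abs_lt.1 hlt₂]
        · rw [abs_le]; constructor <;> linarith [hP.1, hP.2, hQ.1, hQ.2]
    _ = 2 * ε := mul_one _

lemma exists_utility_image_eq_Icc (hyx : ¬ R y x) :
    ∃ u : E → ℝ, (∀ p ∈ K, ∀ q ∈ K, R p q ↔ u q ≤ u p) ∧ u '' K = Icc 0 1 := by
  have hmem : ∀ t ∈ Icc (0 : ℝ) 1, seg x y t ∈ K := fun t ht => seg_mem hK hx hy ht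
  have hiff : ∀ {p q : E}, p ∈ K → q ∈ K → (R p q ↔ segUtility R x y q ≤ segUtility R x y p) :=
    hR.rel_iff_segUtility_le hK hx hy hbest hworst
  have heq : ∀ {p q : E}, p ∈ K → q ∈ K →
      (segUtility R x y p = segUtility R x y q ↔ R p q ∧ R q p) :=
    hR.segUtility_eq_iff hK hx hy hbest hworst
  set f := fun t => segUtility R x y (seg x y t)
  have hf : MonotoneOn f (Icc 0 1) := fun s hs t ht hst =>
    (hiff (hmem t ht) (hmem s hs)).1 (hR.seg_mono hK hx hy (hbest y hy) hs.1 hst ht.2)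
  have hfib : ∀ t ∈ Icc (0 : ℝ) 1, IsClosed {s | s ∈ Icc 0 1 ∧ f s = f t} := by
    intro t ht
    have := hR.isClosed_setOf_rel_seg hK hx hy (hmem t ht)
    convert this.1.inter this.2 using 1
    ext s
    constructor
    · rintro ⟨hs, h⟩
      have := (heq (hmem s hs) (hmem t ht)).1 h
      exact ⟨⟨hs, this.1⟩, hs, this.2⟩
    · rintro ⟨⟨hs, h₁⟩, -, h₂⟩
      exact ⟨hs, (heq (hmem s hs) (hmem t ht)).2 ⟨h₁, h₂⟩⟩
  have hf01 : f 0 < f 1 := by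
    simp only [f, seg_zero, seg_one]
    exact lt_of_not_ge fun h => hyx ((hiff hy hx).2 h)
  obtain ⟨g, hg, hgimg⟩ := exists_strictMonoOn_image_eq_Icc zero_le_one hf hfib hf01
  have hval : ∀ p ∈ K, segUtility R x y p ∈ f '' Icc 0 1 := fun p hp => by
    obtain ⟨hI, h₁, h₂⟩ := hR.segUtility_spec hK hx hy hbest hworst hp
    exact ⟨_, hI, (heq (hmem _ hI) hp).2 ⟨h₂, h₁⟩⟩
  have himg : segUtility R x y '' K = f '' Icc 0 1 :=
    Subset.antisymm (image_subset_iff.2 hval) (by rintro _ ⟨t, ht, rfl⟩; exact ⟨_, hmem t ht, rfl⟩)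
  refine ⟨g ∘ segUtility R x y, fun p hp q hq => ?_, by rw [image_comp, himg, hgimg]⟩
  rw [hiff hp hq]
  exact (hg.le_iff_le (hval q hq) (hval p hp)).symm

end Utility

end Continuous

end IsEpsIndependentPref

end Preference

section Simplex

variable {ι : Type*} [Fintype ι] [DecidableEq ι]

def affineInterp (f : (ι → ℝ) → ℝ) (p : ι → ℝ) : ℝ := ∑ i, p i * f (Pi.single i 1)

lemma affineInterp_single (f : (ι → ℝ) → ℝ) (j : ι) :
    affineInterp f (Pi.single j 1) = f (Pi.single j 1) := by
  simp [affineInterp, Pi.single_apply]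

lemma affineInterp_seg (f : (ι → ℝ) → ℝ) (p q : ι → ℝ) (t : ℝ) :
    affineInterp f (seg p q t) = t * affineInterp f p + (1 - t) * affineInterp f q := by
  simp only [affineInterp, seg, Pi.add_apply, Pi.smul_apply, smul_eq_mul, Finset.mul_sum,
    ← Finset.sum_add_distrib]
  exact Finset.sum_congr rfl fun i _ => by ring

lemma image_affineInterp_stdSimplex {f : (ι → ℝ) → ℝ} {b w : ι}
    (hb : ∀ i, f (Pi.single i 1) ≤ f (Pi.single b 1))
    (hw : ∀ i, f (Pi.single w 1) ≤ f (Pi.single i 1)) :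
    affineInterp f '' stdSimplex ℝ ι = Icc (f (Pi.single w 1)) (f (Pi.single b 1)) := by
  refine Subset.antisymm (image_subset_iff.2 fun p hp => ⟨?_, ?_⟩) fun v hv => ?_
  · calc f (Pi.single w 1) = ∑ i, p i * f (Pi.single w 1) := by rw [← Finset.sum_mul, hp.2, one_mul]
      _ ≤ _ := Finset.sum_le_sum fun i _ => mul_le_mul_of_nonneg_left (hw i) (hp.1 i)
  · calc affineInterp f p ≤ ∑ i, p i * f (Pi.single b 1) :=
          Finset.sum_le_sum fun i _ => mul_le_mul_of_nonneg_left (hb i) (hp.1 i)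
      _ = f (Pi.single b 1) := by rw [← Finset.sum_mul, hp.2, one_mul]
  · obtain ⟨a, ha, rfl⟩ := exists_mem_Icc_mul_add_mul_eq hv
    exact ⟨_, seg_mem (convex_stdSimplex ℝ ι) (single_mem_stdSimplex ℝ w)
      (single_mem_stdSimplex ℝ b) ha, by simp [affineInterp_seg, affineInterp_single]⟩

lemma eq_single_of_apply_eq_one {p : ι → ℝ} (hp : p ∈ stdSimplex ℝ ι) {j : ι} (hj : p j = 1) :
    p = Pi.single j 1 := by
  have hrest : ∑ i ∈ Finset.univ.erase j, p i = 0 := by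
    linarith [Finset.add_sum_erase _ p (Finset.mem_univ j), hp.2]
  ext i
  rcases eq_or_ne i j with rfl | hij
  · simp [hj]
  · rw [Pi.single_eq_of_ne hij]
    exact (Finset.sum_eq_zero_iff_of_nonneg fun i _ => hp.1 i).1 hrest i (by simp [hij])

lemma exists_seg_single_eq {p : ι → ℝ} (hp : p ∈ stdSimplex ℝ ι) {j : ι} (hj : p j < 1) :
    ∃ q ∈ stdSimplex ℝ ι, q j = 0 ∧ (∀ i, p i = 0 → q i = 0) ∧
      seg (Pi.single j 1) q (p j) = p := by
  have h1 : 0 < 1 - p j := by linarith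
  set q : ι → ℝ := (1 - p j)⁻¹ • (p - p j • Pi.single j 1)
  have hq : ∀ i, i ≠ j → q i = (1 - p j)⁻¹ * p i := fun i hij => by simp [q, hij]
  have hqj : q j = 0 := by simp [q]
  refine ⟨q, ⟨fun i => ?_, ?_⟩, hqj, fun i hi => ?_, ?_⟩
  · rcases eq_or_ne i j with rfl | hij
    · exact hqj.ge
    · rw [hq i hij]; exact mul_nonneg (inv_nonneg.2 h1.le) (hp.1 i)
  · simp only [q, Pi.smul_apply, Pi.sub_apply, smul_eq_mul, ← Finset.mul_sum,
      Finset.sum_sub_distrib, ← Finset.mul_sum, hp.2]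
    simp only [Finset.sum_pi_single', Finset.mem_univ, if_true, mul_one]
    field_simp
  · rcases eq_or_ne i j with rfl | hij
    · exact hqj
    · rw [hq i hij, hi, mul_zero]
  · simp only [seg, q, smul_smul, mul_inv_cancel₀ h1.ne', one_smul]
    abel

theorem abs_sub_affineInterp_le {f : (ι → ℝ) → ℝ} {δ : ℝ}
    (hf : ∀ p ∈ stdSimplex ℝ ι, ∀ q ∈ stdSimplex ℝ ι, ∀ t ∈ Icc (0 : ℝ) 1,
      |f (seg p q t) - (t * f p + (1 - t) * f q)| ≤ δ)
    {p : ι → ℝ} (hp : p ∈ stdSimplex ℝ ι) :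
    |f p - affineInterp f p| ≤ δ * (Fintype.card ι - 1) := by
  suffices ∀ s : Finset ι, ∀ p ∈ stdSimplex ℝ ι, (∀ i ∉ s, p i = 0) →
      |f p - affineInterp f p| ≤ δ * (s.card - 1) from
    this Finset.univ p hp (by simp)
  intro s
  induction s using Finset.induction_on with
  | empty =>
    intro p hp hzero
    simpa [hzero] using hp.2
  | insert j s hj ih =>
    intro p hp hsupp
    rw [Finset.card_insert_of_notMem hj, Nat.cast_add_one, add_sub_cancel_right]
    rcases (mem_Icc_of_mem_stdSimplex hp j).2.lt_or_eq with hlt | heq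
    · obtain ⟨q, hq, hqj, hqsupp, hpq⟩ := exists_seg_single_eq hp hlt
      have hqs : ∀ i ∉ s, q i = 0 := fun i hi => by
        rcases eq_or_ne i j with rfl | hij
        · exact hqj
        · exact hqsupp i (hsupp i (by simp [hij, hi]))
      have ih' := ih q hq hqs
      set t := p j
      have ht : t ∈ Icc (0 : ℝ) 1 := ⟨hp.1 j, hlt.le⟩
      have hsplit : f p - affineInterp f p =
          (f (seg (Pi.single j 1) q t) - (t * f (Pi.single j 1) + (1 - t) * f q)) +
            (1 - t) * (f q - affineInterp f q) := by
        rw [← hpq, affineInterp_seg, affineInterp_single]; ring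
      rw [hsplit]
      calc _ ≤ δ + (1 - t) * (δ * (s.card - 1)) := by
            refine (abs_add_le _ _).trans
              (add_le_add (hf _ (single_mem_stdSimplex ℝ j) q hq t ht) ?_)
            rw [abs_mul, abs_of_nonneg (by linarith [ht.2])]
            exact mul_le_mul_of_nonneg_left ih' (by linarith [ht.2])
        _ ≤ δ * s.card := by nlinarith [(abs_nonneg _).trans ih', ht.1]
    · rw [eq_single_of_apply_eq_one hp heq, affineInterp_single, sub_self, abs_zero]
      have hδ : 0 ≤ δ := (abs_nonneg _).trans (hf p hp p hp 0 (left_mem_Icc.2 zero_le_one))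
      positivity

lemma IsEpsIndependentPref.exists_single_best [Nonempty ι] {ε : ℝ}
    {R : (ι → ℝ) → (ι → ℝ) → Prop} (hR : IsEpsIndependentPref (stdSimplex ℝ ι) ε R) :
    ∃ b, ∀ p ∈ stdSimplex ℝ ι, R (Pi.single b 1) p := by
  have hK := convex_stdSimplex ℝ ι
  have hδ : ∀ i : ι, Pi.single i (1 : ℝ) ∈ stdSimplex ℝ ι := single_mem_stdSimplex ℝ
  let r : ι → ι → Prop := fun i j => R (Pi.single i 1) (Pi.single j 1) ∧
    ¬ R (Pi.single j 1) (Pi.single i 1)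
  have : IsTrans ι r := ⟨fun i j k hij hjk =>
    ⟨hR.trans _ (hδ i) _ (hδ j) _ (hδ k) hij.1 hjk.1,
      fun hki => hjk.2 (hR.trans _ (hδ k) _ (hδ i) _ (hδ j) hki hij.1)⟩⟩
  have : Std.Irrefl r := ⟨fun i h => h.2 h.1⟩
  obtain ⟨b, -, hb⟩ := (Finite.wellFounded_of_trans_of_irrefl r).has_min univ
    ⟨Classical.arbitrary ι, trivial⟩
  have hbv : ∀ i, R (Pi.single b 1) (Pi.single i 1) := fun i => by
    by_contra h
    exact hb i trivial ⟨(hR.total _ (hδ b) _ (hδ i)).resolve_left h, h⟩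
  refine ⟨b, fun p hp => ?_⟩
  rw [← convexHull_rangle_single_eq_stdSimplex] at hp
  refine (convexHull_min ?_ (hR.convex_lowerContour hK (hδ b)) hp).2
  exact range_subset_iff.2 fun i => ⟨hδ i, hbv i⟩

lemma IsEpsIndependentPref.exists_best_worst [Nonempty ι] {ε : ℝ}
    {R : (ι → ℝ) → (ι → ℝ) → Prop} (hR : IsEpsIndependentPref (stdSimplex ℝ ι) ε R)
    (hnontriv : ∃ p ∈ stdSimplex ℝ ι, ∃ q ∈ stdSimplex ℝ ι, R p q ∧ ¬ R q p) :
    ∃ b w, (∀ p ∈ stdSimplex ℝ ι, R (Pi.single b 1) p) ∧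
      (∀ p ∈ stdSimplex ℝ ι, R p (Pi.single w 1)) ∧ ¬ R (Pi.single w 1) (Pi.single b 1) := by
  have hδ : ∀ i : ι, Pi.single i (1 : ℝ) ∈ stdSimplex ℝ ι := single_mem_stdSimplex ℝ
  obtain ⟨b, hb⟩ := hR.exists_single_best
  obtain ⟨w, hw⟩ := hR.flip.exists_single_best
  refine ⟨b, w, hb, hw, fun h => ?_⟩
  obtain ⟨p, hp, q, hq, -, hqp⟩ := hnontriv
  exact hqp (hR.trans q hq _ (hδ w) p hp (hw q hq) (hR.trans _ (hδ w) _ (hδ b) p hp h (hb p hp)))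

lemma IsEpsIndependentPref.exists_utility_abs_sub_affineInterp_le {ε : ℝ}
    {R : (ι → ℝ) → (ι → ℝ) → Prop} (hR : IsEpsIndependentPref (stdSimplex ℝ ι) ε R)
    (hε : 0 ≤ ε) (hε1 : ε < 1) {b w : ι} (hb : ∀ p ∈ stdSimplex ℝ ι, R (Pi.single b 1) p)
    (hw : ∀ p ∈ stdSimplex ℝ ι, R p (Pi.single w 1)) (hwb : ¬ R (Pi.single w 1) (Pi.single b 1)) :
    ∃ u : (ι → ℝ) → ℝ, (∀ p ∈ stdSimplex ℝ ι, ∀ q ∈ stdSimplex ℝ ι, R p q ↔ u q ≤ u p) ∧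
      u '' stdSimplex ℝ ι = Icc 0 1 ∧
      ∀ p ∈ stdSimplex ℝ ι, |u p - affineInterp u p| ≤ 2 * ε * (Fintype.card ι - 1) := by
  have hK := convex_stdSimplex ℝ ι
  have hb' := single_mem_stdSimplex ℝ b
  have hw' := single_mem_stdSimplex ℝ w
  exact ⟨segUtility R (Pi.single b 1) (Pi.single w 1),
    fun p hp q hq => hR.rel_iff_segUtility_le hK hb' hw' hb hw hp hq,
    hR.image_segUtility hK hb' hw' hb hw hε hε1 hwb,
    fun p hp => abs_sub_affineInterp_le (fun p hp q hq t ht =>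
      hR.abs_segUtility_seg_sub_le hK hb' hw' hb hw hε hε1 hwb hp hq ht) hp⟩

lemma image_affineInterp_eq_Icc {R : (ι → ℝ) → (ι → ℝ) → Prop} {u : (ι → ℝ) → ℝ} {b w : ι}
    (hrep : ∀ p ∈ stdSimplex ℝ ι, ∀ q ∈ stdSimplex ℝ ι, R p q ↔ u q ≤ u p)
    (himg : u '' stdSimplex ℝ ι = Icc 0 1) (hb : ∀ p ∈ stdSimplex ℝ ι, R (Pi.single b 1) p)
    (hw : ∀ p ∈ stdSimplex ℝ ι, R p (Pi.single w 1)) :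
    affineInterp u '' stdSimplex ℝ ι = Icc 0 1 := by
  have hδ : ∀ i : ι, Pi.single i (1 : ℝ) ∈ stdSimplex ℝ ι := single_mem_stdSimplex ℝ
  have hub : IsGreatest (u '' stdSimplex ℝ ι) (u (Pi.single b 1)) :=
    ⟨mem_image_of_mem u (hδ b), forall_mem_image.2 fun p hp => (hrep _ (hδ b) p hp).1 (hb p hp)⟩
  have huw : IsLeast (u '' stdSimplex ℝ ι) (u (Pi.single w 1)) :=
    ⟨mem_image_of_mem u (hδ w), forall_mem_image.2 fun p hp => (hrep p hp _ (hδ w)).1 (hw p hp)⟩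
  rw [himg] at hub huw
  rw [image_affineInterp_stdSimplex (fun i => (hrep _ (hδ b) _ (hδ i)).1 (hb _ (hδ i)))
    (fun i => (hrep _ (hδ i) _ (hδ w)).1 (hw _ (hδ i))), huw.unique (isLeast_Icc zero_le_one),
    hub.unique (isGreatest_Icc zero_le_one)]

end Simplex

end EpsIndependence

open EpsIndependence in
/-- Theorem `thm:EU2`: a nontrivial continuous weak order on the simplex
satisfying ε-Independence admits a representation `u` and an affine `ℓ`, both onto
`[0,1]`, agreeing on degenerate lotteries, with `|u - ℓ| < (d+1)²·ε`. -/
theorem stmt_3 (d : ℕ) (hd : 1 ≤ d) (ε : ℝ) (hε : 0 < ε)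
    (R : (Fin (d + 1) → ℝ) → (Fin (d + 1) → ℝ) → Prop)
    (Δ : Set (Fin (d + 1) → ℝ)) (hΔ : Δ = stdSimplex ℝ (Fin (d + 1)))
    (hcomp : ∀ p ∈ Δ, ∀ q ∈ Δ, R p q ∨ R q p)
    (htrans : ∀ p ∈ Δ, ∀ q ∈ Δ, ∀ r ∈ Δ, R p q → R q r → R p r)
    (hcont : ∀ p ∈ Δ, IsClosed {q | q ∈ Δ ∧ R q p} ∧ IsClosed {q | q ∈ Δ ∧ R p q})
    (hnontriv : ∃ p ∈ Δ, ∃ q ∈ Δ, R p q ∧ ¬ R q p)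
    (hindep : ∀ p ∈ Δ, ∀ q ∈ Δ, (R p q ∧ R q p) →
      ∀ α ∈ Set.Icc (0 : ℝ) 1, ∀ r ∈ Δ, ∃ α' ∈ Set.Icc (0 : ℝ) 1,
        |α - α'| < ε ∧
        (R (α • p + (1 - α) • r) (α' • q + (1 - α') • r) ∧
          R (α' • q + (1 - α') • r) (α • p + (1 - α) • r))) :
    ∃ u ℓ : (Fin (d + 1) → ℝ) → ℝ,
      -- (1)
      (∀ p ∈ Δ, ∀ q ∈ Δ, (R p q ↔ u q ≤ u p)) ∧
      u '' Δ = Set.Icc 0 1 ∧ ℓ '' Δ = Set.Icc 0 1 ∧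
      (∀ i : Fin (d + 1), u (Pi.single i 1) = ℓ (Pi.single i 1)) ∧
      -- (2) ℓ is affine
      (∀ p ∈ Δ, ∀ q ∈ Δ, ∀ t ∈ Set.Icc (0 : ℝ) 1,
        ℓ (t • p + (1 - t) • q) = t * ℓ p + (1 - t) * ℓ q) ∧
      -- (3)
      (∀ p ∈ Δ, |u p - ℓ p| < ((d : ℝ) + 1) ^ 2 * ε) := by
  subst hΔ
  have hR : IsEpsIndependentPref (stdSimplex ℝ (Fin (d + 1))) ε R :=
    ⟨hcomp, htrans, hcont, hindep⟩
  obtain ⟨b, w, hb, hw, hwb⟩ := hR.exists_best_worst hnontriv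
  obtain ⟨u, hrep, himg, hclose⟩ : ∃ u : (Fin (d + 1) → ℝ) → ℝ,
      (∀ p ∈ stdSimplex ℝ _, ∀ q ∈ stdSimplex ℝ _, R p q ↔ u q ≤ u p) ∧
      u '' stdSimplex ℝ _ = Icc 0 1 ∧
      (ε < 1 → ∀ p ∈ stdSimplex ℝ _, |u p - affineInterp u p| ≤ 2 * ε * d) := by
    rcases lt_or_ge ε 1 with hε1 | hε1
    · obtain ⟨u, hrep, himg, hclose⟩ :=
        hR.exists_utility_abs_sub_affineInterp_le hε.le hε1 hb hw hwb
      exact ⟨u, hrep, himg, fun _ p hp => by simpa using hclose p hp⟩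
    · obtain ⟨u, hrep, himg⟩ := hR.exists_utility_image_eq_Icc (convex_stdSimplex ℝ _)
        (single_mem_stdSimplex ℝ b) (single_mem_stdSimplex ℝ w) hb hw hwb
      exact ⟨u, hrep, himg, fun h => absurd h hε1.not_gt⟩
  have hℓ := image_affineInterp_eq_Icc hrep himg hb hw
  refine ⟨u, affineInterp u, hrep, himg, hℓ, fun i => (affineInterp_single u i).symm,
    fun p _ q _ t _ => affineInterp_seg u p q t, fun p hp => ?_⟩
  have hd' : (1 : ℝ) ≤ d := by exact_mod_cast hd
  rcases lt_or_ge ε 1 with hε1 | hε1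
  · exact (hclose hε1 p hp).trans_lt
      (by nlinarith [mul_pos hε (by positivity : (0 : ℝ) < d ^ 2 + 1)])
  · have hu := himg ▸ mem_image_of_mem u hp
    have hℓp := hℓ ▸ mem_image_of_mem (affineInterp u) hp
    calc |u p - affineInterp u p| ≤ 1 :=
          abs_sub_le_iff.2 ⟨by linarith [hu.2, hℓp.1], by linarith [hu.1, hℓp.2]⟩
      _ < ((d : ℝ) + 1) ^ 2 * ε := by nlinarith
end

section
/- Let ε > 0 and let ≽ be a weak order on the simplex Δ ⊆ ℝ^{d+1} satisfying ε-Independence: if p ∼ q, α ∈ [0,1] and r ∈ Δ, then there is α' ∈ [0,1] with |α−α'| < ε such that αp+(1−α)r ∼ α'q+(1−α')r. Suppose p_k ∼ q_k for k = 1,…,K, and let λ₁,…,λ_K ≥ 0 with Σ_{k=1}^K λ_k = 1. Then there exist μ₁,…,μ_K ≥ 0 with Σ_{k=1}^K μ_k = 1 and |λ_k − μ_k| < K·ε for every k, such that Σ_{k=1}^K λ_k p_k ∼ Σ_{k=1}^K μ_k q_k. -/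
/-- Lemma `lem:approx0`: under ε-Independence, if `p k ∼ q k` for
`k = 1,…,K` then any convex combination `∑ λ k • p k` is indifferent to some
`∑ μ k • q k` with `|λ k - μ k| < K·ε`. -/
theorem stmt_4 (d : ℕ) (hd : 1 ≤ d) (ε : ℝ) (hε : 0 < ε)
    (R : (Fin (d + 1) → ℝ) → (Fin (d + 1) → ℝ) → Prop)
    (Δ : Set (Fin (d + 1) → ℝ)) (hΔ : Δ = stdSimplex ℝ (Fin (d + 1)))
    (hcomp : ∀ p ∈ Δ, ∀ q ∈ Δ, R p q ∨ R q p)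
    (htrans : ∀ p ∈ Δ, ∀ q ∈ Δ, ∀ r ∈ Δ, R p q → R q r → R p r)
    (hindep : ∀ p ∈ Δ, ∀ q ∈ Δ, (R p q ∧ R q p) →
      ∀ α ∈ Set.Icc (0 : ℝ) 1, ∀ r ∈ Δ, ∃ α' ∈ Set.Icc (0 : ℝ) 1,
        |α - α'| < ε ∧
        (R (α • p + (1 - α) • r) (α' • q + (1 - α') • r) ∧
          R (α' • q + (1 - α') • r) (α • p + (1 - α) • r)))
    (K : ℕ) (p q : Fin K → (Fin (d + 1) → ℝ))
    (hp : ∀ k, p k ∈ Δ) (hq : ∀ k, q k ∈ Δ)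
    (hsim : ∀ k, R (p k) (q k) ∧ R (q k) (p k))
    (l : Fin K → ℝ) (hl : ∀ k, 0 ≤ l k) (hl1 : ∑ k, l k = 1) :
    ∃ μ : Fin K → ℝ, (∀ k, 0 ≤ μ k) ∧ ∑ k, μ k = 1 ∧
      (∀ k, |l k - μ k| < (K : ℝ) * ε) ∧
      (R (∑ k, l k • p k) (∑ k, μ k • q k) ∧ R (∑ k, μ k • q k) (∑ k, l k • p k)) := by
  subst hΔ
  have hK : 1 ≤ K := by
    by_contra h
    push_neg at h
    interval_cases K
    simp at hl1
  set x : ℕ → Fin K → (Fin (d + 1) → ℝ) := fun t j => if (j : ℕ) < t then q j else p j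
    with hxdef
  set mix : ℕ → (Fin K → ℝ) → (Fin (d + 1) → ℝ) := fun t c => ∑ j, c j • x t j with hmixdef
  have hxmem : ∀ t j, x t j ∈ stdSimplex ℝ (Fin (d + 1)) := by
    intro t j
    simp only [hxdef]
    split
    · exact hq j
    · exact hp j
  have hmem : ∀ t (c : Fin K → ℝ), (∀ j, 0 ≤ c j) → ∑ j, c j = 1 →
      mix t c ∈ stdSimplex ℝ (Fin (d + 1)) := by
    intro t c hc hc1
    exact (convex_stdSimplex ℝ _).sum_mem (fun i _ => hc i) hc1 (fun i _ => hxmem t i)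
  have key : ∀ m : ℕ, m ≤ K → ∀ c : Fin K → ℝ, (∀ j, 0 ≤ c j) → ∑ j, c j = 1 →
      ∃ μ : Fin K → ℝ, (∀ j, 0 ≤ μ j) ∧ ∑ j, μ j = 1 ∧
        ((∀ j, |c j - μ j| < (m : ℝ) * ε) ∨ μ = c) ∧
        R (mix (K - m) c) (mix K μ) ∧ R (mix K μ) (mix (K - m) c) := by
    intro m
    induction m with
    | zero =>
      intro _ c hc hc1
      have hxm := hmem K c hc hc1
      have hRxx : R (mix K c) (mix K c) := (hcomp _ hxm _ hxm).elim id id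
      exact ⟨c, hc, hc1, Or.inr rfl, by simpa using hRxx, by simpa using hRxx⟩
    | succ m ih =>
      intro hm c hc hc1
      set t := K - (m + 1) with ht
      have htK : t < K := by omega
      set k : Fin K := ⟨t, htK⟩ with hk
      have hKm : K - m = t + 1 := by omega
      have hck1 : c k ≤ 1 := by
        calc c k ≤ ∑ j, c j := Finset.single_le_sum (fun j _ => hc j) (Finset.mem_univ k)
        _ = 1 := hc1
      have hsum_erase : ∑ j ∈ Finset.univ.erase k, c j = 1 - c k := by
        have h := Finset.add_sum_erase Finset.univ c (Finset.mem_univ k)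
        rw [hc1] at h
        linarith
      by_cases h1 : c k = 1
      · -- degenerate case: all mass on coordinate k
        have hzero : ∀ j ∈ Finset.univ.erase k, c j = 0 := by
          have hs0 : ∑ j ∈ Finset.univ.erase k, c j = 0 := by rw [hsum_erase, h1]; ring
          exact (Finset.sum_eq_zero_iff_of_nonneg (fun j _ => hc j)).mp hs0
        have hmixeq : ∀ s, mix s c = x s k := by
          intro s
          show ∑ j, c j • x s j = x s k
          rw [← Finset.add_sum_erase _ _ (Finset.mem_univ k),
            Finset.sum_eq_zero (fun j hj => by rw [hzero j hj, zero_smul]), h1, one_smul,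
            add_zero]
        have hmix_t : mix t c = p k := by
          rw [hmixeq t]
          simp [hxdef, hk]
        have hmix_t1 : mix (t + 1) c = q k := by
          rw [hmixeq (t + 1)]
          simp [hxdef, hk]
        obtain ⟨μ, hμ0, hμ1, hμd, hR1, hR2⟩ := ih (by omega) c hc hc1
        rw [hKm, hmix_t1] at hR1 hR2
        have hmixKμ := hmem K μ hμ0 hμ1
        refine ⟨μ, hμ0, hμ1, ?_, ?_, ?_⟩
        · rcases hμd with hlt | heq
          · left
            intro j
            calc |c j - μ j| < (m : ℝ) * ε := hlt j
              _ ≤ ((m + 1 : ℕ) : ℝ) * ε := by push_cast; nlinarith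
          · exact Or.inr heq
        · rw [hmix_t]
          exact htrans _ (hp k) _ (hq k) _ hmixKμ (hsim k).1 hR1
        · rw [hmix_t]
          exact htrans _ hmixKμ _ (hq k) _ (hp k) hR2 (hsim k).2
      · -- main case: c k < 1
        have hα : (0 : ℝ) < 1 - c k := by
          have : c k < 1 := lt_of_le_of_ne hck1 h1
          linarith
        set S := ∑ j ∈ Finset.univ.erase k, c j • x t j with hS
        set r := (1 - c k)⁻¹ • S with hr
        have hrs : (1 - c k) • r = S := smul_inv_smul₀ (ne_of_gt hα) S
        have hrmem : r ∈ stdSimplex ℝ (Fin (d + 1)) := by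
          have hre : r = ∑ j ∈ Finset.univ.erase k, ((1 - c k)⁻¹ * c j) • x t j := by
            rw [hr, hS, Finset.smul_sum]
            exact Finset.sum_congr rfl fun j _ => by rw [smul_smul]
          rw [hre]
          refine (convex_stdSimplex ℝ _).sum_mem ?_ ?_ fun i _ => hxmem t i
          · exact fun i _ => mul_nonneg (inv_nonneg.mpr hα.le) (hc i)
          · rw [← Finset.mul_sum, hsum_erase]
            field_simp
        have hmix_t : mix t c = c k • p k + (1 - c k) • r := by
          have h2 : mix t c = c k • x t k + S := by
            show ∑ j, c j • x t j = _
            rw [← Finset.add_sum_erase _ _ (Finset.mem_univ k), hS]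
          rw [h2, hrs]
          simp [hxdef, hk]
        obtain ⟨α', hα'Icc, hlt, hR1, hR2⟩ :=
          hindep (p k) (hp k) (q k) (hq k) (hsim k) (c k) ⟨hc k, hck1⟩ r hrmem
        set c' : Fin K → ℝ := fun j => if j = k then α' else (1 - α') * (1 - c k)⁻¹ * c j
          with hc'def
        have hc'k : c' k = α' := if_pos rfl
        have hc'erase : ∀ j ∈ Finset.univ.erase k,
            c' j = (1 - α') * (1 - c k)⁻¹ * c j := fun j hj =>
          if_neg (Finset.ne_of_mem_erase hj)
        have hc'0 : ∀ j, 0 ≤ c' j := by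
          intro j
          simp only [hc'def]
          split
          · exact hα'Icc.1
          · exact mul_nonneg (mul_nonneg (by linarith [hα'Icc.2]) (inv_nonneg.mpr hα.le)) (hc j)
        have hc'1 : ∑ j, c' j = 1 := by
          rw [← Finset.add_sum_erase _ _ (Finset.mem_univ k), hc'k,
            Finset.sum_congr rfl hc'erase, ← Finset.mul_sum, hsum_erase]
          field_simp
          ring
        have hbound : ∀ j, |c j - c' j| < ε := by
          intro j
          by_cases hj : j = k
          · subst hj
            rw [hc'k]
            exact hlt
          · have hjer : j ∈ Finset.univ.erase k := Finset.mem_erase.mpr ⟨hj, Finset.mem_univ j⟩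
            have hcjle : c j ≤ 1 - c k := by
              have := Finset.single_le_sum (f := c) (fun i _ => hc i) hjer
              rw [hsum_erase] at this
              exact this
            have heq2 : c j - c' j = c j * (1 - c k)⁻¹ * (α' - c k) := by
              simp only [hc'def, if_neg hj]
              field_simp
              ring
            have h01 : 0 ≤ c j * (1 - c k)⁻¹ := mul_nonneg (hc j) (inv_nonneg.mpr hα.le)
            have hle1 : c j * (1 - c k)⁻¹ ≤ 1 := by
              rw [← div_eq_mul_inv]
              exact (div_le_one hα).mpr hcjle
            calc |c j - c' j| = c j * (1 - c k)⁻¹ * |α' - c k| := by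
                  rw [heq2, abs_mul, abs_of_nonneg h01]
              _ ≤ 1 * |α' - c k| := mul_le_mul_of_nonneg_right hle1 (abs_nonneg _)
              _ = |c k - α'| := by rw [one_mul, abs_sub_comm]
              _ < ε := hlt
        have hmix_t1 : mix (t + 1) c' = α' • q k + (1 - α') • r := by
          have h2 : mix (t + 1) c' = c' k • x (t + 1) k + ∑ j ∈ Finset.univ.erase k,
              c' j • x (t + 1) j := by
            show ∑ j, c' j • x (t + 1) j = _
            rw [← Finset.add_sum_erase _ _ (Finset.mem_univ k)]
          have hxk : x (t + 1) k = q k := by simp [hxdef, hk]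
          have hxj : ∀ j ∈ Finset.univ.erase k, x (t + 1) j = x t j := by
            intro j hj
            have hne : (j : ℕ) ≠ t := fun hco => Finset.ne_of_mem_erase hj (Fin.ext hco)
            simp only [hxdef]
            rcases Nat.lt_or_ge (j : ℕ) t with hlt' | hge
            · rw [if_pos hlt', if_pos (by omega)]
            · rw [if_neg (by omega), if_neg (by omega)]
          have hsum2 : ∑ j ∈ Finset.univ.erase k, c' j • x (t + 1) j = (1 - α') • r := by
            rw [Finset.sum_congr rfl (fun j hj => by rw [hc'erase j hj, hxj j hj, mul_smul]),
              ← Finset.smul_sum, ← hS, mul_smul, ← hr]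
          rw [h2, hxk, hc'k, hsum2]
        rw [← hmix_t, ← hmix_t1] at hR1 hR2
        obtain ⟨μ, hμ0, hμ1, hμd, hR3, hR4⟩ := ih (by omega) c' hc'0 hc'1
        rw [hKm] at hR3 hR4
        have hm1 := hmem t c hc hc1
        have hm2 := hmem (t + 1) c' hc'0 hc'1
        have hm3 := hmem K μ hμ0 hμ1
        refine ⟨μ, hμ0, hμ1, Or.inl ?_, htrans _ hm1 _ hm2 _ hm3 hR1 hR3,
          htrans _ hm3 _ hm2 _ hm1 hR4 hR2⟩
        intro j
        rcases hμd with hlt2 | heq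
        · calc |c j - μ j| ≤ |c j - c' j| + |c' j - μ j| := abs_sub_le _ _ _
            _ < ε + (m : ℝ) * ε := add_lt_add (hbound j) (hlt2 j)
            _ = ((m + 1 : ℕ) : ℝ) * ε := by push_cast; ring
        · rw [heq]
          calc |c j - c' j| < ε := hbound j
            _ ≤ ((m + 1 : ℕ) : ℝ) * ε := by push_cast; nlinarith
  obtain ⟨μ, hμ0, hμ1, hμd, hR1, hR2⟩ := key K le_rfl l hl hl1
  have hmix0 : mix 0 l = ∑ j, l j • p j := by
    refine Finset.sum_congr rfl fun j _ => ?_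
    simp [hxdef]
  have hmixK : mix K μ = ∑ j, μ j • q j := by
    refine Finset.sum_congr rfl fun j _ => ?_
    simp [hxdef, j.isLt]
  rw [Nat.sub_self, hmix0, hmixK] at hR1 hR2
  refine ⟨μ, hμ0, hμ1, ?_, hR1, hR2⟩
  intro j
  rcases hμd with h | h
  · exact h j
  · rw [h, sub_self, abs_zero]
    have h1 : (1 : ℝ) ≤ (K : ℝ) := by exact_mod_cast hK
    nlinarith
end

section
/- Let ε > 0 and let ≽ be a weak order on the simplex Δ ⊆ ℝ^{d+1} satisfying ε-Independence: if p ∼ q, α ∈ [0,1] and r ∈ Δ, then there is α' ∈ [0,1] with |α−α'| < ε such that αp+(1−α)r ∼ α'q+(1−α')r. Let p̄, p̲ ∈ Δ satisfy p̄ ≽ p ≽ p̲ for all p ∈ Δ, and suppose u : Δ → [0,1] is such that for every p ∈ Δ, u(p) is the unique α ∈ [0,1] with p ∼ αp̄+(1−α)p̲ (i.e., p ∼ u(p)p̄+(1−u(p))p̲, and for α ≠ α' in [0,1] the mixtures αp̄+(1−α)p̲ and α'p̄+(1−α')p̲ are not indifferent). Then for every K ≥ 1, all p₁,…,p_K ∈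 Δ and all λ₁,…,λ_K ≥ 0 with Σ_{k=1}^K λ_k = 1, one has |u(Σ_{k=1}^K λ_k p_k) − Σ_{k=1}^K λ_k u(p_k)| < K²·ε. -/
/-!
Write `s_a = a • p̄ + (1 - a) • p̲`. For two lotteries `p, q` with `p ∼ s_{u p}` and `q ∼ s_{u q}`,
two applications of ε-Independence replace first `p` by `s_{u p}` and then `q` by `s_{u q}` inside
the mixture `α • p + (1 - α) • q`, each time moving the weight by less than `ε`. The result is a
mixture of `s_{u p}` and `s_{u q}`, i.e. again some `s_β`, so uniqueness of the calibration forces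
`u (α • p + (1 - α) • q) = β`, which lies within `2ε` of `α * u p + (1 - α) * u q`. Splitting off one
point at a time, a `K`-point mixture costs `K - 1` such errors, and `2 (K - 1) < K²`.
-/

open Set

theorem Fin.sum_smul_eq_smul_last_add {M : Type*} [AddCommGroup M] [Module ℝ M] {K : ℕ}
    (l : Fin (K + 1) → ℝ) (x : Fin (K + 1) → M) (hL : l (Fin.last K) ≠ 1) :
    ∑ k, l k • x k = l (Fin.last K) • x (Fin.last K) +
      (1 - l (Fin.last K)) • ∑ k : Fin K, (l k.castSucc / (1 - l (Fin.last K))) • x k.castSucc := by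
  have hL' : 1 - l (Fin.last K) ≠ 0 := sub_ne_zero.2 (Ne.symm hL)
  rw [Fin.sum_univ_castSucc, add_comm, Finset.smul_sum]
  congr 1
  refine Finset.sum_congr rfl fun k _ => ?_
  rw [smul_smul, mul_div_cancel₀ _ hL']

theorem indiff_trans {X : Type*} {S : Set X} {R : X → X → Prop}
    (htrans : ∀ p ∈ S, ∀ q ∈ S, ∀ r ∈ S, R p q → R q r → R p r) {p q r : X}
    (hp : p ∈ S) (hq : q ∈ S) (hr : r ∈ S) (hpq : R p q ∧ R q p) (hqr : R q r ∧ R r q) :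
    R p r ∧ R r p :=
  ⟨htrans p hp q hq r hr hpq.1 hqr.1, htrans r hr q hq p hp hqr.2 hpq.2⟩

theorem abs_sub_combo_le {a b c e L : ℝ} (hL : L ∈ Icc (0 : ℝ) 1) :
    |a - (L * b + (1 - L) * c)| ≤ |a - (L * b + (1 - L) * e)| + |e - c| := by
  have hL' : |1 - L| ≤ 1 := abs_le.2 ⟨by linarith [hL.2], by linarith [hL.1]⟩
  calc |a - (L * b + (1 - L) * c)| = |(a - (L * b + (1 - L) * e)) + (1 - L) * (e - c)| := by
        congr 1; ring
    _ ≤ |a - (L * b + (1 - L) * e)| + |1 - L| * |e - c| := by rw [← abs_mul]; exact abs_add_le _ _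
    _ ≤ |a - (L * b + (1 - L) * e)| + |e - c| := by
        gcongr; exact mul_le_of_le_one_left (abs_nonneg _) hL'

variable {E : Type*} [AddCommGroup E] [Module ℝ E]

theorem Convex.smul_add_one_sub_smul_mem {S : Set E} (hS : Convex ℝ S) {p q : E} (hp : p ∈ S)
    (hq : q ∈ S) {α : ℝ} (hα : α ∈ Icc (0 : ℝ) 1) : α • p + (1 - α) • q ∈ S :=
  hS hp hq hα.1 (sub_nonneg.2 hα.2) (add_sub_cancel _ _)

theorem smul_add_one_sub_smul_mix (x y : E) (a b γ : ℝ) :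
    γ • (a • x + (1 - a) • y) + (1 - γ) • (b • x + (1 - b) • y) =
      (γ * a + (1 - γ) * b) • x + (1 - (γ * a + (1 - γ) * b)) • y := by
  module

structure IsCalibration (R : E → E → Prop) (S : Set E) (pbar punder : E) (u : E → ℝ) : Prop where
  mem_Icc : ∀ p ∈ S, u p ∈ Icc (0 : ℝ) 1
  indiff : ∀ p ∈ S,
    R p (u p • pbar + (1 - u p) • punder) ∧ R (u p • pbar + (1 - u p) • punder) p
  unique : ∀ α ∈ Icc (0 : ℝ) 1, ∀ α' ∈ Icc (0 : ℝ) 1, α ≠ α' →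
    ¬ (R (α • pbar + (1 - α) • punder) (α' • pbar + (1 - α') • punder) ∧
        R (α' • pbar + (1 - α') • punder) (α • pbar + (1 - α) • punder))

namespace IsCalibration

variable {R : E → E → Prop} {S : Set E} {pbar punder : E} {u : E → ℝ}

theorem eq_of_indiff (hu : IsCalibration R S pbar punder u) (hS : Convex ℝ S)
    (htrans : ∀ p ∈ S, ∀ q ∈ S, ∀ r ∈ S, R p q → R q r → R p r)
    (hpbar : pbar ∈ S) (hpunder : punder ∈ S) {m : E} (hm : m ∈ S) {β : ℝ}
    (hβ : β ∈ Icc (0 : ℝ) 1)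
    (hmβ : R m (β • pbar + (1 - β) • punder) ∧ R (β • pbar + (1 - β) • punder) m) :
    u m = β := by
  by_contra hne
  refine hu.unique _ (hu.mem_Icc m hm) β hβ hne (indiff_trans htrans ?_ hm ?_ ?_ hmβ)
  · exact hS.smul_add_one_sub_smul_mem hpbar hpunder (hu.mem_Icc m hm)
  · exact hS.smul_add_one_sub_smul_mem hpbar hpunder hβ
  · exact (hu.indiff m hm).symm

theorem abs_sub_lt_two_mul (hu : IsCalibration R S pbar punder u) (hS : Convex ℝ S)
    (htrans : ∀ p ∈ S, ∀ q ∈ S, ∀ r ∈ S, R p q → R q r → R p r) {ε : ℝ}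
    (hindep : ∀ p ∈ S, ∀ q ∈ S, (R p q ∧ R q p) →
      ∀ α ∈ Icc (0 : ℝ) 1, ∀ r ∈ S, ∃ α' ∈ Icc (0 : ℝ) 1,
        |α - α'| < ε ∧
        (R (α • p + (1 - α) • r) (α' • q + (1 - α') • r) ∧
          R (α' • q + (1 - α') • r) (α • p + (1 - α) • r)))
    (hpbar : pbar ∈ S) (hpunder : punder ∈ S) {p q : E} (hp : p ∈ S) (hq : q ∈ S) {α : ℝ}
    (hα : α ∈ Icc (0 : ℝ) 1) :
    |u (α • p + (1 - α) • q) - (α * u p + (1 - α) * u q)| < 2 * ε := by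
  have hcal : ∀ a ∈ Icc (0 : ℝ) 1, a • pbar + (1 - a) • punder ∈ S :=
    fun a ha => hS.smul_add_one_sub_smul_mem hpbar hpunder ha
  set s := u p • pbar + (1 - u p) • punder
  set t := u q • pbar + (1 - u q) • punder
  have hs : s ∈ S := hcal _ (hu.mem_Icc p hp)
  have ht : t ∈ S := hcal _ (hu.mem_Icc q hq)
  obtain ⟨α', hα', hαα', hpq⟩ := hindep p hp s hs (hu.indiff p hp) α hα q hq
  have hα'' : 1 - α' ∈ Icc (0 : ℝ) 1 := ⟨by linarith [hα'.2], by linarith [hα'.1]⟩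
  obtain ⟨γ, hγ, hα'γ, hqt⟩ := hindep q hq t ht (hu.indiff q hq) (1 - α') hα'' s hs
  rw [show (1 - α') • q + (1 - (1 - α')) • s = α' • s + (1 - α') • q by module] at hqt
  set β := γ * u q + (1 - γ) * u p
  have hβ : β ∈ Icc (0 : ℝ) 1 := by
    simpa only [smul_eq_mul] using (convex_Icc (0 : ℝ) 1).smul_add_one_sub_smul_mem
      (hu.mem_Icc q hq) (hu.mem_Icc p hp) hγ
  have hmix : u (α • p + (1 - α) • q) = β := by
    refine hu.eq_of_indiff hS htrans hpbar hpunder (hS.smul_add_one_sub_smul_mem hp hq hα) hβ ?_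
    rw [← smul_add_one_sub_smul_mix]
    exact indiff_trans htrans (hS.smul_add_one_sub_smul_mem hp hq hα)
      (hS.smul_add_one_sub_smul_mem hs hq hα') (hS.smul_add_one_sub_smul_mem ht hs hγ) hpq hqt
  have hweight : |γ - (1 - α)| < 2 * ε := by
    rw [show γ - (1 - α) = (α - α') - ((1 - α') - γ) by ring]
    linarith [abs_sub (α - α') ((1 - α') - γ)]
  have hutil : |u q - u p| ≤ 1 := by
    obtain ⟨hp0, hp1⟩ := hu.mem_Icc p hp
    obtain ⟨hq0, hq1⟩ := hu.mem_Icc q hq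
    exact abs_le.2 ⟨by linarith, by linarith⟩
  calc |u (α • p + (1 - α) • q) - (α * u p + (1 - α) * u q)|
      = |γ - (1 - α)| * |u q - u p| := by rw [hmix, ← abs_mul]; congr 1; ring
    _ ≤ |γ - (1 - α)| := mul_le_of_le_one_right (abs_nonneg _) hutil
    _ < 2 * ε := hweight

end IsCalibration

theorem abs_map_sum_sub_sum_le {S : Set E} (hS : Convex ℝ S) {f : E → ℝ} {δ : ℝ} (hδ : 0 ≤ δ)
    (hf : ∀ p ∈ S, ∀ q ∈ S, ∀ α ∈ Icc (0 : ℝ) 1,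
      |f (α • p + (1 - α) • q) - (α * f p + (1 - α) * f q)| ≤ δ) :
    ∀ (K : ℕ) (p : Fin K → E), (∀ k, p k ∈ S) → ∀ l : Fin K → ℝ, (∀ k, 0 ≤ l k) →
      ∑ k, l k = 1 → |f (∑ k, l k • p k) - ∑ k, l k * f (p k)| ≤ (K - 1) * δ := by
  intro K
  induction K with
  | zero => intro p _ l _ hl; simp at hl
  | succ K ih =>
    intro p hp l hl0 hl
    set L := l (Fin.last K)
    have hrest : ∑ k : Fin K, l k.castSucc = 1 - L := by
      rw [Fin.sum_univ_castSucc] at hl; linarith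
    have hL_le : L ≤ 1 := sub_nonneg.1 (hrest ▸ Finset.sum_nonneg fun k _ => hl0 _)
    by_cases hL : L = 1
    · have hzero : ∀ k : Fin K, l k.castSucc = 0 := fun k =>
        (Finset.sum_eq_zero_iff_of_nonneg fun k _ => hl0 _).1 (by linarith) k (Finset.mem_univ k)
      simp only [Fin.sum_univ_castSucc, hzero, zero_smul, zero_mul, Finset.sum_const_zero,
        zero_add]
      rw [show l (Fin.last K) = 1 from hL, one_smul, one_mul, sub_self, abs_zero, Nat.cast_succ,
        add_sub_cancel_right]
      positivity
    · have hL1 : 0 < 1 - L := sub_pos.2 (lt_of_le_of_ne hL_le hL)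
      set l' : Fin K → ℝ := fun k => l k.castSucc / (1 - L)
      have hl'0 : ∀ k, 0 ≤ l' k := fun k => div_nonneg (hl0 _) hL1.le
      have hl' : ∑ k, l' k = 1 := by rw [← Finset.sum_div, hrest, div_self hL1.ne']
      set q := ∑ k, l' k • p k.castSucc
      have hq : q ∈ S := hS.sum_mem (fun k _ => hl'0 k) hl' fun k _ => hp _
      have hfq := ih (fun k => p k.castSucc) (fun k => hp _) l' hl'0 hl'
      have hfmix := hf _ (hp (Fin.last K)) q hq L ⟨hl0 _, hL_le⟩
      have hsum_f := Fin.sum_smul_eq_smul_last_add l (fun k => f (p k)) hL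
      simp only [smul_eq_mul] at hsum_f
      rw [Fin.sum_smul_eq_smul_last_add l p hL, hsum_f]
      calc _ ≤ δ + (K - 1) * δ :=
            (abs_sub_combo_le ⟨hl0 _, hL_le⟩).trans (add_le_add hfmix hfq)
        _ = ((K + 1 : ℕ) - 1) * δ := by push_cast; ring

theorem stmt_5_general (d : ℕ) (ε : ℝ) (hε : 0 < ε)
    (R : (Fin (d + 1) → ℝ) → (Fin (d + 1) → ℝ) → Prop)
    (Δ : Set (Fin (d + 1) → ℝ)) (hΔ : Δ = stdSimplex ℝ (Fin (d + 1)))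
    (htrans : ∀ p ∈ Δ, ∀ q ∈ Δ, ∀ r ∈ Δ, R p q → R q r → R p r)
    (hindep : ∀ p ∈ Δ, ∀ q ∈ Δ, (R p q ∧ R q p) →
      ∀ α ∈ Set.Icc (0 : ℝ) 1, ∀ r ∈ Δ, ∃ α' ∈ Set.Icc (0 : ℝ) 1,
        |α - α'| < ε ∧
        (R (α • p + (1 - α) • r) (α' • q + (1 - α') • r) ∧
          R (α' • q + (1 - α') • r) (α • p + (1 - α) • r)))
    (pbar punder : Fin (d + 1) → ℝ) (hpbar : pbar ∈ Δ) (hpunder : punder ∈ Δ)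
    (u : (Fin (d + 1) → ℝ) → ℝ)
    (hu01 : ∀ p ∈ Δ, u p ∈ Set.Icc (0 : ℝ) 1)
    (hucal : ∀ p ∈ Δ,
      R p (u p • pbar + (1 - u p) • punder) ∧ R (u p • pbar + (1 - u p) • punder) p)
    (huniq : ∀ α ∈ Set.Icc (0 : ℝ) 1, ∀ α' ∈ Set.Icc (0 : ℝ) 1, α ≠ α' →
      ¬ (R (α • pbar + (1 - α) • punder) (α' • pbar + (1 - α') • punder) ∧
          R (α' • pbar + (1 - α') • punder) (α • pbar + (1 - α) • punder))) :
    ∀ K : ℕ, 1 ≤ K → ∀ p : Fin K → (Fin (d + 1) → ℝ), (∀ k, p k ∈ Δ) →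
      ∀ l : Fin K → ℝ, (∀ k, 0 ≤ l k) → ∑ k, l k = 1 →
      |u (∑ k, l k • p k) - ∑ k, l k * u (p k)| < (K : ℝ) ^ 2 * ε := by
  intro K _ p hp l hl0 hl
  have hΔconv : Convex ℝ Δ := hΔ ▸ convex_stdSimplex ℝ _
  have hu : IsCalibration R Δ pbar punder u := ⟨hu01, hucal, huniq⟩
  have hbound := abs_map_sum_sub_sum_le hΔconv (by positivity : 0 ≤ 2 * ε)
    (fun p hp q hq α hα =>
      (hu.abs_sub_lt_two_mul hΔconv htrans hindep hpbar hpunder hp hq hα).le) K p hp l hl0 hl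
  calc _ ≤ ((K : ℝ) - 1) * (2 * ε) := hbound
    _ < (K : ℝ) ^ 2 * ε := by nlinarith [sq_nonneg ((K : ℝ) - 1)]

/-- Lemma `lem:approx`: under ε-Independence, the calibrated utility `u`
(defined by `p ∼ u(p)·p̄ + (1-u(p))·p̲`, with the mixture weight unique) is
`K²·ε`-approximately affine on `K`-point convex combinations. -/
theorem stmt_5 (d : ℕ) (hd : 1 ≤ d) (ε : ℝ) (hε : 0 < ε)
    (R : (Fin (d + 1) → ℝ) → (Fin (d + 1) → ℝ) → Prop)
    (Δ : Set (Fin (d + 1) → ℝ)) (hΔ : Δ = stdSimplex ℝ (Fin (d + 1)))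
    (hcomp : ∀ p ∈ Δ, ∀ q ∈ Δ, R p q ∨ R q p)
    (htrans : ∀ p ∈ Δ, ∀ q ∈ Δ, ∀ r ∈ Δ, R p q → R q r → R p r)
    (hindep : ∀ p ∈ Δ, ∀ q ∈ Δ, (R p q ∧ R q p) →
      ∀ α ∈ Set.Icc (0 : ℝ) 1, ∀ r ∈ Δ, ∃ α' ∈ Set.Icc (0 : ℝ) 1,
        |α - α'| < ε ∧
        (R (α • p + (1 - α) • r) (α' • q + (1 - α') • r) ∧
          R (α' • q + (1 - α') • r) (α • p + (1 - α) • r)))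
    (pbar punder : Fin (d + 1) → ℝ) (hpbar : pbar ∈ Δ) (hpunder : punder ∈ Δ)
    (hext : ∀ p ∈ Δ, R pbar p ∧ R p punder)
    (u : (Fin (d + 1) → ℝ) → ℝ)
    (hu01 : ∀ p ∈ Δ, u p ∈ Set.Icc (0 : ℝ) 1)
    (hucal : ∀ p ∈ Δ,
      R p (u p • pbar + (1 - u p) • punder) ∧ R (u p • pbar + (1 - u p) • punder) p)
    (huniq : ∀ α ∈ Set.Icc (0 : ℝ) 1, ∀ α' ∈ Set.Icc (0 : ℝ) 1, α ≠ α' →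
      ¬ (R (α • pbar + (1 - α) • punder) (α' • pbar + (1 - α') • punder) ∧
          R (α' • pbar + (1 - α') • punder) (α • pbar + (1 - α) • punder))) :
    ∀ K : ℕ, 1 ≤ K → ∀ p : Fin K → (Fin (d + 1) → ℝ), (∀ k, p k ∈ Δ) →
      ∀ l : Fin K → ℝ, (∀ k, 0 ≤ l k) → ∑ k, l k = 1 →
      |u (∑ k, l k • p k) - ∑ k, l k * u (p k)| < (K : ℝ) ^ 2 * ε :=
  stmt_5_general d ε hε R Δ hΔ htrans hindep pbar punder hpbar hpunder u hu01 hucal huniq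
end

section
/- Let ≽ be a preference on ℝ^d_+ that is continuous and monotone, and let φ : ℝ^d_+ × ℝ^d_+ → ℝ_+ and Θ ≥ 0 be such that ≽ satisfies φ-approximate independence and Σ_{i=0}^{n} 2^{−i} φ(2^i x, 2^i y) ≤ Θ for all n ≥ 1 and all x, y ∈ ℝ^d_+. Then there exist a function u : ℝ^d_+ → ℝ and a linear function v : ℝ^d → ℝ such that u is a normalized representation of ≽ and sup_{x ∈ ℝ^d_+} |u(x) − v(x)| ≤ Θ. -/
/-!
The certainty equivalent `u x`, the constant `c` with `c • 𝟙 ∼ x`, exists by continuity and the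
connectedness of `[0, ‖x‖]`; it is a normalized representation, and approximate independence
says precisely that `u` is midpoint-affine up to `φ`. A Hyers–Ulam argument follows: consecutive
terms of `2⁻ⁿ u (2ⁿ x)` differ by at most `2⁻ⁿ φ (2ⁿ⁺¹ x, 0)`, so the sequence converges to some
`w x` with `|u x - w x| ≤ Θ`, and the same midpoint estimate makes `w` additive on the cone.
Since `0 ≤ w x ≤ ‖x‖`, the extension `x ↦ w x⁺ - w x⁻` is a continuous additive, hence linear,
functional.
-/

open Filter Topology Finset

theorem sum_range_le_of_sum_range_succ_le {f : ℕ → ℝ} {Θ : ℝ} (hf : ∀ i, 0 ≤ f i)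
    (h : ∀ n, 1 ≤ n → ∑ i ∈ range (n + 1), f i ≤ Θ) (N : ℕ) : ∑ i ∈ range N, f i ≤ Θ :=
  (sum_le_sum_of_subset_of_nonneg (range_subset_range.2 (by omega : N ≤ max N 1 + 1))
    fun i _ _ => hf i).trans (h _ (le_max_right N 1))

theorem exists_tendsto_abs_sub_le_of_abs_sub_succ_le {a b : ℕ → ℝ} {Θ : ℝ}
    (hb : ∀ n, 0 ≤ b n) (hsum : ∀ N, ∑ n ∈ range N, b n ≤ Θ)
    (hab : ∀ n, |a n - a (n + 1)| ≤ b n) :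
    ∃ l, Tendsto a atTop (𝓝 l) ∧ |a 0 - l| ≤ Θ := by
  have hb_sum : Summable b := summable_of_sum_range_le hb hsum
  have hdist : ∀ n, dist (a n) (a n.succ) ≤ b n := fun n => (Real.dist_eq _ _).trans_le (hab n)
  obtain ⟨l, hl⟩ := cauchySeq_tendsto_of_complete (cauchySeq_of_dist_le_of_summable b hdist hb_sum)
  refine ⟨l, hl, ?_⟩
  calc |a 0 - l| = dist (a 0) l := (Real.dist_eq _ _).symm
    _ ≤ ∑' n, b n := dist_le_tsum_of_dist_le_of_tendsto₀ b hdist hb_sum hl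
    _ ≤ Θ := Real.tsum_le_of_sum_range_le hb hsum

section ConeExtension

variable {ι : Type*} [Fintype ι]

theorem Pi.norm_posPart_le (x : ι → ℝ) : ‖x⁺‖ ≤ ‖x‖ :=
  (pi_norm_le_iff_of_nonneg (norm_nonneg x)).2 fun i => by
    rw [Pi.posPart_apply, Real.norm_of_nonneg (posPart_nonneg _)]
    exact sup_le ((le_abs_self _).trans (norm_le_pi_norm x i)) (norm_nonneg x)

theorem Pi.norm_negPart_le (x : ι → ℝ) : ‖x⁻‖ ≤ ‖x‖ := by
  simpa [posPart_neg] using Pi.norm_posPart_le (-x)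

theorem exists_isLinearMap_eqOn_nonneg {w : (ι → ℝ) → ℝ}
    (hadd : ∀ x y, 0 ≤ x → 0 ≤ y → w (x + y) = w x + w y)
    (hnonneg : ∀ x, 0 ≤ x → 0 ≤ w x) (hle : ∀ x, 0 ≤ x → w x ≤ ‖x‖) :
    ∃ v : (ι → ℝ) → ℝ, IsLinearMap ℝ v ∧ ∀ x, 0 ≤ x → v x = w x := by
  let v : (ι → ℝ) → ℝ := fun x => w x⁺ - w x⁻
  have hv_sub : ∀ a b, 0 ≤ a → 0 ≤ b → v (a - b) = w a - w b := by
    intro a b ha hb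
    have hsplit : (a - b)⁺ + b = a + (a - b)⁻ := by
      rw [sub_eq_iff_eq_add.1 (posPart_sub_negPart (a - b))]; abel
    have := congrArg w hsplit
    rw [hadd _ _ (posPart_nonneg _) hb, hadd _ _ ha (negPart_nonneg _)] at this
    simp only [v]; linarith
  have hv_add : ∀ x y, v (x + y) = v x + v y := by
    intro x y
    have hxy : x + y = (x⁺ + y⁺) - (x⁻ + y⁻) := by
      conv_lhs => rw [← posPart_sub_negPart x, ← posPart_sub_negPart y]
      abel
    rw [hxy, hv_sub _ _ (add_nonneg (posPart_nonneg x) (posPart_nonneg y))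
      (add_nonneg (negPart_nonneg x) (negPart_nonneg y)),
      hadd _ _ (posPart_nonneg x) (posPart_nonneg y),
      hadd _ _ (negPart_nonneg x) (negPart_nonneg y)]
    simp only [v]; ring
  have hv_bound : ∀ x, |v x| ≤ ‖x‖ := by
    intro x
    show |w x⁺ - w x⁻| ≤ ‖x‖
    rw [abs_le]
    constructor <;> linarith [hnonneg _ (posPart_nonneg x), hnonneg _ (negPart_nonneg x),
      hle _ (posPart_nonneg x), hle _ (negPart_nonneg x), Pi.norm_posPart_le x,
      Pi.norm_negPart_le x]
  let V : (ι → ℝ) →+ ℝ := AddMonoidHom.mk' v hv_add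
  have hV : Continuous V := AddMonoidHomClass.continuous_of_bound V 1 fun x => by
    rw [one_mul, Real.norm_eq_abs]
    exact hv_bound x
  refine ⟨v, (V.toRealLinearMap hV).toLinearMap.isLinear, fun x hx => ?_⟩
  have hw0 : w 0 = 0 := by simpa using hadd 0 0 le_rfl le_rfl
  simpa [hw0] using hv_sub x 0 hx le_rfl

end ConeExtension

section DoublingSeq

variable {ι : Type*}

def IsMidpointApprox (u : (ι → ℝ) → ℝ) (φ : (ι → ℝ) → (ι → ℝ) → ℝ) : Prop :=
  ∀ x y, 0 ≤ x → 0 ≤ y → |u ((1 / 2 : ℝ) • x + (1 / 2 : ℝ) • y) - (u x / 2 + u y / 2)| ≤ φ x y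

noncomputable def doublingSeq (u : (ι → ℝ) → ℝ) (x : ι → ℝ) (n : ℕ) : ℝ :=
  (1 / 2 : ℝ) ^ n * u ((2 : ℝ) ^ n • x)

variable {u : (ι → ℝ) → ℝ} {φ : (ι → ℝ) → (ι → ℝ) → ℝ} {Θ : ℝ}

theorem IsMidpointApprox.abs_doublingSeq_add_sub_le (h : IsMidpointApprox u φ) {x y : ι → ℝ}
    (hx : 0 ≤ x) (hy : 0 ≤ y) (n : ℕ) :
    |doublingSeq u (x + y) n - (doublingSeq u x (n + 1) + doublingSeq u y (n + 1))| ≤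
      (1 / 2 : ℝ) ^ n * φ ((2 : ℝ) ^ (n + 1) • x) ((2 : ℝ) ^ (n + 1) • y) := by
  have hmid := h ((2 : ℝ) ^ (n + 1) • x) ((2 : ℝ) ^ (n + 1) • y)
    (smul_nonneg (by positivity) hx) (smul_nonneg (by positivity) hy)
  have hhalf : ∀ z : ι → ℝ, (1 / 2 : ℝ) • ((2 : ℝ) ^ (n + 1) • z) = (2 : ℝ) ^ n • z := by
    intro z; rw [smul_smul, pow_succ]; congr 1; ring
  rw [hhalf, hhalf, ← smul_add] at hmid
  have hexpand : doublingSeq u (x + y) n - (doublingSeq u x (n + 1) + doublingSeq u y (n + 1)) =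
      (1 / 2 : ℝ) ^ n * (u ((2 : ℝ) ^ n • (x + y)) -
        (u ((2 : ℝ) ^ (n + 1) • x) / 2 + u ((2 : ℝ) ^ (n + 1) • y) / 2)) := by
    simp only [doublingSeq, pow_succ]; ring
  rw [hexpand, abs_mul, abs_of_nonneg (by positivity)]
  exact mul_le_mul_of_nonneg_left hmid (by positivity)

theorem IsMidpointApprox.exists_tendsto_doublingSeq (h : IsMidpointApprox u φ) (hu0 : u 0 = 0)
    (hφ : ∀ x y, 0 ≤ φ x y)
    (hsum : ∀ N x y, 0 ≤ x → 0 ≤ y →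
      ∑ i ∈ range N, (1 / 2 : ℝ) ^ i * φ ((2 : ℝ) ^ i • x) ((2 : ℝ) ^ i • y) ≤ Θ)
    {x : ι → ℝ} (hx : 0 ≤ x) :
    ∃ l, Tendsto (doublingSeq u x) atTop (𝓝 l) ∧ |u x - l| ≤ Θ := by
  have hstep : ∀ n, |doublingSeq u x n - doublingSeq u x (n + 1)| ≤
      (1 / 2 : ℝ) ^ n * φ ((2 : ℝ) ^ n • (2 : ℝ) • x) ((2 : ℝ) ^ n • 0) := by
    intro n
    have h0 : doublingSeq u 0 (n + 1) = 0 := by simp [doublingSeq, hu0]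
    simpa [smul_smul, ← pow_succ, h0] using h.abs_doublingSeq_add_sub_le hx le_rfl n
  simpa [doublingSeq] using exists_tendsto_abs_sub_le_of_abs_sub_succ_le
    (fun n => mul_nonneg (by positivity) (hφ _ _))
    (fun N => hsum N _ 0 (smul_nonneg zero_le_two hx) le_rfl) hstep

theorem IsMidpointApprox.eq_add_of_tendsto_doublingSeq (h : IsMidpointApprox u φ)
    (hφ : ∀ x y, 0 ≤ φ x y)
    (hsum : ∀ N x y, 0 ≤ x → 0 ≤ y →
      ∑ i ∈ range N, (1 / 2 : ℝ) ^ i * φ ((2 : ℝ) ^ i • x) ((2 : ℝ) ^ i • y) ≤ Θ)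
    {x y : ι → ℝ} (hx : 0 ≤ x) (hy : 0 ≤ y) {lx ly lxy : ℝ}
    (hlx : Tendsto (doublingSeq u x) atTop (𝓝 lx)) (hly : Tendsto (doublingSeq u y) atTop (𝓝 ly))
    (hlxy : Tendsto (doublingSeq u (x + y)) atTop (𝓝 lxy)) :
    lxy = lx + ly := by
  set t : ℕ → ℝ := fun i => (1 / 2 : ℝ) ^ i * φ ((2 : ℝ) ^ i • x) ((2 : ℝ) ^ i • y)
  have ht : Tendsto (fun n => 2 * t (n + 1)) atTop (𝓝 0) := by
    have := ((summable_of_sum_range_le (fun i => mul_nonneg (by positivity) (hφ _ _))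
      fun N => hsum N x y hx hy).tendsto_atTop_zero.comp (tendsto_add_atTop_nat 1)).const_mul 2
    rw [mul_zero] at this
    exact this
  have herr : Tendsto (fun n => doublingSeq u (x + y) n -
      (doublingSeq u x (n + 1) + doublingSeq u y (n + 1))) atTop (𝓝 0) := by
    refine squeeze_zero_norm (fun n => ?_) ht
    rw [Real.norm_eq_abs]
    refine (h.abs_doublingSeq_add_sub_le hx hy n).trans_eq ?_
    simp only [t, pow_succ]; ring
  have hlim := hlxy.sub
    ((hlx.comp (tendsto_add_atTop_nat 1)).add (hly.comp (tendsto_add_atTop_nat 1)))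
  linarith [tendsto_nhds_unique hlim herr]

theorem IsMidpointApprox.exists_isLinearMap_abs_sub_le [Fintype ι] (h : IsMidpointApprox u φ)
    (hφ : ∀ x y, 0 ≤ φ x y)
    (hsum : ∀ N x y, 0 ≤ x → 0 ≤ y →
      ∑ i ∈ range N, (1 / 2 : ℝ) ^ i * φ ((2 : ℝ) ^ i • x) ((2 : ℝ) ^ i • y) ≤ Θ)
    (hu : ∀ x, 0 ≤ x → 0 ≤ u x ∧ u x ≤ ‖x‖) :
    ∃ v : (ι → ℝ) → ℝ, IsLinearMap ℝ v ∧ ∀ x, 0 ≤ x → |u x - v x| ≤ Θ := by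
  have hu0 : u 0 = 0 := le_antisymm (by simpa using (hu 0 le_rfl).2) (hu 0 le_rfl).1
  choose! w hw hwΘ using fun x (hx : 0 ≤ x) => h.exists_tendsto_doublingSeq hu0 hφ hsum hx
  have hseq : ∀ x, 0 ≤ x → ∀ n, 0 ≤ doublingSeq u x n ∧ doublingSeq u x n ≤ ‖x‖ := by
    intro x hx n
    have h2n := hu _ (smul_nonneg (by positivity : (0 : ℝ) ≤ 2 ^ n) hx)
    rw [norm_smul, Real.norm_of_nonneg (by positivity)] at h2n
    refine ⟨mul_nonneg (by positivity) h2n.1, ?_⟩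
    calc doublingSeq u x n ≤ (1 / 2 : ℝ) ^ n * (2 ^ n * ‖x‖) :=
          mul_le_mul_of_nonneg_left h2n.2 (by positivity)
      _ = ‖x‖ := by rw [← mul_assoc, ← mul_pow]; norm_num
  obtain ⟨v, hv, hvw⟩ := exists_isLinearMap_eqOn_nonneg (w := w)
    (fun x y hx hy => h.eq_add_of_tendsto_doublingSeq hφ hsum hx hy (hw x hx) (hw y hy)
      (hw _ (add_nonneg hx hy)))
    (fun x hx => ge_of_tendsto' (hw x hx) fun n => (hseq x hx n).1)
    (fun x hx => le_of_tendsto' (hw x hx) fun n => (hseq x hx n).2)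
  exact ⟨v, hv, fun x hx => (hvw x hx).symm ▸ hwΘ x hx⟩

end DoublingSeq

section Preference

variable {ι : Type*}

theorem Pi.le_const_norm [Fintype ι] (x : ι → ℝ) : x ≤ fun _ => ‖x‖ :=
  fun i => (le_abs_self _).trans (norm_le_pi_norm x i)

structure IsContinuousMonotonePreference (R : (ι → ℝ) → (ι → ℝ) → Prop) : Prop where
  total : ∀ x y, 0 ≤ x → 0 ≤ y → R x y ∨ R y x
  trans : ∀ x y z, 0 ≤ x → 0 ≤ y → 0 ≤ z → R x y → R y z → R x z
  isClosed_upperContour : ∀ x, 0 ≤ x → IsClosed {z | 0 ≤ z ∧ R z x}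
  isClosed_lowerContour : ∀ x, 0 ≤ x → IsClosed {z | 0 ≤ z ∧ R x z}
  mono : ∀ x y, 0 ≤ x → x ≤ y → R y x
  not_rel_of_lt : ∀ x y, 0 ≤ x → (∀ i, x i < y i) → ¬ R x y

def ApproxIndependent (R : (ι → ℝ) → (ι → ℝ) → Prop) (φ : (ι → ℝ) → (ι → ℝ) → ℝ) : Prop :=
  ∀ x y : ι → ℝ, 0 ≤ x → 0 ≤ y →
    ∀ cbx cux cby cuy : ℝ, 0 ≤ cbx → 0 ≤ cux → 0 ≤ cby → 0 ≤ cuy →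
    R (fun _ => cbx) x → R x (fun _ => cux) →
    R (fun _ => cby) y → R y (fun _ => cuy) →
    R (fun _ => cbx / 2 + cby / 2 + φ x y) ((1 / 2 : ℝ) • x + (1 / 2 : ℝ) • y) ∧
    R ((1 / 2 : ℝ) • x + (1 / 2 : ℝ) • y) (fun _ => cux / 2 + cuy / 2 - φ x y)

def IsCertaintyEquiv (R : (ι → ℝ) → (ι → ℝ) → Prop) (u : (ι → ℝ) → ℝ) : Prop :=
  ∀ x, 0 ≤ x → 0 ≤ u x ∧ R x (fun _ => u x) ∧ R (fun _ => u x) x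

variable {R : (ι → ℝ) → (ι → ℝ) → Prop} {u : (ι → ℝ) → ℝ}

theorem IsContinuousMonotonePreference.exists_certaintyEquiv [Fintype ι]
    (hR : IsContinuousMonotonePreference R) {x : ι → ℝ} (hx : 0 ≤ x) :
    ∃ c, 0 ≤ c ∧ R x (fun _ => c) ∧ R (fun _ => c) x := by
  have hconst : Continuous fun c : ℝ => (fun _ => c : ι → ℝ) := continuous_pi fun _ => continuous_id
  obtain ⟨c, ⟨hc, -⟩, ⟨-, hxc⟩, -, hcx⟩ :=
    isPreconnected_closed_iff.1 (isPreconnected_Icc (a := 0) (b := ‖x‖)) _ _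
    ((hR.isClosed_lowerContour x hx).preimage hconst)
    ((hR.isClosed_upperContour x hx).preimage hconst)
    (fun c hc => (hR.total x _ hx fun _ => hc.1).imp (⟨fun _ => hc.1, ·⟩) (⟨fun _ => hc.1, ·⟩))
    ⟨0, ⟨le_rfl, norm_nonneg x⟩, le_rfl, hR.mono 0 x le_rfl hx⟩
    ⟨‖x‖, ⟨norm_nonneg x, le_rfl⟩, fun _ => norm_nonneg x, hR.mono x _ hx (Pi.le_const_norm x)⟩
  exact ⟨c, hc, hxc, hcx⟩

theorem IsContinuousMonotonePreference.exists_isCertaintyEquiv [Fintype ι]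
    (hR : IsContinuousMonotonePreference R) : ∃ u, IsCertaintyEquiv R u := by
  choose! u hu using fun x (hx : 0 ≤ x) => hR.exists_certaintyEquiv hx
  exact ⟨u, hu⟩

theorem IsCertaintyEquiv.eq_of_rel (hu : IsCertaintyEquiv R u)
    (hR : IsContinuousMonotonePreference R) {x : ι → ℝ} (hx : 0 ≤ x) {c : ℝ} (hc : 0 ≤ c)
    (hxc : R x (fun _ => c)) (hcx : R (fun _ => c) x) : u x = c := by
  obtain ⟨hu0, hxu, hux⟩ := hu x hx
  rcases lt_trichotomy (u x) c with hlt | heq | hgt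
  · exact absurd (hR.trans _ x _ (fun _ => hu0) hx (fun _ => hc) hux hxc)
      (hR.not_rel_of_lt _ _ (fun _ => hu0) fun _ => hlt)
  · exact heq
  · exact absurd (hR.trans _ x _ (fun _ => hc) hx (fun _ => hu0) hcx hxu)
      (hR.not_rel_of_lt _ _ (fun _ => hc) fun _ => hgt)

theorem IsCertaintyEquiv.apply_const (hu : IsCertaintyEquiv R u)
    (hR : IsContinuousMonotonePreference R) {c : ℝ} (hc : 0 ≤ c) : u (fun _ => c) = c :=
  hu.eq_of_rel hR (fun _ => hc) hc (hR.mono _ _ (fun _ => hc) le_rfl)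
    (hR.mono _ _ (fun _ => hc) le_rfl)

theorem IsCertaintyEquiv.rel_iff (hu : IsCertaintyEquiv R u)
    (hR : IsContinuousMonotonePreference R) {x y : ι → ℝ} (hx : 0 ≤ x) (hy : 0 ≤ y) :
    R x y ↔ u y ≤ u x := by
  obtain ⟨hux0, hxu, hux⟩ := hu x hx
  obtain ⟨huy0, hyu, huy⟩ := hu y hy
  constructor
  · intro hxy
    by_contra! hlt
    exact hR.not_rel_of_lt _ _ (fun _ => hux0) (fun _ => hlt)
      (hR.trans _ x _ (fun _ => hux0) hx (fun _ => huy0) hux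
        (hR.trans x y _ hx hy (fun _ => huy0) hxy hyu))
  · intro hle
    exact hR.trans x _ y hx (fun _ => huy0) hy
      (hR.trans x _ _ hx (fun _ => hux0) (fun _ => huy0) hxu
        (hR.mono _ _ (fun _ => huy0) fun _ => hle)) huy

theorem IsCertaintyEquiv.le_of_const_rel (hu : IsCertaintyEquiv R u)
    (hR : IsContinuousMonotonePreference R) {x : ι → ℝ} (hx : 0 ≤ x) {c : ℝ} (hc : 0 ≤ c)
    (h : R (fun _ => c) x) : u x ≤ c :=
  hu.apply_const hR hc ▸ (hu.rel_iff hR (fun _ => hc) hx).1 h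

theorem IsCertaintyEquiv.le_of_rel_const (hu : IsCertaintyEquiv R u)
    (hR : IsContinuousMonotonePreference R) {x : ι → ℝ} (hx : 0 ≤ x) {c : ℝ} (hc : 0 ≤ c)
    (h : R x (fun _ => c)) : c ≤ u x :=
  hu.apply_const hR hc ▸ (hu.rel_iff hR hx (fun _ => hc)).1 h

theorem IsCertaintyEquiv.le_norm [Fintype ι] (hu : IsCertaintyEquiv R u)
    (hR : IsContinuousMonotonePreference R) {x : ι → ℝ} (hx : 0 ≤ x) : u x ≤ ‖x‖ :=
  hu.le_of_const_rel hR hx (norm_nonneg x) (hR.mono x _ hx (Pi.le_const_norm x))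

theorem IsCertaintyEquiv.isMidpointApprox {φ : (ι → ℝ) → (ι → ℝ) → ℝ}
    (hu : IsCertaintyEquiv R u) (hR : IsContinuousMonotonePreference R)
    (hφ : ∀ x y, 0 ≤ φ x y) (hind : ApproxIndependent R φ) : IsMidpointApprox u φ := by
  intro x y hx hy
  obtain ⟨hux0, hxu, hux⟩ := hu x hx
  obtain ⟨huy0, hyu, huy⟩ := hu y hy
  have hm : 0 ≤ (1 / 2 : ℝ) • x + (1 / 2 : ℝ) • y :=
    add_nonneg (smul_nonneg (by norm_num) hx) (smul_nonneg (by norm_num) hy)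
  obtain ⟨hup, hlow⟩ := hind x y hx hy _ _ _ _ hux0 hux0 huy0 huy0 hux hxu huy hyu
  have hupper := hu.le_of_const_rel hR hm (by linarith [hφ x y]) hup
  have hlower : u x / 2 + u y / 2 - φ x y ≤ u ((1 / 2 : ℝ) • x + (1 / 2 : ℝ) • y) := by
    rcases le_or_gt 0 (u x / 2 + u y / 2 - φ x y) with h | h
    · exact hu.le_of_rel_const hR hm h hlow
    · linarith [(hu _ hm).1]
  rw [abs_le]
  constructor <;> linarith

end Preference

theorem stmt_6_general (d : ℕ) (R : (Fin d → ℝ) → (Fin d → ℝ) → Prop)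
    (hcomp : ∀ x y : Fin d → ℝ, 0 ≤ x → 0 ≤ y → R x y ∨ R y x)
    (htrans : ∀ x y z : Fin d → ℝ, 0 ≤ x → 0 ≤ y → 0 ≤ z → R x y → R y z → R x z)
    (hcont : ∀ x : Fin d → ℝ, 0 ≤ x →
      IsClosed {z : Fin d → ℝ | 0 ≤ z ∧ R z x} ∧ IsClosed {z : Fin d → ℝ | 0 ≤ z ∧ R x z})
    (hmono : ∀ x y : Fin d → ℝ, 0 ≤ x → x ≤ y → R y x)
    (hmono' : ∀ x y : Fin d → ℝ, 0 ≤ x → (∀ i, x i < y i) → R y x ∧ ¬ R x y)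
    (φ : (Fin d → ℝ) → (Fin d → ℝ) → ℝ) (hφ : ∀ x y, 0 ≤ φ x y)
    (Θ : ℝ)
    (hindep : ∀ x y : Fin d → ℝ, 0 ≤ x → 0 ≤ y →
      ∀ cbx cux cby cuy : ℝ, 0 ≤ cbx → 0 ≤ cux → 0 ≤ cby → 0 ≤ cuy →
      R (fun _ => cbx) x → R x (fun _ => cux) →
      R (fun _ => cby) y → R y (fun _ => cuy) →
      R (fun _ => cbx / 2 + cby / 2 + φ x y) ((1 / 2 : ℝ) • x + (1 / 2 : ℝ) • y) ∧
      R ((1 / 2 : ℝ) • x + (1 / 2 : ℝ) • y) (fun _ => cux / 2 + cuy / 2 - φ x y))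
    (hsum : ∀ n : ℕ, 1 ≤ n → ∀ x y : Fin d → ℝ, 0 ≤ x → 0 ≤ y →
      ∑ i ∈ Finset.range (n + 1), (1 / 2 : ℝ) ^ i * φ ((2 : ℝ) ^ i • x) ((2 : ℝ) ^ i • y) ≤ Θ) :
    ∃ u v : (Fin d → ℝ) → ℝ,
      (∀ x y : Fin d → ℝ, 0 ≤ x → 0 ≤ y → (R x y ↔ u y ≤ u x)) ∧
      (∀ c : ℝ, 0 ≤ c → u (fun _ => c) = c) ∧
      IsLinearMap ℝ v ∧
      (∀ x : Fin d → ℝ, 0 ≤ x → |u x - v x| ≤ Θ) := by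
  have hR : IsContinuousMonotonePreference R :=
    ⟨hcomp, htrans, fun x hx => (hcont x hx).1, fun x hx => (hcont x hx).2, hmono,
      fun x y hx hxy => (hmono' x y hx hxy).2⟩
  obtain ⟨u, hu⟩ := hR.exists_isCertaintyEquiv
  have hsum' : ∀ N x y, 0 ≤ x → 0 ≤ y →
      ∑ i ∈ Finset.range N, (1 / 2 : ℝ) ^ i * φ ((2 : ℝ) ^ i • x) ((2 : ℝ) ^ i • y) ≤ Θ :=
    fun N x y hx hy => sum_range_le_of_sum_range_succ_le
      (fun i => mul_nonneg (by positivity) (hφ _ _)) (fun n hn => hsum n hn x y hx hy) N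
  obtain ⟨v, hv, huv⟩ := (hu.isMidpointApprox hR hφ hindep).exists_isLinearMap_abs_sub_le hφ hsum'
    fun x hx => ⟨(hu x hx).1, hu.le_norm hR hx⟩
  exact ⟨u, v, fun x y hx hy => hu.rel_iff hR hx hy, fun c hc => hu.apply_const hR hc, hv, huv⟩

/-- Theorem `thm:AA`, part 1: a continuous, monotone preference on
`ℝ^d₊` satisfying φ-approximate independence, with the weighted sums
`∑_{i=0}^n 2^{-i} φ(2^i x, 2^i y)` bounded by `Θ`, admits a normalized representation
`u` and a linear `v` with `|u - v| ≤ Θ` on `ℝ^d₊`. -/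
theorem stmt_6 (d : ℕ) (R : (Fin d → ℝ) → (Fin d → ℝ) → Prop)
    (hcomp : ∀ x y : Fin d → ℝ, 0 ≤ x → 0 ≤ y → R x y ∨ R y x)
    (htrans : ∀ x y z : Fin d → ℝ, 0 ≤ x → 0 ≤ y → 0 ≤ z → R x y → R y z → R x z)
    (hcont : ∀ x : Fin d → ℝ, 0 ≤ x →
      IsClosed {z : Fin d → ℝ | 0 ≤ z ∧ R z x} ∧ IsClosed {z : Fin d → ℝ | 0 ≤ z ∧ R x z})
    (hmono : ∀ x y : Fin d → ℝ, 0 ≤ x → x ≤ y → R y x)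
    (hmono' : ∀ x y : Fin d → ℝ, 0 ≤ x → (∀ i, x i < y i) → R y x ∧ ¬ R x y)
    (φ : (Fin d → ℝ) → (Fin d → ℝ) → ℝ) (hφ : ∀ x y, 0 ≤ φ x y)
    (Θ : ℝ) (hΘ : 0 ≤ Θ)
    (hindep : ∀ x y : Fin d → ℝ, 0 ≤ x → 0 ≤ y →
      ∀ cbx cux cby cuy : ℝ, 0 ≤ cbx → 0 ≤ cux → 0 ≤ cby → 0 ≤ cuy →
      R (fun _ => cbx) x → R x (fun _ => cux) →
      R (fun _ => cby) y → R y (fun _ => cuy) →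
      R (fun _ => cbx / 2 + cby / 2 + φ x y) ((1 / 2 : ℝ) • x + (1 / 2 : ℝ) • y) ∧
      R ((1 / 2 : ℝ) • x + (1 / 2 : ℝ) • y) (fun _ => cux / 2 + cuy / 2 - φ x y))
    (hsum : ∀ n : ℕ, 1 ≤ n → ∀ x y : Fin d → ℝ, 0 ≤ x → 0 ≤ y →
      ∑ i ∈ Finset.range (n + 1), (1 / 2 : ℝ) ^ i * φ ((2 : ℝ) ^ i • x) ((2 : ℝ) ^ i • y) ≤ Θ) :
    ∃ u v : (Fin d → ℝ) → ℝ,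
      (∀ x y : Fin d → ℝ, 0 ≤ x → 0 ≤ y → (R x y ↔ u y ≤ u x)) ∧
      (∀ c : ℝ, 0 ≤ c → u (fun _ => c) = c) ∧
      IsLinearMap ℝ v ∧
      (∀ x : Fin d → ℝ, 0 ≤ x → |u x - v x| ≤ Θ) :=
  stmt_6_general d R hcomp htrans hcont hmono hmono' φ hφ Θ hindep hsum
end

section
/- Let ≽ be a preference on ℝ^d_+ that is continuous and monotone, let ε > 0, and let φ : ℝ^d_+ × ℝ^d_+ → ℝ_+ be such that ≽ satisfies φ-approximate independence and φ(x,y) ≤ ε for all x, y ∈ ℝ^d_+. Then there exist a function u : ℝ^d_+ → ℝ and a linear function v : ℝ^d → ℝ such that u is a normalized representation of ≽ and sup_{x ∈ ℝ^d_+} |u(x) − v(x)| ≤ 2ε. -/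
/-- Corollary to Theorem `thm:AA`: if the violations of independence are
uniformly bounded, `φ(x,y) ≤ ε`, then there is a normalized representation `u` of `≽`
and a linear `v` with `|u - v| ≤ 2ε` on `ℝ^d₊`. -/
theorem stmt_8 (d : ℕ) (ε : ℝ) (hε : 0 < ε)
    (R : (Fin d → ℝ) → (Fin d → ℝ) → Prop)
    (hcomp : ∀ x y : Fin d → ℝ, 0 ≤ x → 0 ≤ y → R x y ∨ R y x)
    (htrans : ∀ x y z : Fin d → ℝ, 0 ≤ x → 0 ≤ y → 0 ≤ z → R x y → R y z → R x z)
    (hcont : ∀ x : Fin d → ℝ, 0 ≤ x →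
      IsClosed {z : Fin d → ℝ | 0 ≤ z ∧ R z x} ∧ IsClosed {z : Fin d → ℝ | 0 ≤ z ∧ R x z})
    (hmono : ∀ x y : Fin d → ℝ, 0 ≤ x → x ≤ y → R y x)
    (hmono' : ∀ x y : Fin d → ℝ, 0 ≤ x → (∀ i, x i < y i) → R y x ∧ ¬ R x y)
    (φ : (Fin d → ℝ) → (Fin d → ℝ) → ℝ) (hφ : ∀ x y, 0 ≤ φ x y)
    (hbd : ∀ x y : Fin d → ℝ, φ x y ≤ ε)
    (hindep : ∀ x y : Fin d → ℝ, 0 ≤ x → 0 ≤ y →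
      ∀ cbx cux cby cuy : ℝ, 0 ≤ cbx → 0 ≤ cux → 0 ≤ cby → 0 ≤ cuy →
      R (fun _ => cbx) x → R x (fun _ => cux) →
      R (fun _ => cby) y → R y (fun _ => cuy) →
      R (fun _ => cbx / 2 + cby / 2 + φ x y) ((1 / 2 : ℝ) • x + (1 / 2 : ℝ) • y) ∧
      R ((1 / 2 : ℝ) • x + (1 / 2 : ℝ) • y) (fun _ => cux / 2 + cuy / 2 - φ x y)) :
    ∃ u v : (Fin d → ℝ) → ℝ,
      (∀ x y : Fin d → ℝ, 0 ≤ x → 0 ≤ y → (R x y ↔ u y ≤ u x)) ∧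
      (∀ c : ℝ, 0 ≤ c → u (fun _ => c) = c) ∧
      IsLinearMap ℝ v ∧
      (∀ x : Fin d → ℝ, 0 ≤ x → |u x - v x| ≤ 2 * ε) := by
  classical
  rcases Nat.eq_zero_or_pos d with hd | hd
  · subst hd
    exfalso
    have h := hmono' 0 0 le_rfl (fun i => i.elim0)
    exact h.2 h.1
  haveI : Nonempty (Fin d) := ⟨⟨0, hd⟩⟩
  set cst : ℝ → (Fin d → ℝ) := fun c _ => c with hcst
  have cst_nonneg : ∀ {c : ℝ}, 0 ≤ c → 0 ≤ cst c := fun hc i => hc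
  have cst_le : ∀ {a b : ℝ}, a ≤ b → cst a ≤ cst b := fun h i => h
  have hlt : ∀ a b : ℝ, 0 ≤ a → a < b → ¬ R (cst a) (cst b) :=
    fun a b ha hab => (hmono' (cst a) (cst b) (cst_nonneg ha) (fun i => hab)).2
  -- certainty equivalents exist
  have ce : ∀ x : Fin d → ℝ, 0 ≤ x → ∃ c, 0 ≤ c ∧ R x (cst c) ∧ R (cst c) x := by
    intro x hx
    have hcstcont : Continuous cst := continuous_pi fun _ => continuous_id
    set S := {c : ℝ | 0 ≤ c ∧ R (cst c) x} with hSdef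
    set T := {c : ℝ | 0 ≤ c ∧ R x (cst c)} with hTdef
    have hS : IsClosed S := by
      have hEq : S = cst ⁻¹' {z | 0 ≤ z ∧ R z x} := by
        ext c
        simp only [hSdef, Set.mem_setOf_eq, Set.mem_preimage]
        constructor
        · rintro ⟨h1, h2⟩; exact ⟨cst_nonneg h1, h2⟩
        · rintro ⟨h1, h2⟩; exact ⟨h1 (Classical.arbitrary (Fin d)), h2⟩
      rw [hEq]; exact ((hcont x hx).1).preimage hcstcont
    have hT : IsClosed T := by
      have hEq : T = cst ⁻¹' {z | 0 ≤ z ∧ R x z} := by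
        ext c
        simp only [hTdef, Set.mem_setOf_eq, Set.mem_preimage]
        constructor
        · rintro ⟨h1, h2⟩; exact ⟨cst_nonneg h1, h2⟩
        · rintro ⟨h1, h2⟩; exact ⟨h1 (Classical.arbitrary (Fin d)), h2⟩
      rw [hEq]; exact ((hcont x hx).2).preimage hcstcont
    have h0T : (0:ℝ) ∈ T := ⟨le_rfl, hmono (cst 0) x (cst_nonneg le_rfl) (fun i => hx i)⟩
    have hM0 : (0:ℝ) ≤ ‖x‖ := norm_nonneg x
    have hxM : x ≤ cst ‖x‖ := fun i =>
      le_trans (le_abs_self _) ((Real.norm_eq_abs (x i)) ▸ norm_le_pi_norm x i)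
    have hMS : ‖x‖ ∈ S := ⟨hM0, hmono x (cst ‖x‖) hx hxM⟩
    have hcover : Set.Ici (0:ℝ) ⊆ S ∪ T := by
      intro c hc
      rcases hcomp (cst c) x (cst_nonneg hc) hx with h | h
      · exact Or.inl ⟨hc, h⟩
      · exact Or.inr ⟨hc, h⟩
    have hne := isPreconnected_closed_iff.mp isPreconnected_Ici S T hS hT hcover
      ⟨‖x‖, Set.mem_Ici.mpr hM0, hMS⟩ ⟨0, Set.mem_Ici.mpr le_rfl, h0T⟩
    obtain ⟨c, -, ⟨hc0, hcx⟩, ⟨-, hxc⟩⟩ := hne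
    exact ⟨c, hc0, hxc, hcx⟩
  choose ce_c ce_h0 ce_h1 ce_h2 using ce
  set u : (Fin d → ℝ) → ℝ := fun x => if h : 0 ≤ x then ce_c x h else 0 with hudef
  have hu0 : ∀ {x : Fin d → ℝ}, 0 ≤ x → 0 ≤ u x := by
    intro x hx; rw [hudef]; simp only [dif_pos hx]; exact ce_h0 x hx
  have huR1 : ∀ {x : Fin d → ℝ}, 0 ≤ x → R x (cst (u x)) := by
    intro x hx; rw [hudef]; simp only [dif_pos hx]; exact ce_h1 x hx
  have huR2 : ∀ {x : Fin d → ℝ}, 0 ≤ x → R (cst (u x)) x := by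
    intro x hx; rw [hudef]; simp only [dif_pos hx]; exact ce_h2 x hx
  -- representation
  have hrep : ∀ x y : Fin d → ℝ, 0 ≤ x → 0 ≤ y → (R x y ↔ u y ≤ u x) := by
    intro x y hx hy
    constructor
    · intro hxy
      by_contra hcon
      push_neg at hcon
      have h1 : R (cst (u x)) y :=
        htrans (cst (u x)) x y (cst_nonneg (hu0 hx)) hx hy (huR2 hx) hxy
      have h2 : R (cst (u x)) (cst (u y)) :=
        htrans (cst (u x)) y (cst (u y)) (cst_nonneg (hu0 hx)) hy
          (cst_nonneg (hu0 hy)) h1 (huR1 hy)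
      exact hlt _ _ (hu0 hx) hcon h2
    · intro hle
      have h1 : R (cst (u x)) (cst (u y)) :=
        hmono (cst (u y)) (cst (u x)) (cst_nonneg (hu0 hy)) (cst_le hle)
      have h2 : R x (cst (u y)) :=
        htrans x (cst (u x)) (cst (u y)) hx (cst_nonneg (hu0 hx))
          (cst_nonneg (hu0 hy)) (huR1 hx) h1
      exact htrans x (cst (u y)) y hx (cst_nonneg (hu0 hy)) hy h2 (huR2 hy)
  -- normalization
  have hnorm : ∀ c : ℝ, 0 ≤ c → u (cst c) = c := by
    intro c hc
    rcases lt_trichotomy (u (cst c)) c with h | h | h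
    · exact absurd (huR2 (cst_nonneg hc)) (hlt _ _ (hu0 (cst_nonneg hc)) h)
    · exact h
    · exact absurd (huR1 (cst_nonneg hc)) (hlt _ _ hc h)
  have humono : ∀ x y : Fin d → ℝ, 0 ≤ x → x ≤ y → u x ≤ u y := fun x y hx hxy =>
    (hrep y x (hx.trans hxy) hx).mp (hmono x y hx hxy)
  have hcst0 : cst 0 = 0 := rfl
  have hu_zero : u 0 = 0 := by
    have := hnorm 0 le_rfl
    rwa [hcst0] at this
  -- approximate midpoint property
  have hmid : ∀ x y : Fin d → ℝ, 0 ≤ x → 0 ≤ y →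
      |u ((1/2:ℝ) • x + (1/2:ℝ) • y) - (u x / 2 + u y / 2)| ≤ ε := by
    intro x y hx hy
    obtain ⟨h1, h2⟩ := hindep x y hx hy (u x) (u x) (u y) (u y)
      (hu0 hx) (hu0 hx) (hu0 hy) (hu0 hy) (huR2 hx) (huR1 hx) (huR2 hy) (huR1 hy)
    set m := (1/2:ℝ) • x + (1/2:ℝ) • y with hm
    have hm0 : 0 ≤ m := by
      intro i
      have ha := hx i; have hb := hy i
      simp only [Pi.zero_apply] at ha hb
      simp only [hm, Pi.add_apply, Pi.smul_apply, smul_eq_mul, Pi.zero_apply]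
      linarith
    have hφxy := hφ x y
    have hbdxy := hbd x y
    have hux := hu0 hx
    have huy := hu0 hy
    have k1 : u m ≤ u x / 2 + u y / 2 + φ x y := by
      have hk : (0:ℝ) ≤ u x / 2 + u y / 2 + φ x y := by linarith
      have hh := (hrep (cst (u x / 2 + u y / 2 + φ x y)) m (cst_nonneg hk) hm0).mp h1
      rwa [hnorm _ hk] at hh
    have k2 : u x / 2 + u y / 2 - ε ≤ u m := by
      by_cases hk : 0 ≤ u x / 2 + u y / 2 - φ x y
      · have hh := (hrep m (cst (u x / 2 + u y / 2 - φ x y)) hm0 (cst_nonneg hk)).mp h2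
        rw [hnorm _ hk] at hh
        linarith
      · have := hu0 hm0
        push_neg at hk
        linarith
    rw [abs_le]
    constructor <;> linarith
  -- scaling helpers
  have hsm : ∀ (t : ℝ) (x : Fin d → ℝ), 0 ≤ t → 0 ≤ x → 0 ≤ t • x := by
    intro t x ht hx i
    have := hx i
    simp only [Pi.zero_apply] at this
    simp only [Pi.smul_apply, smul_eq_mul, Pi.zero_apply]
    exact mul_nonneg ht this
  have hhalf : ∀ z : Fin d → ℝ, 0 ≤ z → |u ((1/2:ℝ) • z) - u z / 2| ≤ ε := by
    intro z hz
    have h := hmid z 0 hz le_rfl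
    simpa [hu_zero] using h
  -- the iterated doubling sequence
  set f : ℕ → (Fin d → ℝ) → ℝ := fun n x => u ((2:ℝ)^n • x) / 2^n with hfdef
  have hstep : ∀ (x : Fin d → ℝ), 0 ≤ x → ∀ n : ℕ,
      dist (f n x) (f (n+1) x) ≤ ε * (1/2)^n := by
    intro x hx n
    have h2n : (0:ℝ) < 2^n := by positivity
    have hz : 0 ≤ (2:ℝ)^(n+1) • x := hsm _ _ (by positivity) hx
    have h := hhalf ((2:ℝ)^(n+1) • x) hz
    have heq : (1/2:ℝ) • ((2:ℝ)^(n+1) • x) = (2:ℝ)^n • x := by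
      rw [smul_smul]
      congr 1
      rw [pow_succ]
      ring
    rw [heq] at h
    have hdiff : f n x - f (n+1) x
        = (u ((2:ℝ)^n • x) - u ((2:ℝ)^(n+1) • x) / 2) / 2^n := by
      simp only [hfdef]
      rw [pow_succ]
      field_simp
    rw [Real.dist_eq, hdiff, abs_div, abs_of_pos h2n, div_le_iff₀ h2n]
    calc |u ((2:ℝ)^n • x) - u ((2:ℝ)^(n+1) • x) / 2| ≤ ε := h
      _ = ε * (1/2)^n * 2^n := by
        rw [mul_assoc, ← mul_pow]
        norm_num
  have hcauchy : ∀ x : Fin d → ℝ, 0 ≤ x →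
      ∃ L, Filter.Tendsto (fun n => f n x) Filter.atTop (nhds L) := by
    intro x hx
    exact cauchySeq_tendsto_of_complete
      (cauchySeq_of_le_geometric (1/2) ε (by norm_num) (hstep x hx))
  choose A' hA' using hcauchy
  set A : (Fin d → ℝ) → ℝ := fun x => if h : 0 ≤ x then A' x h else 0 with hAdef
  have hAt : ∀ {x : Fin d → ℝ}, 0 ≤ x →
      Filter.Tendsto (fun n => f n x) Filter.atTop (nhds (A x)) := by
    intro x hx
    have : A x = A' x hx := by rw [hAdef]; simp only [dif_pos hx]
    rw [this]
    exact hA' x hx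
  have hAbound : ∀ x : Fin d → ℝ, 0 ≤ x → |u x - A x| ≤ 2 * ε := by
    intro x hx
    have h := dist_le_of_le_geometric_of_tendsto₀ (1/2) ε (by norm_num)
      (hstep x hx) (hAt hx)
    have hf0 : f 0 x = u x := by simp [hfdef]
    rw [Real.dist_eq, hf0] at h
    have : ε / (1 - 1/2 : ℝ) = 2 * ε := by norm_num; ring
    linarith [h, this.le, this.ge]
  -- exact midpoint property for A
  have hAmid : ∀ x y : Fin d → ℝ, 0 ≤ x → 0 ≤ y →
      A ((1/2:ℝ) • x + (1/2:ℝ) • y) = A x / 2 + A y / 2 := by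
    intro x y hx hy
    set m := (1/2:ℝ) • x + (1/2:ℝ) • y with hm
    have hm0 : 0 ≤ m := add_nonneg (hsm _ _ (by norm_num) hx) (hsm _ _ (by norm_num) hy)
    have key : ∀ n : ℕ, |f n m - (f n x / 2 + f n y / 2)| ≤ ε * (1/2)^n := by
      intro n
      have h2n : (0:ℝ) < 2^n := by positivity
      have hxx := hsm ((2:ℝ)^n) x (by positivity) hx
      have hyy := hsm ((2:ℝ)^n) y (by positivity) hy
      have h := hmid ((2:ℝ)^n • x) ((2:ℝ)^n • y) hxx hyy
      have heq : (1/2:ℝ) • ((2:ℝ)^n • x) + (1/2:ℝ) • ((2:ℝ)^n • y) = (2:ℝ)^n • m := by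
        rw [hm, smul_add, smul_smul, smul_smul, smul_smul, smul_smul]
        ring_nf
      rw [heq] at h
      have hdiff : f n m - (f n x / 2 + f n y / 2)
          = (u ((2:ℝ)^n • m) - (u ((2:ℝ)^n • x) / 2 + u ((2:ℝ)^n • y) / 2)) / 2^n := by
        simp only [hfdef]
        field_simp
      rw [hdiff, abs_div, abs_of_pos h2n, div_le_iff₀ h2n]
      calc |u ((2:ℝ)^n • m) - (u ((2:ℝ)^n • x) / 2 + u ((2:ℝ)^n • y) / 2)| ≤ ε := h
        _ = ε * (1/2)^n * 2^n := by
          rw [mul_assoc, ← mul_pow]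
          norm_num
    have t1 : Filter.Tendsto (fun n => f n m - (f n x / 2 + f n y / 2))
        Filter.atTop (nhds (A m - (A x / 2 + A y / 2))) :=
      (hAt hm0).sub (((hAt hx).div_const 2).add ((hAt hy).div_const 2))
    have t2 : Filter.Tendsto (fun n : ℕ => ε * (1/2:ℝ)^n) Filter.atTop (nhds 0) := by
      have hp : Filter.Tendsto (fun n : ℕ => (1/2:ℝ)^n) Filter.atTop (nhds 0) :=
        tendsto_pow_atTop_nhds_zero_of_lt_one (by norm_num) (by norm_num)
      have := hp.const_mul ε
      simpa using this
    have habs : |A m - (A x / 2 + A y / 2)| ≤ 0 :=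
      le_of_tendsto_of_tendsto' t1.abs t2 key
    have hzero : A m - (A x / 2 + A y / 2) = 0 :=
      abs_eq_zero.mp (le_antisymm habs (abs_nonneg _))
    linarith
  have hA0 : A 0 = 0 := by
    have h0 : ∀ n : ℕ, f n (0 : Fin d → ℝ) = 0 := by
      intro n; simp [hfdef, hu_zero]
    have ht : Filter.Tendsto (fun n => f n (0 : Fin d → ℝ)) Filter.atTop (nhds 0) := by
      simp only [h0]; exact tendsto_const_nhds
    exact tendsto_nhds_unique (hAt le_rfl) ht
  have hAhalf : ∀ x : Fin d → ℝ, 0 ≤ x → A ((1/2:ℝ) • x) = A x / 2 := by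
    intro x hx
    have h := hAmid x 0 hx le_rfl
    simpa [hA0] using h
  have hAadd : ∀ x y : Fin d → ℝ, 0 ≤ x → 0 ≤ y → A (x + y) = A x + A y := by
    intro x y hx hy
    have hxy : 0 ≤ x + y := add_nonneg hx hy
    have h2 := hAhalf (x + y) hxy
    rw [smul_add, hAmid x y hx hy] at h2
    linarith
  have hAmono : ∀ x y : Fin d → ℝ, 0 ≤ x → x ≤ y → A x ≤ A y := by
    intro x y hx hxy
    refine le_of_tendsto_of_tendsto' (hAt hx) (hAt (hx.trans hxy)) ?_
    intro n
    have hle : (2:ℝ)^n • x ≤ (2:ℝ)^n • y := by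
      intro i
      simp only [Pi.smul_apply, smul_eq_mul]
      exact mul_le_mul_of_nonneg_left (hxy i) (by positivity)
    have := humono _ _ (hsm _ _ (by positivity) hx) hle
    simp only [hfdef]
    gcongr
  have hAnn : ∀ x : Fin d → ℝ, 0 ≤ x → 0 ≤ A x := fun x hx =>
    hA0 ▸ hAmono 0 x le_rfl hx
  -- natural number homogeneity
  have hAnat : ∀ (n : ℕ) (x : Fin d → ℝ), 0 ≤ x → A ((n:ℝ) • x) = n * A x := by
    intro n x hx
    induction n with
    | zero => simp [hA0]
    | succ k ih =>
      have heq : ((k+1:ℕ):ℝ) • x = (k:ℝ) • x + x := by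
        push_cast
        rw [add_smul, one_smul]
      rw [heq, hAadd _ _ (hsm _ _ (by positivity) hx) hx, ih]
      push_cast
      ring
  -- rational homogeneity
  have hArat : ∀ (q : ℚ), 0 ≤ q → ∀ x : Fin d → ℝ, 0 ≤ x →
      A ((q:ℝ) • x) = (q:ℝ) * A x := by
    intro q hq x hx
    have hden : (0:ℝ) < (q.den:ℝ) := by exact_mod_cast q.pos
    have hq' : (q:ℝ) = (q.num:ℝ) / (q.den:ℝ) := by rw [Rat.cast_def]
    have hqR : (0:ℝ) ≤ (q:ℝ) := by exact_mod_cast hq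
    have hqx : 0 ≤ (q:ℝ) • x := hsm _ _ hqR hx
    have hnum0 : (0:ℤ) ≤ q.num := Rat.num_nonneg.mpr hq
    have hnum : ((q.num.toNat : ℕ):ℝ) = (q.num:ℝ) := by exact_mod_cast Int.toNat_of_nonneg hnum0
    have key : ((q.den : ℕ):ℝ) • ((q:ℝ) • x) = ((q.num.toNat : ℕ):ℝ) • x := by
      rw [smul_smul, hnum]
      congr 1
      rw [hq']
      field_simp
    have e1 := hAnat q.den ((q:ℝ) • x) hqx
    rw [key, hAnat q.num.toNat x hx, hnum] at e1
    -- e1 : (q.num:ℝ) * A x = (q.den:ℝ) * A ((q:ℝ) • x)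
    have e2 : A ((q:ℝ) • x) = (q.num:ℝ) / (q.den:ℝ) * A x := by
      rw [div_mul_eq_mul_div, eq_div_iff (ne_of_gt hden)]
      linarith [e1]
    rw [e2, hq']
  -- real homogeneity via monotonicity
  have hAhom : ∀ (t : ℝ), 0 ≤ t → ∀ x : Fin d → ℝ, 0 ≤ x → A (t • x) = t * A x := by
    intro t ht x hx
    have htx : 0 ≤ t • x := hsm _ _ ht hx
    have hAx : 0 ≤ A x := hAnn x hx
    have hAtx : 0 ≤ A (t • x) := hAnn _ htx
    have hub : ∀ q : ℚ, t < (q:ℝ) → A (t • x) ≤ (q:ℝ) * A x := by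
      intro q hq
      have hq0 : (0:ℚ) ≤ q := by exact_mod_cast ht.trans hq.le
      have hle : t • x ≤ (q:ℝ) • x := by
        intro i
        have hxi := hx i
        simp only [Pi.zero_apply] at hxi
        simp only [Pi.smul_apply, smul_eq_mul]
        exact mul_le_mul_of_nonneg_right hq.le hxi
      calc A (t • x) ≤ A ((q:ℝ) • x) := hAmono _ _ htx hle
        _ = (q:ℝ) * A x := hArat q hq0 x hx
    have hlb : ∀ q : ℚ, 0 ≤ (q:ℝ) → (q:ℝ) < t → (q:ℝ) * A x ≤ A (t • x) := by
      intro q hq0 hq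
      have hq0' : (0:ℚ) ≤ q := by exact_mod_cast hq0
      have hle : (q:ℝ) • x ≤ t • x := by
        intro i
        have hxi := hx i
        simp only [Pi.zero_apply] at hxi
        simp only [Pi.smul_apply, smul_eq_mul]
        exact mul_le_mul_of_nonneg_right hq.le hxi
      calc (q:ℝ) * A x = A ((q:ℝ) • x) := (hArat q hq0' x hx).symm
        _ ≤ A (t • x) := hAmono _ _ (hsm _ _ hq0 hx) hle
    have hup : A (t • x) ≤ t * A x := by
      by_contra hcon
      push_neg at hcon
      rcases eq_or_lt_of_le hAx with h0 | hpos
      · obtain ⟨q, hq1⟩ := exists_rat_gt t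
        have h3 := hub q hq1
        rw [← h0] at hcon h3
        simp only [mul_zero] at hcon h3
        linarith
      · have h1 : t < A (t • x) / A x := (lt_div_iff₀ hpos).mpr hcon
        obtain ⟨q, hq1, hq2⟩ := exists_rat_btwn h1
        have h3 := hub q hq1
        have h4 : (q:ℝ) * A x < A (t • x) := (lt_div_iff₀ hpos).mp hq2
        linarith
    have hdn : t * A x ≤ A (t • x) := by
      by_contra hcon
      push_neg at hcon
      have hpos : 0 < A x := by
        rcases eq_or_lt_of_le hAx with h0 | h
        · exfalso; rw [← h0] at hcon; simp only [mul_zero] at hcon; linarith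
        · exact h
      have h1 : A (t • x) / A x < t := (div_lt_iff₀ hpos).mpr (by linarith)
      obtain ⟨q, hq1, hq2⟩ := exists_rat_btwn h1
      have hq0 : 0 ≤ (q:ℝ) := le_trans (div_nonneg hAtx hAx) hq1.le
      have h5 := hlb q hq0 hq2
      have h6 : A (t • x) < (q:ℝ) * A x := (div_lt_iff₀ hpos).mp hq1
      linarith
    linarith
  -- the linear map
  set e : Fin d → (Fin d → ℝ) := fun i j => if i = j then 1 else 0 with he
  have he0 : ∀ i, 0 ≤ e i := by
    intro i j
    simp only [he, Pi.zero_apply]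
    split <;> norm_num
  set v : (Fin d → ℝ) → ℝ := fun x => ∑ i, x i * A (e i) with hv
  have hvlin : IsLinearMap ℝ v := by
    constructor
    · intro a b
      simp only [hv, Pi.add_apply, add_mul, Finset.sum_add_distrib]
    · intro c a
      simp only [hv, Pi.smul_apply, smul_eq_mul, Finset.mul_sum, mul_assoc]
  have hAv : ∀ x : Fin d → ℝ, 0 ≤ x → A x = v x := by
    intro x hx
    have hsum : ∀ s : Finset (Fin d),
        A (∑ i ∈ s, x i • e i) = ∑ i ∈ s, x i * A (e i) := by
      intro s
      induction s using Finset.induction with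
      | empty => simp [hA0]
      | @insert a s ha ih =>
        rw [Finset.sum_insert ha, Finset.sum_insert ha]
        have hxa : (0:ℝ) ≤ x a := by have := hx a; simpa using this
        have h1 : 0 ≤ x a • e a := hsm _ _ hxa (he0 a)
        have h2 : 0 ≤ ∑ i ∈ s, x i • e i :=
          Finset.sum_nonneg fun i _ => hsm _ _ (by have := hx i; simpa using this) (he0 i)
        rw [hAadd _ _ h1 h2, hAhom _ hxa _ (he0 a), ih]
    have hxsum : x = ∑ i, x i • e i := pi_eq_sum_univ x
    rw [hv]
    calc A x = A (∑ i, x i • e i) := by rw [← hxsum]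
      _ = ∑ i, x i * A (e i) := hsum Finset.univ
  refine ⟨u, v, hrep, ?_, hvlin, ?_⟩
  · intro c hc
    exact hnorm c hc
  · intro x hx
    rw [← hAv x hx]
    exact hAbound x hx
end
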